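/- arXiv:1211.4845 — 6 statements merged into one kernel-verified Lean document; each statement's English description precedes it below -/
import Mathlib

section
/- Let σ₁, σ₂ ∈ ℝ. Suppose that for every z ∈ ℂ and every (s, τ) ∈ ℝ² we are given an invertible matrix M(z; s, τ) ∈ GL₄(ℂ) such that: (i) for each fixed z and τ the map s ↦ M(z; s, τ) is differentiable and ∂M(z; s, τ)/∂s = V(z; s, τ)·M(z; s, τ), where V(z; s, τ) = −2i·z·E + V₀(s, τ), E is the 4×4 matrix whose only nonzero entries are E₃₁ = σ₁ and E₄₂ = σ₂, and V₀(s, τ) is a 4×4 matrix independent of z; (ii) M(z; s, τ)⁻¹ = K⁻¹·M(z; s, −τ)ᵀ·K, where K is the 4×4 block matrix [[0, I₂], [−I₂, 0]]. Define p_j(z; s, τ) to be the j-th entry of the column vector M(z; s, τ)·(1,1,0,0)ᵀ, and for u ≠ v define K^tac(u, v; s, τ) = (2πi(u−v))⁻¹·(0,0,1,1)·M(v; s, τ)⁻¹·M(u; s, τ)·(1,1,0,0)ᵀ. Then for all u ≠ v and all s, τ: ∂K^tac(u, v; s, τ)/∂s = −(1/π)·(σ₁·p₁(u; s, τ)·p₁(v;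 s, −τ) + σ₂·p₂(u; s, τ)·p₂(v; s, −τ)). -/
open Matrix Complex Real

private lemma entry_deriv_mul {A B : ℝ → Matrix (Fin 4) (Fin 4) ℂ}
    {A' B' : Matrix (Fin 4) (Fin 4) ℂ} {s : ℝ}
    (hA : ∀ i j, HasDerivAt (fun t => A t i j) (A' i j) s)
    (hB : ∀ i j, HasDerivAt (fun t => B t i j) (B' i j) s) :
    ∀ i j, HasDerivAt (fun t => (A t * B t) i j) ((A' * B s + A s * B') i j) s := by
  intro i j
  simp only [Matrix.mul_apply, Matrix.add_apply, ← Finset.sum_add_distrib]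
  exact HasDerivAt.fun_sum fun k _ => (hA i k).mul (hB k j)

private lemma entry_deriv_const_mul {B : ℝ → Matrix (Fin 4) (Fin 4) ℂ}
    {B' : Matrix (Fin 4) (Fin 4) ℂ} {s : ℝ} (A : Matrix (Fin 4) (Fin 4) ℂ)
    (hB : ∀ i j, HasDerivAt (fun t => B t i j) (B' i j) s) :
    ∀ i j, HasDerivAt (fun t => (A * B t) i j) ((A * B') i j) s := by
  intro i j
  simp only [Matrix.mul_apply]
  exact HasDerivAt.fun_sum fun k _ => (hB k j).const_mul (A i k)

private lemma entry_deriv_mul_const {B : ℝ → Matrix (Fin 4) (Fin 4) ℂ}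
    {B' : Matrix (Fin 4) (Fin 4) ℂ} {s : ℝ} (C : Matrix (Fin 4) (Fin 4) ℂ)
    (hB : ∀ i j, HasDerivAt (fun t => B t i j) (B' i j) s) :
    ∀ i j, HasDerivAt (fun t => (B t * C) i j) ((B' * C) i j) s := by
  intro i j
  simp only [Matrix.mul_apply]
  exact HasDerivAt.fun_sum fun k _ => (hB i k).mul_const (C k j)

private lemma entry_deriv_dot {X : ℝ → Matrix (Fin 4) (Fin 4) ℂ}
    {X' : Matrix (Fin 4) (Fin 4) ℂ} {s : ℝ} (w e : Fin 4 → ℂ)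
    (hX : ∀ i j, HasDerivAt (fun t => X t i j) (X' i j) s) :
    HasDerivAt (fun t => w ⬝ᵥ (X t).mulVec e) (w ⬝ᵥ X'.mulVec e) s := by
  simp only [dotProduct, Matrix.mulVec]
  exact HasDerivAt.fun_sum fun i _ =>
    (HasDerivAt.fun_sum fun j _ => (hX i j).mul_const (e j)).const_mul (w i)

set_option maxHeartbeats 1000000 in
/-- **Rank-2 formula for the `s`-derivative of the tacnode kernel.**
Given a family of invertible `4 × 4` matrices `M(z; s, τ)` satisfying the Lax equation
`∂M/∂s = (-2izE + V₀(s,τ)) M` (with `E` having only nonzero entries `E₃₁ = σ₁`, `E₄₂ = σ₂`)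
and the symmetry `M(z;s,τ)⁻¹ = K⁻¹ M(z;s,-τ)ᵀ K`, the kernel
`K^tac(u,v;s,τ) = (2πi(u-v))⁻¹ (0,0,1,1) M(v)⁻¹ M(u) (1,1,0,0)ᵀ` satisfies
`∂K^tac/∂s = -(1/π)(σ₁ p₁(u;s,τ)p₁(v;s,-τ) + σ₂ p₂(u;s,τ)p₂(v;s,-τ))`. -/
theorem tacnode_kernel_s_derivative_rank_two
    (σ₁ σ₂ : ℝ)
    (M : ℂ → ℝ → ℝ → Matrix (Fin 4) (Fin 4) ℂ)
    (V₀ : ℝ → ℝ → Matrix (Fin 4) (Fin 4) ℂ)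
    (E K : Matrix (Fin 4) (Fin 4) ℂ)
    (hE : E = !![0, 0, 0, 0; 0, 0, 0, 0; (σ₁ : ℂ), 0, 0, 0; 0, (σ₂ : ℂ), 0, 0])
    (hK : K = !![0, 0, 1, 0; 0, 0, 0, 1; -1, 0, 0, 0; 0, -1, 0, 0])
    (hinv : ∀ z s τ, IsUnit (M z s τ))
    (hlax : ∀ z s τ, ∀ i j : Fin 4,
      HasDerivAt (fun s' => M z s' τ i j)
        (((((-2 : ℂ) * Complex.I * z) • E + V₀ s τ) * M z s τ) i j) s)
    (hsym : ∀ z s τ, (M z s τ)⁻¹ = K⁻¹ * (M z s (-τ))ᵀ * K)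
    (p : Fin 4 → ℂ → ℝ → ℝ → ℂ)
    (hp : ∀ j z s τ, p j z s τ = (M z s τ).mulVec ![1, 1, 0, 0] j)
    (Ktac : ℂ → ℂ → ℝ → ℝ → ℂ)
    (hKtac : ∀ u v s τ, Ktac u v s τ =
      (2 * (π : ℂ) * Complex.I * (u - v))⁻¹ *
        (![0, 0, 1, 1] ⬝ᵥ ((M v s τ)⁻¹ * M u s τ).mulVec ![1, 1, 0, 0])) :
    ∀ u v : ℂ, u ≠ v → ∀ s τ : ℝ,
      HasDerivAt (fun s' => Ktac u v s' τ)
        (-(1 / (π : ℂ)) * ((σ₁ : ℂ) * p 0 u s τ * p 0 v s (-τ)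
          + (σ₂ : ℂ) * p 1 u s τ * p 1 v s (-τ))) s := by
  intro u v huv s τ
  -- facts about K
  have hKK : K * K = -1 := by
    subst hK
    ext i j
    fin_cases i <;> fin_cases j <;>
      simp [Matrix.mul_apply, Fin.sum_univ_four, Matrix.one_apply, Matrix.vecHead,
        Matrix.vecTail]
  have hKinv : K⁻¹ = -K :=
    Matrix.inv_eq_right_inv (by rw [Matrix.mul_neg, hKK, neg_neg])
  have hKmul : K * K⁻¹ = 1 := by rw [hKinv, Matrix.mul_neg, hKK, neg_neg]
  -- the symmetry relation for V
  have hVsym : ∀ z : ℂ,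
      ((((-2 : ℂ) * Complex.I * z) • E + V₀ s (-τ))ᵀ * K)
        = -(K * ((((-2 : ℂ) * Complex.I * z) • E + V₀ s τ))) := by
    intro z
    set Vt := (((-2 : ℂ) * Complex.I * z) • E + V₀ s τ) with hVt
    set Vm := (((-2 : ℂ) * Complex.I * z) • E + V₀ s (-τ)) with hVm
    have hNinv : ∀ t : ℝ, M z t τ * (K⁻¹ * (M z t (-τ))ᵀ * K) = 1 := fun t => by
      rw [← hsym z t τ]
      exact Matrix.mul_nonsing_inv _ ((Matrix.isUnit_iff_isUnit_det _).mp (hinv z t τ))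
    have hPT : ∀ i j, HasDerivAt (fun t => (M z t (-τ))ᵀ i j)
        ((Vm * M z s (-τ))ᵀ i j) s := fun i j => hlax z s (-τ) j i
    have hC := entry_deriv_mul_const K (entry_deriv_const_mul K⁻¹ hPT)
    have hG := entry_deriv_mul (fun i j => hlax z s τ i j) hC
    have hzero : (Vt * M z s τ) * (K⁻¹ * (M z s (-τ))ᵀ * K)
        + M z s τ * (K⁻¹ * (Vm * M z s (-τ))ᵀ * K) = 0 := by
      ext i j
      have h2 : HasDerivAt (fun t => (M z t τ * (K⁻¹ * (M z t (-τ))ᵀ * K)) i j) 0 s := by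
        have he : (fun t => (M z t τ * (K⁻¹ * (M z t (-τ))ᵀ * K)) i j)
            = fun _ => (1 : Matrix (Fin 4) (Fin 4) ℂ) i j := by
          funext t; rw [hNinv t]
        rw [he]; exact hasDerivAt_const _ _
      have := (hG i j).unique h2
      simpa only [Matrix.add_apply, Matrix.zero_apply] using this
    have hNP : M z s τ * (K⁻¹ * (M z s (-τ))ᵀ * K) = 1 := hNinv s
    have hNKP : M z s τ * (K⁻¹ * (M z s (-τ))ᵀ) = K⁻¹ := by
      have h := congrArg (· * K⁻¹) hNP
      simpa [Matrix.mul_assoc, hKmul] using h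
    have e1 : (Vt * M z s τ) * (K⁻¹ * (M z s (-τ))ᵀ * K) = Vt := by
      rw [Matrix.mul_assoc, hNP, Matrix.mul_one]
    have e2 : M z s τ * (K⁻¹ * (Vm * M z s (-τ))ᵀ * K) = K⁻¹ * (Vmᵀ * K) := by
      rw [Matrix.transpose_mul]
      calc M z s τ * (K⁻¹ * ((M z s (-τ))ᵀ * Vmᵀ) * K)
          = (M z s τ * (K⁻¹ * (M z s (-τ))ᵀ)) * (Vmᵀ * K) := by
            simp only [Matrix.mul_assoc]
        _ = K⁻¹ * (Vmᵀ * K) := by rw [hNKP]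
    rw [e1, e2] at hzero
    have h3 := congrArg (fun X => K * X) hzero
    simp only [Matrix.mul_add, ← Matrix.mul_assoc, hKmul, Matrix.one_mul,
      Matrix.mul_zero] at h3
    -- h3 : K * Vt + Vmᵀ * K = 0
    exact eq_neg_of_add_eq_zero_left ((add_comm _ _).trans h3)
  -- rewrite the kernel using the symmetry
  have hfun : (fun s' => Ktac u v s' τ)
      = fun s' => (2 * (π : ℂ) * Complex.I * (u - v))⁻¹ *
          (![0, 0, 1, 1] ⬝ᵥ ((K⁻¹ * (M v s' (-τ))ᵀ * K * M u s' τ).mulVec ![1, 1, 0, 0])) := by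
    funext t; rw [hKtac u v t τ, hsym v t τ]
  set Vu := (((-2 : ℂ) * Complex.I * u) • E + V₀ s τ) with hVu
  set Vv := (((-2 : ℂ) * Complex.I * v) • E + V₀ s (-τ)) with hVv
  have hPT : ∀ i j, HasDerivAt (fun t => (M v t (-τ))ᵀ i j)
      ((Vv * M v s (-τ))ᵀ i j) s := fun i j => hlax v s (-τ) j i
  have hX := entry_deriv_mul
    (entry_deriv_mul_const K (entry_deriv_const_mul K⁻¹ hPT))
    (fun i j => hlax u s τ i j)
  have hD := HasDerivAt.const_mul ((2 * (π : ℂ) * Complex.I * (u - v))⁻¹)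
    (entry_deriv_dot ![0, 0, 1, 1] ![1, 1, 0, 0] hX)
  rw [hfun]
  convert hD using 1
  case e'_4 => rfl
  -- now prove the value identity
  have h2 : Vvᵀ * K + K * Vu = ((-2 : ℂ) * Complex.I * (u - v)) • (K * E) := by
    rw [hVv, hVsym v, neg_add_eq_sub, ← Matrix.mul_sub]
    have h4 : Vu - (((-2 : ℂ) * Complex.I * v) • E + V₀ s τ)
        = ((-2 : ℂ) * Complex.I * (u - v)) • E := by
      rw [hVu]; module
    rw [h4, Matrix.mul_smul]
  have key : (K⁻¹ * (Vv * M v s (-τ))ᵀ * K) * M u s τ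
      + (K⁻¹ * (M v s (-τ))ᵀ * K) * (Vu * M u s τ)
      = ((-2 : ℂ) * Complex.I * (u - v))
          • (K⁻¹ * ((M v s (-τ))ᵀ * ((K * E) * M u s τ))) := by
    calc (K⁻¹ * (Vv * M v s (-τ))ᵀ * K) * M u s τ
          + (K⁻¹ * (M v s (-τ))ᵀ * K) * (Vu * M u s τ)
        = K⁻¹ * ((M v s (-τ))ᵀ * ((Vvᵀ * K + K * Vu) * M u s τ)) := by
          simp only [Matrix.transpose_mul, Matrix.add_mul, Matrix.mul_add, Matrix.mul_assoc]
      _ = _ := by rw [h2]; simp only [Matrix.smul_mul, Matrix.mul_smul]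
  rw [key]
  have hKE : K * E = !![(σ₁ : ℂ), 0, 0, 0; 0, (σ₂ : ℂ), 0, 0; 0, 0, 0, 0; 0, 0, 0, 0] := by
    rw [hK, hE]
    ext i j
    fin_cases i <;> fin_cases j <;>
      simp [Matrix.mul_apply, Fin.sum_univ_four, Matrix.vecHead, Matrix.vecTail]
  have hKinv' : K⁻¹ = !![0, 0, -1, 0; 0, 0, 0, -1; (1 : ℂ), 0, 0, 0; 0, 1, 0, 0] := by
    rw [hKinv, hK]
    ext i j
    fin_cases i <;> fin_cases j <;> simp [Matrix.vecHead, Matrix.vecTail]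
  have hS : ![0, 0, 1, 1] ⬝ᵥ (K⁻¹ * ((M v s (-τ))ᵀ * ((K * E) * M u s τ))).mulVec ![1, 1, 0, 0]
      = (σ₁ : ℂ) * p 0 u s τ * p 0 v s (-τ) + (σ₂ : ℂ) * p 1 u s τ * p 1 v s (-τ) := by
    simp only [hp, hKinv', hKE, ← Matrix.mulVec_mulVec]
    simp [Matrix.mulVec, dotProduct, Fin.sum_univ_four, Matrix.transpose_apply,
      Matrix.vecHead, Matrix.vecTail]
    ring
  rw [Matrix.smul_mulVec, dotProduct_smul, smul_eq_mul, hS]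
  have hπ : (π : ℂ) ≠ 0 := Complex.ofReal_ne_zero.mpr Real.pi_ne_zero
  have huv' : u - v ≠ 0 := sub_ne_zero.mpr huv
  field_simp
end

section
/- With the notations of the context, for every z ∈ ℝ and τ ∈ ℝ the following two identities hold: 𝒜̃_{τ,z}(0) + ∫₀^∞ R_σ(x,0)·𝒜̃_{τ,z}(x) dx = b̃_{τ,z}(0) − λ^{−1/6}·∫₀^∞ Q_σ(x)·𝒜_{τ,z}(x) dx, and 𝒜_{τ,z}(0) + ∫₀^∞ R_σ(x,0)·𝒜_{τ,z}(x) dx = b_{τ,z}(0) − λ^{1/6}·∫₀^∞ Q_σ(x)·𝒜̃_{τ,z}(x) dx. -/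
open Real MeasureTheory Set

noncomputable section

/-- `C = (1 + λ^{-1/2})^{1/3}`. -/
def Cc (lam : ℝ) : ℝ := (1 + lam ^ (-(1 : ℝ) / 2)) ^ ((1 : ℝ) / 3)

/-- `Σ = λ^{-1/2} (1 + λ^{-1/2})^{-2/3} σ`. -/
def Sig (lam σ : ℝ) : ℝ := lam ^ (-(1 : ℝ) / 2) * (1 + lam ^ (-(1 : ℝ) / 2)) ^ (-(2 : ℝ) / 3) * σ

/-- `b_{τ,z}(x) = exp(-τ y + τ³/3) Ai(y)`, `y = z + C x + Σ + τ²`. -/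
def bb (Ai : ℝ → ℝ) (lam σ τ z x : ℝ) : ℝ :=
  Real.exp (-τ * (z + Cc lam * x + Sig lam σ + τ ^ 2) + τ ^ 3 / 3) *
    Ai (z + Cc lam * x + Sig lam σ + τ ^ 2)

/-- `b̃_{τ,z}(x) = exp(-√λ τ ỹ + λ τ³/3) Ai(λ^{1/6} ỹ)`, `ỹ = -z + C x + √λ (Σ + τ²)`. -/
def bt (Ai : ℝ → ℝ) (lam σ τ z x : ℝ) : ℝ :=
  Real.exp (-Real.sqrt lam * τ * (-z + Cc lam * x + Real.sqrt lam * (Sig lam σ + τ ^ 2))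
      + lam * τ ^ 3 / 3) *
    Ai (lam ^ ((1 : ℝ) / 6) * (-z + Cc lam * x + Real.sqrt lam * (Sig lam σ + τ ^ 2)))

/-- `𝒜_{τ,z}(x) = b_{τ,z}(x) - λ^{1/6} ∫₀^∞ Ai(x+y+σ) b̃_{τ,z}(y) dy`. -/
def AA (Ai : ℝ → ℝ) (lam σ τ z x : ℝ) : ℝ :=
  bb Ai lam σ τ z x - lam ^ ((1 : ℝ) / 6) * ∫ y in Ioi (0 : ℝ), Ai (x + y + σ) * bt Ai lam σ τ z y

/-- `𝒜̃_{τ,z}(x) = b̃_{τ,z}(x) - λ^{-1/6} ∫₀^∞ Ai(x+y+σ) b_{τ,z}(y) dy`. -/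
def AAt (Ai : ℝ → ℝ) (lam σ τ z x : ℝ) : ℝ :=
  bt Ai lam σ τ z x - lam ^ (-(1 : ℝ) / 6) * ∫ y in Ioi (0 : ℝ), Ai (x + y + σ) * bb Ai lam σ τ z y

/-- The shifted Airy kernel `K_{Ai,σ}(x,y) = ∫₀^∞ Ai(x+t+σ) Ai(y+t+σ) dt`. -/
def KAi (Ai : ℝ → ℝ) (σ x y : ℝ) : ℝ :=
  ∫ t in Ioi (0 : ℝ), Ai (x + t + σ) * Ai (y + t + σ)

/-- The Tracy–Widom function `Q_σ(x) = Ai(x+σ) + ∫₀^∞ R_σ(x,y) Ai(y+σ) dy`. -/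
def Qf (Ai : ℝ → ℝ) (R : ℝ → ℝ → ℝ) (σ x : ℝ) : ℝ :=
  Ai (x + σ) + ∫ y in Ioi (0 : ℝ), R x y * Ai (y + σ)

lemma expInt : Integrable (fun x : ℝ => Real.exp (-x)) (volume.restrict (Ioi (0:ℝ))) := by
  have h : IntegrableOn (fun x : ℝ => Real.exp (-x)) (Ioi 0) := by
    simpa using exp_neg_integrableOn_Ioi 0 one_pos
  exact h

lemma exp_neg_le_one {x : ℝ} (hx : 0 ≤ x) : Real.exp (-x) ≤ 1 := by
  rw [← Real.exp_zero]; exact Real.exp_le_exp.2 (by linarith)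

lemma abs_setIntegral_le {F : ℝ → ℝ} (hm : AEStronglyMeasurable F (volume.restrict (Ioi (0:ℝ))))
    {c : ℝ} (hb : ∀ y ∈ Ioi (0:ℝ), |F y| ≤ c * Real.exp (-y)) :
    |∫ y in Ioi (0:ℝ), F y| ≤ c := by
  have h1 : ‖∫ y in Ioi (0:ℝ), F y‖ ≤ ∫ y in Ioi (0:ℝ), c * Real.exp (-y) := by
    refine norm_integral_le_of_norm_le (expInt.const_mul c) ?_
    refine (ae_restrict_iff' measurableSet_Ioi).2 (ae_of_all _ ?_)
    intro y hy; rw [Real.norm_eq_abs]; exact hb y hy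
  rw [Real.norm_eq_abs] at h1
  calc |∫ y in Ioi (0:ℝ), F y| ≤ ∫ y in Ioi (0:ℝ), c * Real.exp (-y) := h1
    _ = c * ∫ y in Ioi (0:ℝ), Real.exp (-y) := integral_const_mul c _
    _ = c := by rw [integral_exp_neg_Ioi_zero, mul_one]

lemma integrableOn_of_exp_bound {f : ℝ → ℝ}
    (hm : AEStronglyMeasurable f (volume.restrict (Ioi (0:ℝ)))) {M : ℝ}
    (hb : ∀ x ∈ Ioi (0:ℝ), |f x| ≤ M * Real.exp (-x)) :
    IntegrableOn f (Ioi (0:ℝ)) := by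
  refine Integrable.mono' (expInt.const_mul M) hm ?_
  exact (ae_restrict_iff' measurableSet_Ioi).2 (ae_of_all _ hb)

lemma integrable_prod_of_exp_bound {F : ℝ × ℝ → ℝ}
    (hm : AEStronglyMeasurable F ((volume.restrict (Ioi (0:ℝ))).prod (volume.restrict (Ioi (0:ℝ)))))
    {M : ℝ} (hb : ∀ x ∈ Ioi (0:ℝ), ∀ y ∈ Ioi (0:ℝ),
      |F (x, y)| ≤ M * (Real.exp (-x) * Real.exp (-y))) :
    Integrable F ((volume.restrict (Ioi (0:ℝ))).prod (volume.restrict (Ioi (0:ℝ)))) := by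
  have hg : Integrable (fun p : ℝ × ℝ => M * (Real.exp (-p.1) * Real.exp (-p.2)))
      ((volume.restrict (Ioi (0:ℝ))).prod (volume.restrict (Ioi (0:ℝ)))) :=
    (expInt.mul_prod expInt).const_mul M
  refine Integrable.mono' hg hm ?_
  rw [Measure.prod_restrict]
  refine (ae_restrict_iff' (measurableSet_Ioi.prod measurableSet_Ioi)).2 (ae_of_all _ ?_)
  rintro ⟨x, y⟩ ⟨hx, hy⟩
  exact hb x hx y hy

lemma ai_exp_bound (Ai : ℝ → ℝ) (hAic : Continuous Ai)
    (hAidecay : ∀ a > (0 : ℝ), ∃ Ca > (0 : ℝ), ∀ x ≥ (0 : ℝ), |Ai x| ≤ Ca * Real.exp (-a * x))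
    (a m : ℝ) (ha : 0 < a) :
    ∃ M > (0:ℝ), ∀ t ≥ m, |Ai t| ≤ M * Real.exp (-a * t) := by
  obtain ⟨Ca, hCa, hC⟩ := hAidecay a ha
  have hcont : ContinuousOn (fun t => |Ai t| * Real.exp (a * t)) (Icc m 0) :=
    ((hAic.abs.mul (Real.continuous_exp.comp (continuous_const.mul continuous_id))).continuousOn)
  obtain ⟨B, hB⟩ := (isCompact_Icc (a := m) (b := 0)).exists_bound_of_continuousOn hcont
  refine ⟨max Ca (max B 1), lt_of_lt_of_le (lt_max_iff.2 (Or.inl hCa)) le_rfl, ?_⟩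
  intro t ht
  rcases le_or_gt 0 t with h0 | h0
  · calc |Ai t| ≤ Ca * Real.exp (-a * t) := hC t h0
      _ ≤ max Ca (max B 1) * Real.exp (-a * t) := by
          have := Real.exp_pos (-a * t); nlinarith [le_max_left Ca (max B 1)]
  · have htm : t ∈ Icc m 0 := ⟨ht, le_of_lt h0⟩
    have h3 : |Ai t| * Real.exp (a * t) ≤ B := by
      have h2 := hB t htm
      rwa [Real.norm_eq_abs,
        abs_of_nonneg (mul_nonneg (abs_nonneg _) (Real.exp_pos _).le)] at h2
    have h4 : |Ai t| ≤ B * Real.exp (-a * t) := by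
      have he := Real.exp_pos (a * t)
      have hh : Real.exp (-a * t) * Real.exp (a * t) = 1 := by
        rw [← Real.exp_add]; ring_nf; exact Real.exp_zero
      nlinarith [abs_nonneg (Ai t), Real.exp_pos (-a * t)]
    calc |Ai t| ≤ B * Real.exp (-a * t) := h4
      _ ≤ max Ca (max B 1) * Real.exp (-a * t) := by
          have := Real.exp_pos (-a * t)
          nlinarith [le_max_right Ca (max B 1), le_max_left B 1]

lemma drop_exp {A M x : ℝ} (h : |A| ≤ M * Real.exp (-x)) (hx : 0 ≤ x) (hM : 0 ≤ M) : |A| ≤ M :=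
  le_trans h (by
    calc M * Real.exp (-x) ≤ M * 1 := mul_le_mul_of_nonneg_left (exp_neg_le_one hx) hM
      _ = M := mul_one M)

lemma mul_bound {A B M N x : ℝ} (hA : |A| ≤ M * Real.exp (-x)) (hB : |B| ≤ N)
    (hM : 0 ≤ M) : |A * B| ≤ M * N * Real.exp (-x) := by
  rw [abs_mul]
  calc |A| * |B| ≤ (M * Real.exp (-x)) * N :=
      mul_le_mul hA hB (abs_nonneg _) (mul_nonneg hM (Real.exp_pos _).le)
    _ = M * N * Real.exp (-x) := by ring

lemma exp_mul_exp (c A B : ℝ) : Real.exp A * (c * Real.exp B) = c * Real.exp (A + B) := by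
  rw [Real.exp_add]; ring

lemma exp_split (c A B : ℝ) : c * Real.exp (A + B) = (c * Real.exp A) * Real.exp B := by
  rw [Real.exp_add]; ring

lemma master {Ai : ℝ → ℝ} (hAic : Continuous Ai) {σ : ℝ}
    {M₁ : ℝ} (hM₁0 : 0 ≤ M₁)
    (hM₁ : ∀ x ≥ (0:ℝ), ∀ y ≥ (0:ℝ),
      |Ai (x + y + σ)| ≤ M₁ * (Real.exp (-x) * Real.exp (-y)))
    {R : ℝ → ℝ → ℝ}
    (hRcont : ContinuousOn (fun q : ℝ × ℝ => R q.1 q.2) (Ici 0 ×ˢ Ici 0))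
    {C₀ : ℝ} (hC₀0 : 0 ≤ C₀)
    (hRbd : ∀ x y, 0 ≤ x → 0 ≤ y → |R x y| ≤ C₀ * Real.exp (-x - y))
    (hRres : ∀ x y, 0 ≤ x → 0 ≤ y →
      R x y = KAi Ai σ x y + ∫ t in Ioi (0 : ℝ), KAi Ai σ x t * R t y)
    (hRcomm : ∀ x y, 0 ≤ x → 0 ≤ y →
      (∫ t in Ioi (0 : ℝ), Ai (x + t + σ) * R t y)
        = ∫ t in Ioi (0 : ℝ), R x t * Ai (t + y + σ))
    {u v : ℝ → ℝ} (hu : Continuous u) (hv : Continuous v)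
    {Mu Mv : ℝ} (hMu0 : 0 ≤ Mu) (hMv0 : 0 ≤ Mv)
    (hMu : ∀ x ≥ (0:ℝ), |u x| ≤ Mu * Real.exp (-x))
    (hMv : ∀ x ≥ (0:ℝ), |v x| ≤ Mv * Real.exp (-x))
    (a b : ℝ) (hab : a * b = 1) :
    (v 0 - a * ∫ y in Ioi (0:ℝ), Ai (0 + y + σ) * u y)
      + (∫ x in Ioi (0:ℝ), R x 0 * (v x - a * ∫ y in Ioi (0:ℝ), Ai (x + y + σ) * u y))
    = v 0 - a * ∫ x in Ioi (0:ℝ), Qf Ai R σ x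
        * (u x - b * ∫ y in Ioi (0:ℝ), Ai (x + y + σ) * v y) := by
  have hQf : ∀ x : ℝ, Qf Ai R σ x = Ai (x + σ) + ∫ t in Ioi (0:ℝ), R x t * Ai (t + σ) :=
    fun x => rfl
  -- pointwise bounds
  have bAi1 : ∀ t ≥ (0:ℝ), |Ai (t + σ)| ≤ M₁ * Real.exp (-t) := by
    intro t ht; simpa using hM₁ t ht 0 le_rfl
  have bAi1i : ∀ t ≥ (0:ℝ), |Ai (t + σ)| ≤ M₁ := fun t ht => drop_exp (bAi1 t ht) ht hM₁0
  have bAi2i : ∀ x ≥ (0:ℝ), ∀ y ≥ (0:ℝ), |Ai (x + y + σ)| ≤ M₁ := by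
    intro x hx y hy
    have h := hM₁ x hx y hy
    have h1 : Real.exp (-x) * Real.exp (-y) ≤ 1 :=
      mul_le_one₀ (exp_neg_le_one hx) (Real.exp_pos _).le (exp_neg_le_one hy)
    have h2 : M₁ * (Real.exp (-x) * Real.exp (-y)) ≤ M₁ * 1 :=
      mul_le_mul_of_nonneg_left h1 hM₁0
    rw [mul_one] at h2
    exact le_trans h h2
  have bui : ∀ x ≥ (0:ℝ), |u x| ≤ Mu := fun x hx => drop_exp (hMu x hx) hx hMu0
  have bvi : ∀ x ≥ (0:ℝ), |v x| ≤ Mv := fun x hx => drop_exp (hMv x hx) hx hMv0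
  have br : ∀ x ≥ (0:ℝ), |R x 0| ≤ C₀ * Real.exp (-x) := by
    intro x hx; simpa using hRbd x 0 hx le_rfl
  have bri : ∀ x ≥ (0:ℝ), |R x 0| ≤ C₀ := fun x hx => drop_exp (br x hx) hx hC₀0
  have bR2 : ∀ x ≥ (0:ℝ), ∀ t ≥ (0:ℝ), |R x t| ≤ C₀ * (Real.exp (-x) * Real.exp (-t)) := by
    intro x hx t ht
    have h := hRbd x t hx ht
    rwa [show (-x - t : ℝ) = -x + -t by ring, Real.exp_add] at h
  -- measurability
  have mAi1 : AEStronglyMeasurable (fun t : ℝ => Ai (t + σ)) (volume.restrict (Ioi (0:ℝ))) :=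
    (hAic.comp (continuous_id.add continuous_const)).aestronglyMeasurable
  have mu : AEStronglyMeasurable u (volume.restrict (Ioi (0:ℝ))) := hu.aestronglyMeasurable
  have mv : AEStronglyMeasurable v (volume.restrict (Ioi (0:ℝ))) := hv.aestronglyMeasurable
  have mr : AEStronglyMeasurable (fun x : ℝ => R x 0) (volume.restrict (Ioi (0:ℝ))) := by
    have c1 : ContinuousOn (fun x : ℝ => R x 0) (Ici 0) :=
      hRcont.comp ((continuous_id.prodMk continuous_const).continuousOn)
        (fun x hx => Set.mk_mem_prod hx Set.self_mem_Ici)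
    exact (c1.mono Ioi_subset_Ici_self).aestronglyMeasurable measurableSet_Ioi
  have mR2 : AEStronglyMeasurable (fun p : ℝ × ℝ => R p.1 p.2)
      ((volume.restrict (Ioi (0:ℝ))).prod (volume.restrict (Ioi (0:ℝ)))) := by
    rw [Measure.prod_restrict]
    exact (hRcont.mono (prod_mono Ioi_subset_Ici_self Ioi_subset_Ici_self)).aestronglyMeasurable
      (measurableSet_Ioi.prod measurableSet_Ioi)
  have cpu : Continuous (fun p : ℝ × ℝ => Ai (p.1 + p.2 + σ) * u p.2) :=
    (hAic.comp ((continuous_fst.add continuous_snd).add continuous_const)).mul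
      (hu.comp continuous_snd)
  have cpv : Continuous (fun p : ℝ × ℝ => Ai (p.1 + p.2 + σ) * v p.2) :=
    (hAic.comp ((continuous_fst.add continuous_snd).add continuous_const)).mul
      (hv.comp continuous_snd)
  have mJu : AEStronglyMeasurable (fun x : ℝ => ∫ y in Ioi (0:ℝ), Ai (x + y + σ) * u y)
      (volume.restrict (Ioi (0:ℝ))) :=
    (cpu.aestronglyMeasurable
      (μ := (volume.restrict (Ioi (0:ℝ))).prod (volume.restrict (Ioi (0:ℝ))))).integral_prod_right'
  have mLv : AEStronglyMeasurable (fun x : ℝ => ∫ y in Ioi (0:ℝ), Ai (x + y + σ) * v y)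
      (volume.restrict (Ioi (0:ℝ))) :=
    (cpv.aestronglyMeasurable
      (μ := (volume.restrict (Ioi (0:ℝ))).prod (volume.restrict (Ioi (0:ℝ))))).integral_prod_right'
  have mW : AEStronglyMeasurable (fun x : ℝ => ∫ t in Ioi (0:ℝ), R x t * Ai (t + σ))
      (volume.restrict (Ioi (0:ℝ))) :=
    (mR2.mul
      ((hAic.comp (continuous_snd.add continuous_const)).aestronglyMeasurable)).integral_prod_right'
  have mQ : AEStronglyMeasurable (Qf Ai R σ) (volume.restrict (Ioi (0:ℝ))) := mAi1.add mW
  -- integral bounds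
  have bJu : ∀ x ≥ (0:ℝ), |∫ y in Ioi (0:ℝ), Ai (x + y + σ) * u y| ≤ M₁ * Mu * Real.exp (-x) := by
    intro x hx
    refine abs_setIntegral_le
      ((hAic.comp (by fun_prop : Continuous fun y : ℝ => x + y + σ)).mul hu).aestronglyMeasurable
      ?_
    intro y hy
    have hy0 : (0:ℝ) ≤ y := le_of_lt hy
    calc |Ai (x + y + σ) * u y| = |Ai (x + y + σ)| * |u y| := abs_mul _ _
      _ ≤ (M₁ * (Real.exp (-x) * Real.exp (-y))) * (Mu * Real.exp (-y)) :=
          mul_le_mul (hM₁ x hx y hy0) (hMu y hy0) (abs_nonneg _)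
            (mul_nonneg hM₁0 (by positivity))
      _ = (M₁ * Mu * Real.exp (-x) * Real.exp (-y)) * Real.exp (-y) := by ring
      _ ≤ (M₁ * Mu * Real.exp (-x) * Real.exp (-y)) * 1 :=
          mul_le_mul_of_nonneg_left (exp_neg_le_one hy0)
            (mul_nonneg (mul_nonneg (mul_nonneg hM₁0 hMu0) (Real.exp_pos _).le)
              (Real.exp_pos _).le)
      _ = (M₁ * Mu * Real.exp (-x)) * Real.exp (-y) := by ring
  have bLv : ∀ x ≥ (0:ℝ), |∫ y in Ioi (0:ℝ), Ai (x + y + σ) * v y| ≤ M₁ * Mv * Real.exp (-x) := by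
    intro x hx
    refine abs_setIntegral_le
      ((hAic.comp (by fun_prop : Continuous fun y : ℝ => x + y + σ)).mul hv).aestronglyMeasurable
      ?_
    intro y hy
    have hy0 : (0:ℝ) ≤ y := le_of_lt hy
    calc |Ai (x + y + σ) * v y| = |Ai (x + y + σ)| * |v y| := abs_mul _ _
      _ ≤ (M₁ * (Real.exp (-x) * Real.exp (-y))) * (Mv * Real.exp (-y)) :=
          mul_le_mul (hM₁ x hx y hy0) (hMv y hy0) (abs_nonneg _)
            (mul_nonneg hM₁0 (by positivity))
      _ = (M₁ * Mv * Real.exp (-x) * Real.exp (-y)) * Real.exp (-y) := by ring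
      _ ≤ (M₁ * Mv * Real.exp (-x) * Real.exp (-y)) * 1 :=
          mul_le_mul_of_nonneg_left (exp_neg_le_one hy0)
            (mul_nonneg (mul_nonneg (mul_nonneg hM₁0 hMv0) (Real.exp_pos _).le)
              (Real.exp_pos _).le)
      _ = (M₁ * Mv * Real.exp (-x)) * Real.exp (-y) := by ring
  have bJui : ∀ x ≥ (0:ℝ), |∫ y in Ioi (0:ℝ), Ai (x + y + σ) * u y| ≤ M₁ * Mu :=
    fun x hx => drop_exp (bJu x hx) hx (mul_nonneg hM₁0 hMu0)
  have bLvi : ∀ x ≥ (0:ℝ), |∫ y in Ioi (0:ℝ), Ai (x + y + σ) * v y| ≤ M₁ * Mv :=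
    fun x hx => drop_exp (bLv x hx) hx (mul_nonneg hM₁0 hMv0)
  have bW : ∀ x ≥ (0:ℝ), |∫ t in Ioi (0:ℝ), R x t * Ai (t + σ)| ≤ C₀ * M₁ * Real.exp (-x) := by
    intro x hx
    have c1 : ContinuousOn (fun t : ℝ => R x t) (Ici 0) :=
      hRcont.comp ((continuous_const.prodMk continuous_id).continuousOn)
        (fun t ht => Set.mk_mem_prod hx ht)
    refine abs_setIntegral_le
      (((c1.mono Ioi_subset_Ici_self).aestronglyMeasurable measurableSet_Ioi).mul mAi1) ?_
    intro t ht
    have ht0 : (0:ℝ) ≤ t := le_of_lt ht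
    calc |R x t * Ai (t + σ)| = |R x t| * |Ai (t + σ)| := abs_mul _ _
      _ ≤ (C₀ * (Real.exp (-x) * Real.exp (-t))) * M₁ :=
          mul_le_mul (bR2 x hx t ht0) (bAi1i t ht0) (abs_nonneg _)
            (mul_nonneg hC₀0 (by positivity))
      _ = (C₀ * M₁ * Real.exp (-x)) * Real.exp (-t) := by ring
  have bQ : ∀ x ≥ (0:ℝ), |Qf Ai R σ x| ≤ (M₁ + C₀ * M₁) * Real.exp (-x) := by
    intro x hx
    rw [hQf x]
    calc |Ai (x + σ) + ∫ t in Ioi (0:ℝ), R x t * Ai (t + σ)|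
        ≤ |Ai (x + σ)| + |∫ t in Ioi (0:ℝ), R x t * Ai (t + σ)| := abs_add_le _ _
      _ ≤ M₁ * Real.exp (-x) + C₀ * M₁ * Real.exp (-x) := add_le_add (bAi1 x hx) (bW x hx)
      _ = (M₁ + C₀ * M₁) * Real.exp (-x) := by ring
  have hMQ0 : (0:ℝ) ≤ M₁ + C₀ * M₁ := by nlinarith
  have bQi : ∀ x ≥ (0:ℝ), |Qf Ai R σ x| ≤ M₁ + C₀ * M₁ :=
    fun x hx => drop_exp (bQ x hx) hx hMQ0
  -- scalar integrabilities
  have Irv : IntegrableOn (fun x => R x 0 * v x) (Ioi (0:ℝ)) :=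
    integrableOn_of_exp_bound (mr.mul mv)
      (fun x hx => mul_bound (br x (le_of_lt hx)) (bvi x (le_of_lt hx)) hC₀0)
  have IrJu : IntegrableOn
      (fun x => R x 0 * ∫ y in Ioi (0:ℝ), Ai (x + y + σ) * u y) (Ioi (0:ℝ)) :=
    integrableOn_of_exp_bound (mr.mul mJu)
      (fun x hx => mul_bound (br x (le_of_lt hx)) (bJui x (le_of_lt hx)) hC₀0)
  have IQu : IntegrableOn (fun x => Qf Ai R σ x * u x) (Ioi (0:ℝ)) :=
    integrableOn_of_exp_bound (mQ.mul mu)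
      (fun x hx => mul_bound (bQ x (le_of_lt hx)) (bui x (le_of_lt hx)) hMQ0)
  have IQLv : IntegrableOn
      (fun x => Qf Ai R σ x * ∫ y in Ioi (0:ℝ), Ai (x + y + σ) * v y) (Ioi (0:ℝ)) :=
    integrableOn_of_exp_bound (mQ.mul mLv)
      (fun x hx => mul_bound (bQ x (le_of_lt hx)) (bLvi x (le_of_lt hx)) hMQ0)
  have IAiu : IntegrableOn (fun y => Ai (y + σ) * u y) (Ioi (0:ℝ)) :=
    integrableOn_of_exp_bound (mAi1.mul mu)
      (fun y hy => mul_bound (bAi1 y (le_of_lt hy)) (bui y (le_of_lt hy)) hM₁0)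
  have IWu : IntegrableOn
      (fun y => (∫ t in Ioi (0:ℝ), R y t * Ai (t + σ)) * u y) (Ioi (0:ℝ)) :=
    integrableOn_of_exp_bound (mW.mul mu)
      (fun y hy => mul_bound (bW y (le_of_lt hy)) (bui y (le_of_lt hy))
        (mul_nonneg hC₀0 hM₁0))
  -- product integrabilities
  have hFubA : Integrable (fun p : ℝ × ℝ => R p.1 0 * (Ai (p.1 + p.2 + σ) * u p.2))
      ((volume.restrict (Ioi (0:ℝ))).prod (volume.restrict (Ioi (0:ℝ)))) := by
    refine integrable_prod_of_exp_bound (M := C₀ * (M₁ * Mu)) (mr.comp_fst.mul cpu.aestronglyMeasurable) ?_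
    intro x hx y hy
    have hx0 : (0:ℝ) ≤ x := le_of_lt hx
    have hy0 : (0:ℝ) ≤ y := le_of_lt hy
    calc |R x 0 * (Ai (x + y + σ) * u y)| = |R x 0| * (|Ai (x + y + σ)| * |u y|) := by
          rw [abs_mul, abs_mul]
      _ ≤ C₀ * ((M₁ * (Real.exp (-x) * Real.exp (-y))) * Mu) :=
          mul_le_mul (bri x hx0)
            (mul_le_mul (hM₁ x hx0 y hy0) (bui y hy0) (abs_nonneg _)
              (mul_nonneg hM₁0 (by positivity)))
            (mul_nonneg (abs_nonneg _) (abs_nonneg _)) hC₀0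
      _ = (C₀ * (M₁ * Mu)) * (Real.exp (-x) * Real.exp (-y)) := by ring
  have hFubB : Integrable (fun p : ℝ × ℝ => Qf Ai R σ p.1 * (Ai (p.1 + p.2 + σ) * v p.2))
      ((volume.restrict (Ioi (0:ℝ))).prod (volume.restrict (Ioi (0:ℝ)))) := by
    refine integrable_prod_of_exp_bound (M := (M₁ + C₀ * M₁) * (M₁ * Mv)) (mQ.comp_fst.mul cpv.aestronglyMeasurable) ?_
    intro x hx y hy
    have hx0 : (0:ℝ) ≤ x := le_of_lt hx
    have hy0 : (0:ℝ) ≤ y := le_of_lt hy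
    calc |Qf Ai R σ x * (Ai (x + y + σ) * v y)| = |Qf Ai R σ x| * (|Ai (x + y + σ)| * |v y|) := by
          rw [abs_mul, abs_mul]
      _ ≤ (M₁ + C₀ * M₁) * ((M₁ * (Real.exp (-x) * Real.exp (-y))) * Mv) :=
          mul_le_mul (bQi x hx0)
            (mul_le_mul (hM₁ x hx0 y hy0) (bvi y hy0) (abs_nonneg _)
              (mul_nonneg hM₁0 (by positivity)))
            (mul_nonneg (abs_nonneg _) (abs_nonneg _)) hMQ0
      _ = ((M₁ + C₀ * M₁) * (M₁ * Mv)) * (Real.exp (-x) * Real.exp (-y)) := by ring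
  -- key pointwise claim
  have E6 : ∀ y : ℝ, 0 ≤ y →
      (∫ x in Ioi (0:ℝ), Qf Ai R σ x * Ai (x + y + σ)) = R y 0 := by
    intro y hy0
    have IAiAi : IntegrableOn (fun x => Ai (x + σ) * Ai (x + y + σ)) (Ioi (0:ℝ)) :=
      integrableOn_of_exp_bound
        ((hAic.comp (by fun_prop : Continuous fun x : ℝ => x + σ)).aestronglyMeasurable.mul
          (hAic.comp (by fun_prop : Continuous fun x : ℝ => x + y + σ)).aestronglyMeasurable)
        (fun x hx => mul_bound (bAi1 x (le_of_lt hx)) (bAi2i x (le_of_lt hx) y hy0) hM₁0)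
    have IWAi : IntegrableOn
        (fun x => (∫ t in Ioi (0:ℝ), R x t * Ai (t + σ)) * Ai (x + y + σ)) (Ioi (0:ℝ)) :=
      integrableOn_of_exp_bound
        (mW.mul (hAic.comp (by fun_prop : Continuous fun x : ℝ => x + y + σ)).aestronglyMeasurable)
        (fun x hx => mul_bound (bW x (le_of_lt hx)) (bAi2i x (le_of_lt hx) y hy0)
          (mul_nonneg hC₀0 hM₁0))
    have hFubC : Integrable
        (fun p : ℝ × ℝ => Ai (p.1 + p.2 + σ) * R p.2 0 * Ai (p.1 + y + σ))
        ((volume.restrict (Ioi (0:ℝ))).prod (volume.restrict (Ioi (0:ℝ)))) := by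
      refine integrable_prod_of_exp_bound (M := M₁ * C₀ * M₁)
        (((hAic.comp ((continuous_fst.add continuous_snd).add
            continuous_const)).aestronglyMeasurable.mul mr.comp_snd).mul
          (hAic.comp ((continuous_fst.add continuous_const).add
            continuous_const)).aestronglyMeasurable) ?_
      intro x hx t ht
      have hx0 : (0:ℝ) ≤ x := le_of_lt hx
      have ht0 : (0:ℝ) ≤ t := le_of_lt ht
      calc |Ai (x + t + σ) * R t 0 * Ai (x + y + σ)|
          = |Ai (x + t + σ)| * |R t 0| * |Ai (x + y + σ)| := by rw [abs_mul, abs_mul]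
        _ ≤ ((M₁ * (Real.exp (-x) * Real.exp (-t))) * C₀) * M₁ :=
            mul_le_mul
              (mul_le_mul (hM₁ x hx0 t ht0) (bri t ht0) (abs_nonneg _)
                (mul_nonneg hM₁0 (by positivity)))
              (bAi2i x hx0 y hy0) (abs_nonneg _)
              (mul_nonneg (mul_nonneg hM₁0 (by positivity)) hC₀0)
        _ = (M₁ * C₀ * M₁) * (Real.exp (-x) * Real.exp (-t)) := by ring
    have hsplit : EqOn (fun x => Qf Ai R σ x * Ai (x + y + σ))
        (fun x => Ai (x + σ) * Ai (x + y + σ)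
          + (∫ t in Ioi (0:ℝ), R x t * Ai (t + σ)) * Ai (x + y + σ)) (Ioi 0) := by
      intro x _
      show Qf Ai R σ x * Ai (x + y + σ) = _
      rw [hQf x]; ring
    rw [setIntegral_congr_fun measurableSet_Ioi hsplit, integral_add IAiAi IWAi]
    have e2 : (∫ x in Ioi (0:ℝ), Ai (x + σ) * Ai (x + y + σ)) = KAi Ai σ y 0 := by
      simp only [KAi]
      refine setIntegral_congr_fun measurableSet_Ioi (fun x _ => ?_)
      rw [zero_add, add_comm x y]; ring
    have e3 : (∫ x in Ioi (0:ℝ), (∫ t in Ioi (0:ℝ), R x t * Ai (t + σ)) * Ai (x + y + σ))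
        = ∫ t in Ioi (0:ℝ), KAi Ai σ y t * R t 0 := by
      have w1 : EqOn (fun x => (∫ t in Ioi (0:ℝ), R x t * Ai (t + σ)) * Ai (x + y + σ))
          (fun x => ∫ t in Ioi (0:ℝ), Ai (x + t + σ) * R t 0 * Ai (x + y + σ)) (Ioi 0) := by
        intro x hx
        have hx0 : (0:ℝ) ≤ x := le_of_lt hx
        have hcomm := hRcomm x 0 hx0 le_rfl
        simp only [add_zero] at hcomm
        show (∫ t in Ioi (0:ℝ), R x t * Ai (t + σ)) * Ai (x + y + σ) = _
        rw [← hcomm, ← integral_mul_const]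
      rw [setIntegral_congr_fun measurableSet_Ioi w1, integral_integral_swap hFubC]
      refine setIntegral_congr_fun measurableSet_Ioi (fun t _ => ?_)
      have t2 : ∀ x : ℝ, Ai (x + t + σ) * R t 0 * Ai (x + y + σ)
          = R t 0 * (Ai (y + x + σ) * Ai (t + x + σ)) := by
        intro x
        rw [show x + t + σ = t + x + σ by ring, show x + y + σ = y + x + σ by ring]; ring
      simp only [t2]
      rw [integral_const_mul]
      simp only [KAi]
      ring
    rw [e2, e3, ← hRres y 0 hy0 le_rfl]
  -- E2
  have E2 : (∫ x in Ioi (0:ℝ), R x 0 * ∫ y in Ioi (0:ℝ), Ai (x + y + σ) * u y)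
      = ∫ y in Ioi (0:ℝ), (∫ t in Ioi (0:ℝ), R y t * Ai (t + σ)) * u y := by
    have step1 : EqOn (fun x => R x 0 * ∫ y in Ioi (0:ℝ), Ai (x + y + σ) * u y)
        (fun x => ∫ y in Ioi (0:ℝ), R x 0 * (Ai (x + y + σ) * u y)) (Ioi 0) :=
      fun x _ => (integral_const_mul _ _).symm
    rw [setIntegral_congr_fun measurableSet_Ioi step1, integral_integral_swap hFubA]
    refine setIntegral_congr_fun measurableSet_Ioi (fun y hy => ?_)
    have hy0 : (0:ℝ) ≤ y := le_of_lt hy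
    have t1 : ∀ x : ℝ, R x 0 * (Ai (x + y + σ) * u y) = (Ai (y + x + σ) * R x 0) * u y := by
      intro x; rw [show x + y + σ = y + x + σ by ring]; ring
    simp only [t1]
    rw [integral_mul_const]
    have hc := hRcomm y 0 hy0 le_rfl
    simp only [add_zero] at hc
    rw [hc]
  -- E4
  have E4 : (∫ x in Ioi (0:ℝ), Qf Ai R σ x * ∫ y in Ioi (0:ℝ), Ai (x + y + σ) * v y)
      = ∫ y in Ioi (0:ℝ), R y 0 * v y := by
    have step1 : EqOn (fun x => Qf Ai R σ x * ∫ y in Ioi (0:ℝ), Ai (x + y + σ) * v y)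
        (fun x => ∫ y in Ioi (0:ℝ), Qf Ai R σ x * (Ai (x + y + σ) * v y)) (Ioi 0) :=
      fun x _ => (integral_const_mul _ _).symm
    rw [setIntegral_congr_fun measurableSet_Ioi step1, integral_integral_swap hFubB]
    refine setIntegral_congr_fun measurableSet_Ioi (fun y hy => ?_)
    have hy0 : (0:ℝ) ≤ y := le_of_lt hy
    have t1 : ∀ x : ℝ, Qf Ai R σ x * (Ai (x + y + σ) * v y)
        = (Qf Ai R σ x * Ai (x + y + σ)) * v y := fun x => by ring
    simp only [t1]
    rw [integral_mul_const, E6 y hy0]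
  -- E1, E3, E5
  have E1 : (∫ x in Ioi (0:ℝ), R x 0 * (v x - a * ∫ y in Ioi (0:ℝ), Ai (x + y + σ) * u y))
      = (∫ x in Ioi (0:ℝ), R x 0 * v x)
        - a * ∫ x in Ioi (0:ℝ), R x 0 * ∫ y in Ioi (0:ℝ), Ai (x + y + σ) * u y := by
    have p : EqOn (fun x => R x 0 * (v x - a * ∫ y in Ioi (0:ℝ), Ai (x + y + σ) * u y))
        (fun x => R x 0 * v x
          - a * (R x 0 * ∫ y in Ioi (0:ℝ), Ai (x + y + σ) * u y)) (Ioi 0) :=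
      fun x _ => by ring
    rw [setIntegral_congr_fun measurableSet_Ioi p,
      integral_sub Irv (IrJu.const_mul a), integral_const_mul]
  have E3 : (∫ x in Ioi (0:ℝ), Qf Ai R σ x * (u x - b * ∫ y in Ioi (0:ℝ), Ai (x + y + σ) * v y))
      = (∫ x in Ioi (0:ℝ), Qf Ai R σ x * u x)
        - b * ∫ x in Ioi (0:ℝ), Qf Ai R σ x * ∫ y in Ioi (0:ℝ), Ai (x + y + σ) * v y := by
    have p : EqOn (fun x => Qf Ai R σ x * (u x - b * ∫ y in Ioi (0:ℝ), Ai (x + y + σ) * v y))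
        (fun x => Qf Ai R σ x * u x
          - b * (Qf Ai R σ x * ∫ y in Ioi (0:ℝ), Ai (x + y + σ) * v y)) (Ioi 0) :=
      fun x _ => by ring
    rw [setIntegral_congr_fun measurableSet_Ioi p,
      integral_sub IQu (IQLv.const_mul b), integral_const_mul]
  have E5 : (∫ x in Ioi (0:ℝ), Qf Ai R σ x * u x)
      = (∫ y in Ioi (0:ℝ), Ai (y + σ) * u y)
        + ∫ y in Ioi (0:ℝ), (∫ t in Ioi (0:ℝ), R y t * Ai (t + σ)) * u y := by
    have p : EqOn (fun x => Qf Ai R σ x * u x)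
        (fun x => Ai (x + σ) * u x
          + (∫ t in Ioi (0:ℝ), R x t * Ai (t + σ)) * u x) (Ioi 0) := by
      intro x _
      show Qf Ai R σ x * u x = _
      rw [hQf x]; ring
    rw [setIntegral_congr_fun measurableSet_Ioi p, integral_add IAiu IWu]
  have hJ0 : (∫ y in Ioi (0:ℝ), Ai (0 + y + σ) * u y)
      = ∫ y in Ioi (0:ℝ), Ai (y + σ) * u y := by simp only [zero_add]
  rw [E1, E2, E3, E4, E5, hJ0]
  linear_combination (-(∫ x in Ioi (0:ℝ), R x 0 * v x)) * hab

/-- **Two equivalent representations of each of the functions `p̂₁`, `p̂₂`** entering the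
rank-2 derivative formula for the tacnode kernel. -/
theorem p1hat_p2hat_equivalent_representations
    (Ai : ℝ → ℝ) (hAic : Continuous Ai)
    (hAidecay : ∀ a > (0 : ℝ), ∃ Ca > (0 : ℝ), ∀ x ≥ (0 : ℝ), |Ai x| ≤ Ca * Real.exp (-a * x))
    (lam : ℝ) (hlam : 0 < lam) (σ : ℝ)
    (R : ℝ → ℝ → ℝ)
    (hRcont : ContinuousOn (fun q : ℝ × ℝ => R q.1 q.2) (Ici 0 ×ˢ Ici 0))
    (hRsym : ∀ x y, 0 ≤ x → 0 ≤ y → R x y = R y x)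
    (hRres : ∀ x y, 0 ≤ x → 0 ≤ y →
      R x y = KAi Ai σ x y + ∫ t in Ioi (0 : ℝ), KAi Ai σ x t * R t y)
    (hRcomm : ∀ x y, 0 ≤ x → 0 ≤ y →
      (∫ t in Ioi (0 : ℝ), Ai (x + t + σ) * R t y)
        = ∫ t in Ioi (0 : ℝ), R x t * Ai (t + y + σ))
    (hRbd : ∃ C₀ > (0 : ℝ), ∀ x y, 0 ≤ x → 0 ≤ y → |R x y| ≤ C₀ * Real.exp (-x - y)) :
    ∀ z τ : ℝ,
      (AAt Ai lam σ τ z 0 + (∫ x in Ioi (0 : ℝ), R x 0 * AAt Ai lam σ τ z x)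
        = bt Ai lam σ τ z 0
          - lam ^ (-(1 : ℝ) / 6) * ∫ x in Ioi (0 : ℝ), Qf Ai R σ x * AA Ai lam σ τ z x)
      ∧ (AA Ai lam σ τ z 0 + (∫ x in Ioi (0 : ℝ), R x 0 * AA Ai lam σ τ z x)
        = bb Ai lam σ τ z 0
          - lam ^ ((1 : ℝ) / 6) * ∫ x in Ioi (0 : ℝ), Qf Ai R σ x * AAt Ai lam σ τ z x) := by
  obtain ⟨C₀, hC₀, hRbd'⟩ := hRbd
  intro z τ
  have hrp : (0:ℝ) < lam ^ (-(1:ℝ)/2) := Real.rpow_pos_of_pos hlam _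
  have hC1 : 1 ≤ Cc lam := Real.one_le_rpow (by linarith) (by norm_num)
  have hsix : lam ^ (-(1:ℝ)/6) * lam ^ ((1:ℝ)/6) = 1 := by
    rw [← Real.rpow_add hlam]; norm_num
  have hsix' : lam ^ ((1:ℝ)/6) * lam ^ (-(1:ℝ)/6) = 1 := by
    rw [mul_comm]; exact hsix
  have hl6 : (0:ℝ) < lam ^ ((1:ℝ)/6) := Real.rpow_pos_of_pos hlam _
  have hl6' : (0:ℝ) < lam ^ (-(1:ℝ)/6) := Real.rpow_pos_of_pos hlam _
  -- bound for Ai (x + y + σ)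
  have hAi2 : ∃ M₁ ≥ (0:ℝ), ∀ x ≥ (0:ℝ), ∀ y ≥ (0:ℝ),
      |Ai (x + y + σ)| ≤ M₁ * (Real.exp (-x) * Real.exp (-y)) := by
    obtain ⟨M₁', hM₁'pos, hM₁'⟩ := ai_exp_bound Ai hAic hAidecay 1 σ one_pos
    refine ⟨M₁' * Real.exp (-σ), by positivity, ?_⟩
    intro x hx y hy
    calc |Ai (x + y + σ)| ≤ M₁' * Real.exp (-1 * (x + y + σ)) := hM₁' _ (by linarith)
      _ = (M₁' * Real.exp (-σ)) * (Real.exp (-x) * Real.exp (-y)) := by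
          rw [show (-1 * (x + y + σ) : ℝ) = -σ + (-x + -y) by ring, Real.exp_add, Real.exp_add]
          ring
  obtain ⟨M₁, hM₁0, hM₁⟩ := hAi2
  -- bound for bb
  have hbbE : ∃ Mu ≥ (0:ℝ), ∀ x ≥ (0:ℝ), |bb Ai lam σ τ z x| ≤ Mu * Real.exp (-x) := by
    obtain ⟨Mu', hMu'pos, hMu'⟩ :=
      ai_exp_bound Ai hAic hAidecay (|τ| + 1) (z + Sig lam σ + τ ^ 2) (by positivity)
    have hcu : (1:ℝ) ≤ τ + (|τ| + 1) := by have := neg_abs_le τ; linarith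
    refine ⟨Mu' * Real.exp (τ ^ 3 / 3 - (τ + (|τ| + 1)) * (z + Sig lam σ + τ ^ 2)),
      by positivity, ?_⟩
    intro x hx
    simp only [bb]
    rw [abs_mul, Real.abs_exp]
    set Y := z + Cc lam * x + Sig lam σ + τ ^ 2 with hYdef
    have hY : Y ≥ z + Sig lam σ + τ ^ 2 := by rw [hYdef]; nlinarith
    have h1 : |Ai Y| ≤ Mu' * Real.exp (-(|τ| + 1) * Y) := hMu' Y hY
    have key : (-τ * Y + τ ^ 3 / 3) + (-(|τ| + 1) * Y)
        ≤ (τ ^ 3 / 3 - (τ + (|τ| + 1)) * (z + Sig lam σ + τ ^ 2)) + (-x) := by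
      rw [hYdef]
      nlinarith [mul_nonneg (sub_nonneg.2 hcu) (mul_nonneg (le_trans zero_le_one hC1) hx),
        mul_nonneg (sub_nonneg.2 hC1) hx]
    calc Real.exp (-τ * Y + τ ^ 3 / 3) * |Ai Y|
        ≤ Real.exp (-τ * Y + τ ^ 3 / 3) * (Mu' * Real.exp (-(|τ| + 1) * Y)) :=
          mul_le_mul_of_nonneg_left h1 (Real.exp_pos _).le
      _ = Mu' * Real.exp ((-τ * Y + τ ^ 3 / 3) + (-(|τ| + 1) * Y)) :=
          exp_mul_exp Mu' _ _
      _ ≤ Mu' * Real.exp ((τ ^ 3 / 3 - (τ + (|τ| + 1)) * (z + Sig lam σ + τ ^ 2)) + (-x)) :=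
          mul_le_mul_of_nonneg_left (Real.exp_le_exp.2 key) (le_of_lt hMu'pos)
      _ = (Mu' * Real.exp (τ ^ 3 / 3 - (τ + (|τ| + 1)) * (z + Sig lam σ + τ ^ 2)))
            * Real.exp (-x) := exp_split Mu' _ _
  obtain ⟨Mu, hMu0, hMu⟩ := hbbE
  -- bound for bt
  have hbtE : ∃ Mv ≥ (0:ℝ), ∀ x ≥ (0:ℝ), |bt Ai lam σ τ z x| ≤ Mv * Real.exp (-x) := by
    have hs0 : (0:ℝ) ≤ Real.sqrt lam := Real.sqrt_nonneg lam
    have hnum : (0:ℝ) < Real.sqrt lam * |τ| + 1 := by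
      nlinarith [mul_nonneg hs0 (abs_nonneg τ)]
    have ha₂ : (0:ℝ) < (Real.sqrt lam * |τ| + 1) * lam ^ (-(1:ℝ)/6) := mul_pos hnum hl6'
    obtain ⟨Mv', hMv'pos, hMv'⟩ := ai_exp_bound Ai hAic hAidecay
      ((Real.sqrt lam * |τ| + 1) * lam ^ (-(1:ℝ)/6))
      (lam ^ ((1:ℝ)/6) * (-z + Real.sqrt lam * (Sig lam σ + τ ^ 2))) ha₂
    have key2 : ((Real.sqrt lam * |τ| + 1) * lam ^ (-(1:ℝ)/6)) * lam ^ ((1:ℝ)/6)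
        = Real.sqrt lam * |τ| + 1 := by rw [mul_assoc, hsix, mul_one]
    have hcv : (1:ℝ) ≤ Real.sqrt lam * τ + (Real.sqrt lam * |τ| + 1) := by
      nlinarith [mul_nonneg hs0 (by linarith [neg_abs_le τ] : (0:ℝ) ≤ τ + |τ|)]
    refine ⟨Mv' * Real.exp (lam * τ ^ 3 / 3
      - (Real.sqrt lam * τ + (Real.sqrt lam * |τ| + 1))
        * (-z + Real.sqrt lam * (Sig lam σ + τ ^ 2))), by positivity, ?_⟩
    intro x hx
    simp only [bt]
    rw [abs_mul, Real.abs_exp]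
    set Y := -z + Cc lam * x + Real.sqrt lam * (Sig lam σ + τ ^ 2) with hYdef
    have hY : lam ^ ((1:ℝ)/6) * Y
        ≥ lam ^ ((1:ℝ)/6) * (-z + Real.sqrt lam * (Sig lam σ + τ ^ 2)) := by
      refine mul_le_mul_of_nonneg_left ?_ hl6.le
      rw [hYdef]; nlinarith
    have h1 := hMv' _ hY
    have harg : -((Real.sqrt lam * |τ| + 1) * lam ^ (-(1:ℝ)/6)) * (lam ^ ((1:ℝ)/6) * Y)
        = -(Real.sqrt lam * |τ| + 1) * Y := by
      rw [show -((Real.sqrt lam * |τ| + 1) * lam ^ (-(1:ℝ)/6)) * (lam ^ ((1:ℝ)/6) * Y)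
        = -(((Real.sqrt lam * |τ| + 1) * lam ^ (-(1:ℝ)/6)) * lam ^ ((1:ℝ)/6)) * Y by ring, key2]
    rw [harg] at h1
    have key3 : (-Real.sqrt lam * τ * Y + lam * τ ^ 3 / 3) + (-(Real.sqrt lam * |τ| + 1) * Y)
        ≤ (lam * τ ^ 3 / 3 - (Real.sqrt lam * τ + (Real.sqrt lam * |τ| + 1))
            * (-z + Real.sqrt lam * (Sig lam σ + τ ^ 2))) + (-x) := by
      rw [hYdef]
      nlinarith [mul_nonneg (sub_nonneg.2 hcv) (mul_nonneg (le_trans zero_le_one hC1) hx),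
        mul_nonneg (sub_nonneg.2 hC1) hx]
    calc Real.exp (-Real.sqrt lam * τ * Y + lam * τ ^ 3 / 3) * |Ai (lam ^ ((1:ℝ)/6) * Y)|
        ≤ Real.exp (-Real.sqrt lam * τ * Y + lam * τ ^ 3 / 3)
            * (Mv' * Real.exp (-(Real.sqrt lam * |τ| + 1) * Y)) :=
          mul_le_mul_of_nonneg_left h1 (Real.exp_pos _).le
      _ = Mv' * Real.exp ((-Real.sqrt lam * τ * Y + lam * τ ^ 3 / 3)
            + (-(Real.sqrt lam * |τ| + 1) * Y)) := exp_mul_exp Mv' _ _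
      _ ≤ Mv' * Real.exp ((lam * τ ^ 3 / 3
            - (Real.sqrt lam * τ + (Real.sqrt lam * |τ| + 1))
              * (-z + Real.sqrt lam * (Sig lam σ + τ ^ 2))) + (-x)) :=
          mul_le_mul_of_nonneg_left (Real.exp_le_exp.2 key3) (le_of_lt hMv'pos)
      _ = (Mv' * Real.exp (lam * τ ^ 3 / 3
            - (Real.sqrt lam * τ + (Real.sqrt lam * |τ| + 1))
              * (-z + Real.sqrt lam * (Sig lam σ + τ ^ 2)))) * Real.exp (-x) :=
          exp_split Mv' _ _
  obtain ⟨Mv, hMv0, hMv⟩ := hbtE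
  have hbbc : Continuous fun x => bb Ai lam σ τ z x := by
    unfold bb
    exact (Real.continuous_exp.comp (by fun_prop)).mul (hAic.comp (by fun_prop))
  have hbtc : Continuous fun x => bt Ai lam σ τ z x := by
    unfold bt
    exact (Real.continuous_exp.comp (by fun_prop)).mul (hAic.comp (by fun_prop))
  constructor
  · simp only [AAt, AA]
    exact master hAic hM₁0 hM₁ hRcont hC₀.le hRbd' hRres hRcomm hbbc hbtc hMu0 hMv0 hMu hMv
      (lam ^ (-(1:ℝ)/6)) (lam ^ ((1:ℝ)/6)) hsix
  · simp only [AA, AAt]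
    exact master hAic hM₁0 hM₁ hRcont hC₀.le hRbd' hRres hRcomm hbtc hbbc hMv0 hMu0 hMv hMu
      (lam ^ ((1:ℝ)/6)) (lam ^ (-(1:ℝ)/6)) hsix'


end
end

section
/- With the notations of the context, regard b_{τ,z}(x), b̃_{τ,z}(x) and 𝒜_{τ,z}(x) as functions of (σ, x) ∈ ℝ × [0,∞) (with λ, τ, z fixed, and Σ = λ^{−1/2}·(1+λ^{−1/2})^{−2/3}·σ). Then: (i) (1 + λ^{−1/2})·∂b_{τ,z}(x)/∂σ = λ^{−1/2}·∂b_{τ,z}(x)/∂x; (ii) (1 + λ^{−1/2})·∂b̃_{τ,z}(x)/∂σ = ∂b̃_{τ,z}(x)/∂x; (iii) (1 + λ^{−1/2})·∂𝒜_{τ,z}(x)/∂σ = λ^{−1/2}·∂𝒜_{τ,z}(x)/∂x + λ^{1/6}·Ai(x+σ)·b̃_{τ,z}(0). -/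
set_option maxHeartbeats 1000000


open Real MeasureTheory Set

noncomputable section

namespace AiryAux

/-- `f(t) = exp(-τ t + τ³/3) Ai t`, the profile of `bb`. -/
def ffun (Ai : ℝ → ℝ) (τ t : ℝ) : ℝ := Real.exp (-τ * t + τ ^ 3 / 3) * Ai t

def ffun' (Ai : ℝ → ℝ) (τ t : ℝ) : ℝ :=
  Real.exp (-τ * t + τ ^ 3 / 3) * (-τ * Ai t + deriv Ai t)

/-- `g(t) = exp(-√λ τ t + λτ³/3) Ai(λ^{1/6} t)`, the profile of `bt`. -/
def gfun (Ai : ℝ → ℝ) (lam τ t : ℝ) : ℝ :=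
  Real.exp (-Real.sqrt lam * τ * t + lam * τ ^ 3 / 3) * Ai (lam ^ ((1 : ℝ) / 6) * t)

def gfun' (Ai : ℝ → ℝ) (lam τ t : ℝ) : ℝ :=
  Real.exp (-Real.sqrt lam * τ * t + lam * τ ^ 3 / 3) *
    (-Real.sqrt lam * τ * Ai (lam ^ ((1 : ℝ) / 6) * t)
      + lam ^ ((1 : ℝ) / 6) * deriv Ai (lam ^ ((1 : ℝ) / 6) * t))

lemma hasDerivAt_ffun (Ai : ℝ → ℝ) (hAi : ContDiff ℝ 1 Ai) (τ t : ℝ) :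
    HasDerivAt (ffun Ai τ) (ffun' Ai τ t) t := by
  have hE : HasDerivAt (fun t : ℝ => Real.exp (-τ * t + τ ^ 3 / 3))
      (Real.exp (-τ * t + τ ^ 3 / 3) * (-τ)) t := by
    have h0 : HasDerivAt (fun t : ℝ => -τ * t + τ ^ 3 / 3) (-τ) t := by
      simpa using ((hasDerivAt_id t).const_mul (-τ)).add_const (τ ^ 3 / 3)
    exact h0.exp
  have hA : HasDerivAt Ai (deriv Ai t) t :=
    ((hAi.differentiable one_ne_zero) t).hasDerivAt
  have := hE.mul hA
  unfold ffun ffun'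
  exact this.congr_deriv (by ring)

lemma hasDerivAt_gfun (Ai : ℝ → ℝ) (hAi : ContDiff ℝ 1 Ai) (lam τ t : ℝ) :
    HasDerivAt (gfun Ai lam τ) (gfun' Ai lam τ t) t := by
  have hE : HasDerivAt (fun t : ℝ => Real.exp (-Real.sqrt lam * τ * t + lam * τ ^ 3 / 3))
      (Real.exp (-Real.sqrt lam * τ * t + lam * τ ^ 3 / 3) * (-Real.sqrt lam * τ)) t := by
    have h0 : HasDerivAt (fun t : ℝ => -Real.sqrt lam * τ * t + lam * τ ^ 3 / 3)
        (-Real.sqrt lam * τ) t := by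
      simpa [mul_assoc] using
        ((hasDerivAt_id t).const_mul (-Real.sqrt lam * τ)).add_const (lam * τ ^ 3 / 3)
    exact h0.exp
  have hA : HasDerivAt (fun t : ℝ => Ai (lam ^ ((1 : ℝ) / 6) * t))
      (deriv Ai (lam ^ ((1 : ℝ) / 6) * t) * lam ^ ((1 : ℝ) / 6)) t := by
    have h0 : HasDerivAt (fun t : ℝ => lam ^ ((1 : ℝ) / 6) * t) (lam ^ ((1 : ℝ) / 6)) t := by
      simpa using (hasDerivAt_id t).const_mul (lam ^ ((1 : ℝ) / 6))
    simpa [Function.comp_def] using (((hAi.differentiable one_ne_zero) _).hasDerivAt.comp t h0)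
  have := hE.mul hA
  unfold gfun gfun'
  exact this.congr_deriv (by ring)

/-- Decay bound with arbitrary lower cutoff, deduced from decay on `[0,∞)` + compactness. -/
lemma decay_bound (Ai : ℝ → ℝ) (hAi : ContDiff ℝ 1 Ai)
    (hdec : ∀ a > (0 : ℝ), ∃ Ca > (0 : ℝ), ∀ x ≥ (0 : ℝ),
      |Ai x| + |deriv Ai x| ≤ Ca * Real.exp (-a * x))
    {a : ℝ} (ha : 0 < a) (m : ℝ) :
    ∃ C > 0, ∀ t, m ≤ t → |Ai t| + |deriv Ai t| ≤ C * Real.exp (-(a * t)) := by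
  obtain ⟨Ca, hCa0, hCa⟩ := hdec a ha
  have hcont : ContinuousOn (fun t => |Ai t| + |deriv Ai t|) (Icc m 0) :=
    (hAi.continuous.abs.add (hAi.continuous_deriv le_rfl).abs).continuousOn
  obtain ⟨M, hM⟩ := isCompact_Icc.exists_bound_of_continuousOn hcont
  refine ⟨max Ca (|M| + 1), lt_of_lt_of_le hCa0 (le_max_left _ _), fun t ht => ?_⟩
  rcases le_or_gt 0 t with h0 | h0
  · calc |Ai t| + |deriv Ai t| ≤ Ca * Real.exp (-a * t) := hCa t h0
      _ ≤ max Ca (|M| + 1) * Real.exp (-(a * t)) := by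
          rw [neg_mul]
          exact mul_le_mul_of_nonneg_right (le_max_left _ _) (Real.exp_pos _).le
  · have htI : t ∈ Icc m 0 := ⟨ht, h0.le⟩
    have h1 : |Ai t| + |deriv Ai t| ≤ M := by
      have := hM t htI
      rw [Real.norm_eq_abs] at this
      exact (le_abs_self _).trans this
    have h2 : (1 : ℝ) ≤ Real.exp (-(a * t)) := by
      apply Real.one_le_exp
      nlinarith
    calc |Ai t| + |deriv Ai t| ≤ M := h1
      _ ≤ max Ca (|M| + 1) := le_trans (by nlinarith [le_abs_self M]) (le_max_right _ _)
      _ ≤ max Ca (|M| + 1) * Real.exp (-(a * t)) :=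
          le_mul_of_one_le_right (le_trans hCa0.le (le_max_left _ _)) h2

/-- Exponential bounds for `gfun` and `gfun'` on `[m1, ∞)`. -/
lemma gfun_bound (Ai : ℝ → ℝ) (hAi : ContDiff ℝ 1 Ai)
    (hdec : ∀ a > (0 : ℝ), ∃ Ca > (0 : ℝ), ∀ x ≥ (0 : ℝ),
      |Ai x| + |deriv Ai x| ≤ Ca * Real.exp (-a * x))
    {lam : ℝ} (hlam : 0 < lam) (τ m1 : ℝ) :
    ∃ D > 0, ∀ t, m1 ≤ t →
      |gfun Ai lam τ t| ≤ D * Real.exp (-(2 * t)) ∧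
      |gfun' Ai lam τ t| ≤ D * Real.exp (-(2 * t)) := by
  have hμ : 0 < lam ^ ((1 : ℝ) / 6) := Real.rpow_pos_of_pos hlam _
  have hs : 0 ≤ Real.sqrt lam := Real.sqrt_nonneg _
  obtain ⟨C, hC0, hC⟩ := decay_bound Ai hAi hdec
    (a := (Real.sqrt lam * |τ| + 2) / lam ^ ((1 : ℝ) / 6)) (by positivity)
    (lam ^ ((1 : ℝ) / 6) * m1)
  set s := Real.sqrt lam with hsdef
  set μ := lam ^ ((1 : ℝ) / 6) with hμdef
  set K := lam * τ ^ 3 / 3 with hKdef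
  set D0 : ℝ := C * Real.exp (K + 2 * s * |τ| * |m1|) with hD0def
  refine ⟨(1 + s * |τ| + μ) * D0, by positivity, fun t ht => ?_⟩
  have hCt : |Ai (μ * t)| + |deriv Ai (μ * t)| ≤ C * Real.exp (-((s * |τ| + 2) * t)) := by
    have h1 := hC (μ * t) (mul_le_mul_of_nonneg_left ht hμ.le)
    rwa [show (s * |τ| + 2) / μ * (μ * t) = (s * |τ| + 2) * t by
      field_simp] at h1
  have hexpkey : (-s * τ * t + K) + -((s * |τ| + 2) * t)
      ≤ (K + 2 * s * |τ| * |m1|) + -(2 * t) := by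
    rcases le_or_gt 0 t with h | h
    · nlinarith [mul_nonneg (mul_nonneg hs h) (by linarith [neg_abs_le τ] : (0 : ℝ) ≤ |τ| + τ),
        mul_nonneg (mul_nonneg hs (abs_nonneg τ)) (abs_nonneg m1)]
    · nlinarith [mul_nonneg (mul_nonneg hs (by linarith [le_abs_self τ] : (0 : ℝ) ≤ |τ| - τ))
          (le_of_lt (neg_pos.2 h)),
        mul_nonneg (mul_nonneg hs (abs_nonneg τ))
          (by linarith [neg_abs_le m1] : (0 : ℝ) ≤ |m1| + t)]
  have key : Real.exp (-s * τ * t + K) * (C * Real.exp (-((s * |τ| + 2) * t)))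
      ≤ D0 * Real.exp (-(2 * t)) := by
    have e1 : Real.exp (-s * τ * t + K) * (C * Real.exp (-((s * |τ| + 2) * t)))
        = C * Real.exp ((-s * τ * t + K) + -((s * |τ| + 2) * t)) := by
      rw [mul_left_comm, ← Real.exp_add]
    have e2 : D0 * Real.exp (-(2 * t))
        = C * Real.exp ((K + 2 * s * |τ| * |m1|) + -(2 * t)) := by
      rw [hD0def, mul_assoc, ← Real.exp_add]
    rw [e1, e2]
    exact mul_le_mul_of_nonneg_left (Real.exp_le_exp.2 hexpkey) hC0.le
  have hAbd : |Ai (μ * t)| ≤ C * Real.exp (-((s * |τ| + 2) * t)) :=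
    le_trans (le_add_of_nonneg_right (abs_nonneg _)) hCt
  have hAbd' : |deriv Ai (μ * t)| ≤ C * Real.exp (-((s * |τ| + 2) * t)) :=
    le_trans (le_add_of_nonneg_left (abs_nonneg _)) hCt
  have hD0pos : 0 < D0 := by positivity
  constructor
  · have e0 : |gfun Ai lam τ t| = Real.exp (-s * τ * t + K) * |Ai (μ * t)| := by
      rw [gfun, abs_mul, abs_of_pos (Real.exp_pos _)]
    calc |gfun Ai lam τ t|
        = Real.exp (-s * τ * t + K) * |Ai (μ * t)| := e0
      _ ≤ Real.exp (-s * τ * t + K) * (C * Real.exp (-((s * |τ| + 2) * t))) :=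
          mul_le_mul_of_nonneg_left hAbd (Real.exp_pos _).le
      _ ≤ D0 * Real.exp (-(2 * t)) := key
      _ ≤ (1 + s * |τ| + μ) * D0 * Real.exp (-(2 * t)) := by
          nlinarith [mul_nonneg (add_nonneg (mul_nonneg hs (abs_nonneg τ)) hμ.le)
            (mul_pos hD0pos (Real.exp_pos (-(2 * t)))).le]
  · have e0 : |gfun' Ai lam τ t| = Real.exp (-s * τ * t + K) *
        |(-s * τ * Ai (μ * t) + μ * deriv Ai (μ * t))| := by
      rw [gfun', abs_mul, abs_of_pos (Real.exp_pos _)]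
    have habs : |(-s * τ * Ai (μ * t) + μ * deriv Ai (μ * t))|
        ≤ (s * |τ| + μ) * (C * Real.exp (-((s * |τ| + 2) * t))) := by
      have h1 : |(-s * τ * Ai (μ * t) + μ * deriv Ai (μ * t))|
          ≤ s * |τ| * |Ai (μ * t)| + μ * |deriv Ai (μ * t)| := by
        calc |(-s * τ * Ai (μ * t) + μ * deriv Ai (μ * t))|
            ≤ |(-s * τ * Ai (μ * t))| + |μ * deriv Ai (μ * t)| := abs_add_le _ _
          _ = s * |τ| * |Ai (μ * t)| + μ * |deriv Ai (μ * t)| := by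
              rw [abs_mul, abs_mul, abs_mul, abs_neg, abs_of_nonneg hs, abs_of_pos hμ]
      refine h1.trans ?_
      have h2 := mul_le_mul_of_nonneg_left hAbd (mul_nonneg hs (abs_nonneg τ))
      have h3 := mul_le_mul_of_nonneg_left hAbd' hμ.le
      nlinarith
    calc |gfun' Ai lam τ t|
        = Real.exp (-s * τ * t + K) * |(-s * τ * Ai (μ * t) + μ * deriv Ai (μ * t))| := e0
      _ ≤ Real.exp (-s * τ * t + K) *
          ((s * |τ| + μ) * (C * Real.exp (-((s * |τ| + 2) * t)))) :=
          mul_le_mul_of_nonneg_left habs (Real.exp_pos _).le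
      _ = (s * |τ| + μ) * (Real.exp (-s * τ * t + K) * (C * Real.exp (-((s * |τ| + 2) * t)))) := by
          ring
      _ ≤ (s * |τ| + μ) * (D0 * Real.exp (-(2 * t))) :=
          mul_le_mul_of_nonneg_left key (by positivity)
      _ ≤ (1 + s * |τ| + μ) * D0 * Real.exp (-(2 * t)) := by
          nlinarith [(mul_pos hD0pos (Real.exp_pos (-(2 * t))))]

end AiryAux

open AiryAux

/-- **Partial differential relations in `(σ, x)` of the Airy building blocks** `b`, `b̃`, `𝒜`:
(i) `(1+λ^{-1/2}) ∂_σ b = λ^{-1/2} ∂_x b`;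
(ii) `(1+λ^{-1/2}) ∂_σ b̃ = ∂_x b̃`;
(iii) `(1+λ^{-1/2}) ∂_σ 𝒜 = λ^{-1/2} ∂_x 𝒜 + λ^{1/6} Ai(x+σ) b̃_{τ,z}(0)`. -/
theorem b_bt_A_sigma_x_derivative_relations
    (Ai : ℝ → ℝ) (hAi : ContDiff ℝ 1 Ai)
    (hAidecay : ∀ a > (0 : ℝ), ∃ Ca > (0 : ℝ), ∀ x ≥ (0 : ℝ),
      |Ai x| + |deriv Ai x| ≤ Ca * Real.exp (-a * x))
    (lam : ℝ) (hlam : 0 < lam) (τ z : ℝ) :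
    (∀ σ : ℝ, ∀ x ≥ (0 : ℝ),
      (1 + lam ^ (-(1 : ℝ) / 2)) * deriv (fun σ' => bb Ai lam σ' τ z x) σ
        = lam ^ (-(1 : ℝ) / 2) * deriv (fun x' => bb Ai lam σ τ z x') x)
    ∧ (∀ σ : ℝ, ∀ x ≥ (0 : ℝ),
      (1 + lam ^ (-(1 : ℝ) / 2)) * deriv (fun σ' => bt Ai lam σ' τ z x) σ
        = deriv (fun x' => bt Ai lam σ τ z x') x)
    ∧ (∀ σ : ℝ, ∀ x ≥ (0 : ℝ),
      (1 + lam ^ (-(1 : ℝ) / 2)) * deriv (fun σ' => AA Ai lam σ' τ z x) σ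
        = lam ^ (-(1 : ℝ) / 2) * deriv (fun x' => AA Ai lam σ τ z x') x
          + lam ^ ((1 : ℝ) / 6) * Ai (x + σ) * bt Ai lam σ τ z 0) := by
  have hℓ : 0 < lam ^ (-(1 : ℝ) / 2) := Real.rpow_pos_of_pos hlam _
  have hk : (0 : ℝ) < 1 + lam ^ (-(1 : ℝ) / 2) := by positivity
  have hK23pos : 0 < (1 + lam ^ (-(1 : ℝ) / 2)) ^ (-(2 : ℝ) / 3) := Real.rpow_pos_of_pos hk _
  have hK23le1 : (1 + lam ^ (-(1 : ℝ) / 2)) ^ (-(2 : ℝ) / 3) ≤ 1 :=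
    Real.rpow_le_one_of_one_le_of_nonpos (by linarith) (by norm_num)
  have hCc1 : (1 : ℝ) ≤ Cc lam := by
    calc (1 : ℝ) = (1 : ℝ) ^ ((1 : ℝ) / 3) := (Real.one_rpow _).symm
      _ ≤ (1 + lam ^ (-(1 : ℝ) / 2)) ^ ((1 : ℝ) / 3) :=
          Real.rpow_le_rpow zero_le_one (by linarith) (by norm_num)
  have hsl : Real.sqrt lam * lam ^ (-(1 : ℝ) / 2) = 1 := by
    rw [Real.sqrt_eq_rpow, ← Real.rpow_add hlam,
      show 1 / (2 : ℝ) + -(1 : ℝ) / 2 = 0 by norm_num, Real.rpow_zero]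
  have hkey : (1 + lam ^ (-(1 : ℝ) / 2)) * (1 + lam ^ (-(1 : ℝ) / 2)) ^ (-(2 : ℝ) / 3)
      = Cc lam := by
    rw [Cc, show (1 : ℝ) / 3 = 1 + -(2 : ℝ) / 3 by norm_num, Real.rpow_add hk, Real.rpow_one]
  have hDiff := hAi.differentiable one_ne_zero
  have hAic : Continuous Ai := hAi.continuous
  have hAic' : Continuous (deriv Ai) := hAi.continuous_deriv le_rfl
  -- derivative of `σ ↦ Sig lam σ`
  have hSigD : ∀ σ : ℝ, HasDerivAt (fun σ' => Sig lam σ')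
      (lam ^ (-(1 : ℝ) / 2) * (1 + lam ^ (-(1 : ℝ) / 2)) ^ (-(2 : ℝ) / 3)) σ := by
    intro σ
    simpa [Sig] using (hasDerivAt_id σ).const_mul
      (lam ^ (-(1 : ℝ) / 2) * (1 + lam ^ (-(1 : ℝ) / 2)) ^ (-(2 : ℝ) / 3))
  -- derivatives of bb
  have hbbσD : ∀ σ x : ℝ, HasDerivAt (fun σ' => bb Ai lam σ' τ z x)
      (ffun' Ai τ (z + Cc lam * x + Sig lam σ + τ ^ 2) *
        (lam ^ (-(1 : ℝ) / 2) * (1 + lam ^ (-(1 : ℝ) / 2)) ^ (-(2 : ℝ) / 3))) σ := by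
    intro σ x
    have hin : HasDerivAt (fun σ' => z + Cc lam * x + Sig lam σ' + τ ^ 2)
        (lam ^ (-(1 : ℝ) / 2) * (1 + lam ^ (-(1 : ℝ) / 2)) ^ (-(2 : ℝ) / 3)) σ :=
      ((hSigD σ).const_add (z + Cc lam * x)).add_const (τ ^ 2)
    exact (hasDerivAt_ffun Ai hAi τ _).comp σ hin
  have hbbxD : ∀ σ x : ℝ, HasDerivAt (fun x' => bb Ai lam σ τ z x')
      (ffun' Ai τ (z + Cc lam * x + Sig lam σ + τ ^ 2) * Cc lam) x := by
    intro σ x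
    have hin : HasDerivAt (fun x' => z + Cc lam * x' + Sig lam σ + τ ^ 2) (Cc lam) x := by
      simpa using ((((hasDerivAt_id x).const_mul (Cc lam)).const_add z).add_const
        (Sig lam σ)).add_const (τ ^ 2)
    exact (hasDerivAt_ffun Ai hAi τ _).comp x hin
  -- derivatives of bt
  have hinσ : ∀ σ' y : ℝ, HasDerivAt
      (fun σ'' => -z + Cc lam * y + Real.sqrt lam * (Sig lam σ'' + τ ^ 2))
      ((1 + lam ^ (-(1 : ℝ) / 2)) ^ (-(2 : ℝ) / 3)) σ' := by
    intro σ' y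
    have h2 := (((hSigD σ').add_const (τ ^ 2)).const_mul (Real.sqrt lam)).const_add
      (-z + Cc lam * y)
    refine h2.congr_deriv ?_
    rw [← mul_assoc, hsl, one_mul]
  have hbtσD : ∀ σ' y : ℝ, HasDerivAt (fun σ'' => bt Ai lam σ'' τ z y)
      (gfun' Ai lam τ (-z + Cc lam * y + Real.sqrt lam * (Sig lam σ' + τ ^ 2)) *
        (1 + lam ^ (-(1 : ℝ) / 2)) ^ (-(2 : ℝ) / 3)) σ' := fun σ' y =>
    (hasDerivAt_gfun Ai hAi lam τ _).comp σ' (hinσ σ' y)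
  have hbtyD : ∀ σ y : ℝ, HasDerivAt (fun y' => bt Ai lam σ τ z y')
      (gfun' Ai lam τ (-z + Cc lam * y + Real.sqrt lam * (Sig lam σ + τ ^ 2)) * Cc lam) y := by
    intro σ y
    have hin : HasDerivAt (fun y' => -z + Cc lam * y' + Real.sqrt lam * (Sig lam σ + τ ^ 2))
        (Cc lam) y := by
      simpa using (((hasDerivAt_id y).const_mul (Cc lam)).const_add (-z)).add_const
        (Real.sqrt lam * (Sig lam σ + τ ^ 2))
    exact (hasDerivAt_gfun Ai hAi lam τ _).comp y hin
  -- derivatives of shifted Ai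
  have hAixσ : ∀ c σ' : ℝ, HasDerivAt (fun u : ℝ => Ai (c + u)) (deriv Ai (c + σ')) σ' := by
    intro c σ'
    have h0 : HasDerivAt (fun u : ℝ => c + u) 1 σ' := by
      simpa using (hasDerivAt_id σ').const_add c
    simpa [Function.comp_def] using (hDiff (c + σ')).hasDerivAt.comp σ' h0
  have hAix2 : ∀ c d x' : ℝ, HasDerivAt (fun u : ℝ => Ai (u + c + d))
      (deriv Ai (x' + c + d)) x' := by
    intro c d x'
    have h0 : HasDerivAt (fun u : ℝ => u + c + d) 1 x' := by
      simpa using ((hasDerivAt_id x').add_const c).add_const d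
    simpa [Function.comp_def] using (hDiff (x' + c + d)).hasDerivAt.comp x' h0
  have hAix3 : ∀ c d y : ℝ, HasDerivAt (fun u : ℝ => Ai (c + u + d))
      (deriv Ai (c + y + d)) y := by
    intro c d y
    have h0 : HasDerivAt (fun u : ℝ => c + u + d) 1 y := by
      simpa using ((hasDerivAt_id y).const_add c).add_const d
    simpa [Function.comp_def] using (hDiff (c + y + d)).hasDerivAt.comp y h0
  -- continuity facts
  have hgc : Continuous (gfun Ai lam τ) := by
    refine Continuous.mul ?_ ?_
    · exact Real.continuous_exp.comp ((continuous_const.mul continuous_id).add continuous_const)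
    · exact hAic.comp (continuous_const.mul continuous_id)
  have hgc' : Continuous (gfun' Ai lam τ) := by
    refine Continuous.mul ?_ ?_
    · exact Real.continuous_exp.comp ((continuous_const.mul continuous_id).add continuous_const)
    · exact (continuous_const.mul (hAic.comp (continuous_const.mul continuous_id))).add
        (continuous_const.mul (hAic'.comp (continuous_const.mul continuous_id)))
  have hctsAiy : ∀ σ' x' : ℝ, Continuous fun y : ℝ => Ai (x' + y + σ') := fun σ' x' =>
    hAic.comp ((continuous_const.add continuous_id).add continuous_const)
  have hctsAiy' : ∀ σ' x' : ℝ, Continuous fun y : ℝ => deriv Ai (x' + y + σ') := fun σ' x' =>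
    hAic'.comp ((continuous_const.add continuous_id).add continuous_const)
  have hctsg'y : ∀ σ' : ℝ, Continuous fun y : ℝ =>
      gfun' Ai lam τ (-z + Cc lam * y + Real.sqrt lam * (Sig lam σ' + τ ^ 2)) := fun σ' =>
    hgc'.comp ((continuous_const.add (continuous_const.mul continuous_id)).add continuous_const)
  have hbtc : ∀ σ' : ℝ, Continuous fun y : ℝ => bt Ai lam σ' τ z y := fun σ' =>
    hgc.comp ((continuous_const.add (continuous_const.mul continuous_id)).add continuous_const)
  refine ⟨?_, ?_, ?_⟩
  · intro σ x _
    rw [(hbbσD σ x).deriv, (hbbxD σ x).deriv]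
    linear_combination (ffun' Ai τ (z + Cc lam * x + Sig lam σ + τ ^ 2) *
      lam ^ (-(1 : ℝ) / 2)) * hkey
  · intro σ x _
    rw [(hbtσD σ x).deriv, (hbtyD σ x).deriv]
    linear_combination
      (gfun' Ai lam τ (-z + Cc lam * x + Real.sqrt lam * (Sig lam σ + τ ^ 2))) * hkey
  · intro σ x _
    obtain ⟨C2, hC20, hAb⟩ := decay_bound Ai hAi hAidecay one_pos (x + σ - 2)
    simp only [one_mul] at hAb
    obtain ⟨D1, hD10, hgb⟩ := gfun_bound Ai hAi hAidecay hlam τ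
      (-z + Real.sqrt lam * (Sig lam σ + τ ^ 2) - 1)
    set P : ℝ := C2 * Real.exp (-(x + σ - 2)) with hPdef
    set Q : ℝ := D1 * Real.exp (-(2 * (-z + Real.sqrt lam * (Sig lam σ + τ ^ 2) - 1)))
      with hQdef
    have hP0 : 0 < P := by positivity
    have hQ0 : 0 < Q := by positivity
    -- pointwise bounds on the Airy factor
    have hA1 : ∀ x' σ' y : ℝ, |x' - x| ≤ 1 → |σ' - σ| ≤ 1 → 0 ≤ y →
        |Ai (x' + y + σ')| ≤ P * Real.exp (-y) ∧
        |deriv Ai (x' + y + σ')| ≤ P * Real.exp (-y) := by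
      intro x' σ' y h1 h2 hy
      have h1' := abs_le.mp h1
      have h2' := abs_le.mp h2
      have ht : x + σ - 2 ≤ x' + y + σ' := by linarith
      have h3 := hAb _ ht
      have h4 : Real.exp (-(x' + y + σ')) ≤ Real.exp (-(x + σ - 2)) * Real.exp (-y) := by
        rw [← Real.exp_add]
        exact Real.exp_le_exp.2 (by linarith)
      constructor
      · calc |Ai (x' + y + σ')| ≤ C2 * Real.exp (-(x' + y + σ')) :=
            le_trans (le_add_of_nonneg_right (abs_nonneg _)) h3
          _ ≤ C2 * (Real.exp (-(x + σ - 2)) * Real.exp (-y)) :=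
            mul_le_mul_of_nonneg_left h4 hC20.le
          _ = P * Real.exp (-y) := by rw [hPdef]; ring
      · calc |deriv Ai (x' + y + σ')| ≤ C2 * Real.exp (-(x' + y + σ')) :=
            le_trans (le_add_of_nonneg_left (abs_nonneg _)) h3
          _ ≤ C2 * (Real.exp (-(x + σ - 2)) * Real.exp (-y)) :=
            mul_le_mul_of_nonneg_left h4 hC20.le
          _ = P * Real.exp (-y) := by rw [hPdef]; ring
    -- pointwise bounds on the bt factor
    have hG1 : ∀ σ' y : ℝ, |σ' - σ| ≤ 1 → 0 ≤ y →
        |bt Ai lam σ' τ z y| ≤ Q ∧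
        |gfun' Ai lam τ (-z + Cc lam * y + Real.sqrt lam * (Sig lam σ' + τ ^ 2))| ≤ Q := by
      intro σ' y h1 hy
      have h2' := abs_le.mp h1
      have hweq : -z + Cc lam * y + Real.sqrt lam * (Sig lam σ' + τ ^ 2)
          = -z + Real.sqrt lam * (Sig lam σ + τ ^ 2) + Cc lam * y
            + (1 + lam ^ (-(1 : ℝ) / 2)) ^ (-(2 : ℝ) / 3) * (σ' - σ) := by
        simp only [Sig]
        linear_combination ((1 + lam ^ (-(1 : ℝ) / 2)) ^ (-(2 : ℝ) / 3) * (σ' - σ)) * hsl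
      have hCcy : y ≤ Cc lam * y := le_mul_of_one_le_left hy hCc1
      have hwge : -z + Real.sqrt lam * (Sig lam σ + τ ^ 2) - 1 + y
          ≤ -z + Cc lam * y + Real.sqrt lam * (Sig lam σ' + τ ^ 2) := by
        rw [hweq]
        nlinarith [mul_nonneg hK23pos.le (by linarith : (0 : ℝ) ≤ σ' - σ + 1), hK23le1]
      obtain ⟨hg, hg'⟩ := hgb _ (le_trans (by linarith) hwge)
      have hd2 : Real.exp (-(2 * (-z + Cc lam * y + Real.sqrt lam * (Sig lam σ' + τ ^ 2))))
          ≤ Real.exp (-(2 * (-z + Real.sqrt lam * (Sig lam σ + τ ^ 2) - 1))) :=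
        Real.exp_le_exp.2 (by nlinarith)
      refine ⟨hg.trans ?_, hg'.trans ?_⟩
      · rw [hQdef]; exact mul_le_mul_of_nonneg_left hd2 hD10.le
      · rw [hQdef]; exact mul_le_mul_of_nonneg_left hd2 hD10.le
    -- bounds on integrands
    have hbF : ∀ σ' y : ℝ, |σ' - σ| ≤ 1 → 0 ≤ y →
        |Ai (x + y + σ') * bt Ai lam σ' τ z y| ≤ 2 * P * Q * Real.exp (-y) := by
      intro σ' y h1 hy
      obtain ⟨hA, -⟩ := hA1 x σ' y (by simp) h1 hy
      obtain ⟨hB, -⟩ := hG1 σ' y h1 hy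
      rw [abs_mul]
      calc |Ai (x + y + σ')| * |bt Ai lam σ' τ z y| ≤ P * Real.exp (-y) * Q :=
          mul_le_mul hA hB (abs_nonneg _) (by positivity)
        _ ≤ 2 * P * Q * Real.exp (-y) := by
          nlinarith [mul_pos (mul_pos hP0 hQ0) (Real.exp_pos (-y))]
    have hbF'σ : ∀ σ' y : ℝ, |σ' - σ| ≤ 1 → 0 ≤ y →
        |deriv Ai (x + y + σ') * bt Ai lam σ' τ z y +
          Ai (x + y + σ') *
            (gfun' Ai lam τ (-z + Cc lam * y + Real.sqrt lam * (Sig lam σ' + τ ^ 2)) *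
              (1 + lam ^ (-(1 : ℝ) / 2)) ^ (-(2 : ℝ) / 3))| ≤ 2 * P * Q * Real.exp (-y) := by
      intro σ' y h1 hy
      obtain ⟨hA, hA'⟩ := hA1 x σ' y (by simp) h1 hy
      obtain ⟨hB, hB'⟩ := hG1 σ' y h1 hy
      have e1 : |deriv Ai (x + y + σ') * bt Ai lam σ' τ z y| ≤ P * Real.exp (-y) * Q := by
        rw [abs_mul]; exact mul_le_mul hA' hB (abs_nonneg _) (by positivity)
      have e2 : |Ai (x + y + σ') *
          (gfun' Ai lam τ (-z + Cc lam * y + Real.sqrt lam * (Sig lam σ' + τ ^ 2)) *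
            (1 + lam ^ (-(1 : ℝ) / 2)) ^ (-(2 : ℝ) / 3))| ≤ P * Real.exp (-y) * Q := by
        rw [abs_mul, abs_mul]
        have h5 : |gfun' Ai lam τ (-z + Cc lam * y + Real.sqrt lam * (Sig lam σ' + τ ^ 2))| *
            |(1 + lam ^ (-(1 : ℝ) / 2)) ^ (-(2 : ℝ) / 3)| ≤ Q * 1 :=
          mul_le_mul hB' (by rw [abs_of_pos hK23pos]; exact hK23le1) (abs_nonneg _) hQ0.le
        calc |Ai (x + y + σ')| *
            (|gfun' Ai lam τ (-z + Cc lam * y + Real.sqrt lam * (Sig lam σ' + τ ^ 2))| *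
              |(1 + lam ^ (-(1 : ℝ) / 2)) ^ (-(2 : ℝ) / 3)|)
            ≤ P * Real.exp (-y) * (Q * 1) :=
            mul_le_mul hA h5 (by positivity) (by positivity)
          _ = P * Real.exp (-y) * Q := by ring
      calc |deriv Ai (x + y + σ') * bt Ai lam σ' τ z y +
          Ai (x + y + σ') *
            (gfun' Ai lam τ (-z + Cc lam * y + Real.sqrt lam * (Sig lam σ' + τ ^ 2)) *
              (1 + lam ^ (-(1 : ℝ) / 2)) ^ (-(2 : ℝ) / 3))|
          ≤ |deriv Ai (x + y + σ') * bt Ai lam σ' τ z y| +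
            |Ai (x + y + σ') *
              (gfun' Ai lam τ (-z + Cc lam * y + Real.sqrt lam * (Sig lam σ' + τ ^ 2)) *
                (1 + lam ^ (-(1 : ℝ) / 2)) ^ (-(2 : ℝ) / 3))| := abs_add_le _ _
        _ ≤ P * Real.exp (-y) * Q + P * Real.exp (-y) * Q := add_le_add e1 e2
        _ = 2 * P * Q * Real.exp (-y) := by ring
    have hbF'x : ∀ x' y : ℝ, |x' - x| ≤ 1 → 0 ≤ y →
        |deriv Ai (x' + y + σ) * bt Ai lam σ τ z y| ≤ 2 * P * Q * Real.exp (-y) := by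
      intro x' y h1 hy
      obtain ⟨-, hA'⟩ := hA1 x' σ y h1 (by simp) hy
      obtain ⟨hB, -⟩ := hG1 σ y (by simp) hy
      rw [abs_mul]
      calc |deriv Ai (x' + y + σ)| * |bt Ai lam σ τ z y| ≤ P * Real.exp (-y) * Q :=
          mul_le_mul hA' hB (abs_nonneg _) (by positivity)
        _ ≤ 2 * P * Q * Real.exp (-y) := by
          nlinarith [mul_pos (mul_pos hP0 hQ0) (Real.exp_pos (-y))]
    have hbφ' : ∀ y : ℝ, 0 ≤ y →
        |deriv Ai (x + y + σ) * bt Ai lam σ τ z y +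
          Ai (x + y + σ) *
            (gfun' Ai lam τ (-z + Cc lam * y + Real.sqrt lam * (Sig lam σ + τ ^ 2)) *
              Cc lam)| ≤ 2 * P * Q * Cc lam * Real.exp (-y) := by
      intro y hy
      obtain ⟨hA, hA'⟩ := hA1 x σ y (by simp) (by simp) hy
      obtain ⟨hB, hB'⟩ := hG1 σ y (by simp) hy
      have e1 : |deriv Ai (x + y + σ) * bt Ai lam σ τ z y| ≤ P * Real.exp (-y) * Q := by
        rw [abs_mul]; exact mul_le_mul hA' hB (abs_nonneg _) (by positivity)
      have e2 : |Ai (x + y + σ) *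
          (gfun' Ai lam τ (-z + Cc lam * y + Real.sqrt lam * (Sig lam σ + τ ^ 2)) * Cc lam)|
          ≤ P * Real.exp (-y) * (Q * Cc lam) := by
        rw [abs_mul, abs_mul]
        have h5 : |gfun' Ai lam τ (-z + Cc lam * y + Real.sqrt lam * (Sig lam σ + τ ^ 2))| *
            |Cc lam| ≤ Q * Cc lam := by
          rw [abs_of_pos (by linarith : (0 : ℝ) < Cc lam)]
          exact mul_le_mul_of_nonneg_right hB' (by linarith)
        exact mul_le_mul hA h5 (by positivity) (by positivity)
      calc |deriv Ai (x + y + σ) * bt Ai lam σ τ z y +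
          Ai (x + y + σ) *
            (gfun' Ai lam τ (-z + Cc lam * y + Real.sqrt lam * (Sig lam σ + τ ^ 2)) * Cc lam)|
          ≤ |deriv Ai (x + y + σ) * bt Ai lam σ τ z y| +
            |Ai (x + y + σ) *
              (gfun' Ai lam τ (-z + Cc lam * y + Real.sqrt lam * (Sig lam σ + τ ^ 2)) *
                Cc lam)| := abs_add_le _ _
        _ ≤ P * Real.exp (-y) * Q + P * Real.exp (-y) * (Q * Cc lam) := add_le_add e1 e2
        _ ≤ 2 * P * Q * Cc lam * Real.exp (-y) := by
          nlinarith [mul_nonneg (mul_pos (mul_pos hP0 hQ0) (Real.exp_pos (-y))).le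
            (by linarith : (0 : ℝ) ≤ Cc lam - 1)]
    -- integrability from exponential bounds
    have hbase : ∀ c : ℝ, Integrable (fun y => c * Real.exp (-y))
        (volume.restrict (Ioi (0 : ℝ))) := by
      intro c
      have h0 : IntegrableOn (fun y : ℝ => Real.exp (-1 * y)) (Ioi (0 : ℝ)) :=
        exp_neg_integrableOn_Ioi 0 one_pos
      simp only [neg_one_mul] at h0
      exact h0.const_mul c
    have hintFrom : ∀ (f : ℝ → ℝ) (c : ℝ), Continuous f →
        (∀ y : ℝ, 0 < y → |f y| ≤ c * Real.exp (-y)) →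
        Integrable f (volume.restrict (Ioi (0 : ℝ))) := by
      intro f c hf hb
      refine (hbase c).mono hf.aestronglyMeasurable ?_
      refine (ae_restrict_iff' measurableSet_Ioi).2 (Filter.Eventually.of_forall fun y hy => ?_)
      rw [Real.norm_eq_abs, Real.norm_eq_abs]
      exact (hb y hy).trans (le_abs_self _)
    -- differentiation under the integral sign in σ
    have hdom1 := hasDerivAt_integral_of_dominated_loc_of_deriv_le
      (F := fun σ' y => Ai (x + y + σ') * bt Ai lam σ' τ z y)
      (F' := fun σ' y => deriv Ai (x + y + σ') * bt Ai lam σ' τ z y +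
        Ai (x + y + σ') *
          (gfun' Ai lam τ (-z + Cc lam * y + Real.sqrt lam * (Sig lam σ' + τ ^ 2)) *
            (1 + lam ^ (-(1 : ℝ) / 2)) ^ (-(2 : ℝ) / 3)))
      (x₀ := σ) (bound := fun y => 2 * P * Q * Real.exp (-y))
      (μ := volume.restrict (Ioi (0 : ℝ))) (Metric.ball_mem_nhds _ one_pos)
      (Filter.Eventually.of_forall fun σ' =>
        ((hctsAiy σ' x).mul (hbtc σ')).aestronglyMeasurable)
      (hintFrom _ (2 * P * Q) ((hctsAiy σ x).mul (hbtc σ))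
        (fun y hy => hbF σ y (by simp) hy.le))
      (((hctsAiy' σ x).mul (hbtc σ)).add
        ((hctsAiy σ x).mul ((hctsg'y σ).mul continuous_const))).aestronglyMeasurable
      ((ae_restrict_iff' measurableSet_Ioi).2 (Filter.Eventually.of_forall fun y hy σ' hσ' => by
        rw [Real.norm_eq_abs]
        exact hbF'σ σ' y (by rw [Metric.mem_ball, Real.dist_eq] at hσ'; exact hσ'.le) hy.le))
      (hbase (2 * P * Q))
      (Filter.Eventually.of_forall fun y σ' _ => (hAixσ (x + y) σ').mul (hbtσD σ' y))
    obtain ⟨hIσint, hGσ⟩ := hdom1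
    -- differentiation under the integral sign in x
    have hdom2 := hasDerivAt_integral_of_dominated_loc_of_deriv_le
      (F := fun x' y => Ai (x' + y + σ) * bt Ai lam σ τ z y)
      (F' := fun x' y => deriv Ai (x' + y + σ) * bt Ai lam σ τ z y)
      (x₀ := x) (bound := fun y => 2 * P * Q * Real.exp (-y))
      (μ := volume.restrict (Ioi (0 : ℝ))) (Metric.ball_mem_nhds _ one_pos)
      (Filter.Eventually.of_forall fun x' =>
        ((hctsAiy σ x').mul (hbtc σ)).aestronglyMeasurable)
      (hintFrom _ (2 * P * Q) ((hctsAiy σ x).mul (hbtc σ))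
        (fun y hy => hbF σ y (by simp) hy.le))
      (((hctsAiy' σ x).mul (hbtc σ))).aestronglyMeasurable
      ((ae_restrict_iff' measurableSet_Ioi).2 (Filter.Eventually.of_forall fun y hy x' hx' => by
        rw [Real.norm_eq_abs]
        exact hbF'x x' y (by rw [Metric.mem_ball, Real.dist_eq] at hx'; exact hx'.le) hy.le))
      (hbase (2 * P * Q))
      (Filter.Eventually.of_forall fun y x' _ => (hAix2 y σ x').mul_const _)
    obtain ⟨hIxint, hGx⟩ := hdom2
    -- restatements (beta-reduced)
    have hIσint' : Integrable (fun y => deriv Ai (x + y + σ) * bt Ai lam σ τ z y +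
        Ai (x + y + σ) *
          (gfun' Ai lam τ (-z + Cc lam * y + Real.sqrt lam * (Sig lam σ + τ ^ 2)) *
            (1 + lam ^ (-(1 : ℝ) / 2)) ^ (-(2 : ℝ) / 3)))
        (volume.restrict (Ioi (0 : ℝ))) := hIσint
    have hIxint' : Integrable (fun y => deriv Ai (x + y + σ) * bt Ai lam σ τ z y)
        (volume.restrict (Ioi (0 : ℝ))) := hIxint
    have hGσ' : HasDerivAt (fun σ' => ∫ y in Ioi (0 : ℝ), Ai (x + y + σ') * bt Ai lam σ' τ z y)
        (∫ y in Ioi (0 : ℝ), (deriv Ai (x + y + σ) * bt Ai lam σ τ z y +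
          Ai (x + y + σ) *
            (gfun' Ai lam τ (-z + Cc lam * y + Real.sqrt lam * (Sig lam σ + τ ^ 2)) *
              (1 + lam ^ (-(1 : ℝ) / 2)) ^ (-(2 : ℝ) / 3)))) σ := hGσ
    have hGx' : HasDerivAt (fun x' => ∫ y in Ioi (0 : ℝ), Ai (x' + y + σ) * bt Ai lam σ τ z y)
        (∫ y in Ioi (0 : ℝ), deriv Ai (x + y + σ) * bt Ai lam σ τ z y) x := hGx
    -- fundamental theorem of calculus on (0, ∞)
    have hφdiff : ∀ y : ℝ, HasDerivAt (fun y' => Ai (x + y' + σ) * bt Ai lam σ τ z y')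
        (deriv Ai (x + y + σ) * bt Ai lam σ τ z y +
          Ai (x + y + σ) *
            (gfun' Ai lam τ (-z + Cc lam * y + Real.sqrt lam * (Sig lam σ + τ ^ 2)) *
              Cc lam)) y := fun y => (hAix3 x σ y).mul (hbtyD σ y)
    have hφ'int : IntegrableOn (fun y => deriv Ai (x + y + σ) * bt Ai lam σ τ z y +
        Ai (x + y + σ) *
          (gfun' Ai lam τ (-z + Cc lam * y + Real.sqrt lam * (Sig lam σ + τ ^ 2)) * Cc lam))
        (Ioi (0 : ℝ)) :=
      hintFrom _ (2 * P * Q * Cc lam)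
        (((hctsAiy' σ x).mul (hbtc σ)).add
          ((hctsAiy σ x).mul ((hctsg'y σ).mul continuous_const)))
        (fun y hy => hbφ' y hy.le)
    have htend : Filter.Tendsto (fun y => Ai (x + y + σ) * bt Ai lam σ τ z y)
        Filter.atTop (nhds 0) := by
      refine squeeze_zero_norm' (a := fun y => 2 * P * Q * Real.exp (-y)) ?_ ?_
      · filter_upwards [Filter.eventually_ge_atTop (0 : ℝ)] with y hy
        rw [Real.norm_eq_abs]
        exact hbF σ y (by simp) hy
      · simpa using Real.tendsto_exp_neg_atTop_nhds_zero.const_mul (2 * P * Q)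
    have hFTC : (∫ y in Ioi (0 : ℝ), (deriv Ai (x + y + σ) * bt Ai lam σ τ z y +
        Ai (x + y + σ) *
          (gfun' Ai lam τ (-z + Cc lam * y + Real.sqrt lam * (Sig lam σ + τ ^ 2)) * Cc lam)))
        = 0 - Ai (x + 0 + σ) * bt Ai lam σ τ z 0 :=
      integral_Ioi_of_hasDerivAt_of_tendsto
        (((hctsAiy σ x).mul (hbtc σ)).continuousWithinAt) (fun y _ => hφdiff y) hφ'int htend
    -- combining the two integrals
    have hcomb : (1 + lam ^ (-(1 : ℝ) / 2)) *
        (∫ y in Ioi (0 : ℝ), (deriv Ai (x + y + σ) * bt Ai lam σ τ z y +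
          Ai (x + y + σ) *
            (gfun' Ai lam τ (-z + Cc lam * y + Real.sqrt lam * (Sig lam σ + τ ^ 2)) *
              (1 + lam ^ (-(1 : ℝ) / 2)) ^ (-(2 : ℝ) / 3)))) -
        lam ^ (-(1 : ℝ) / 2) * (∫ y in Ioi (0 : ℝ), deriv Ai (x + y + σ) * bt Ai lam σ τ z y)
        = -(Ai (x + σ) * bt Ai lam σ τ z 0) := by
      rw [← integral_const_mul, ← integral_const_mul,
        ← integral_sub (hIσint'.const_mul _) (hIxint'.const_mul _)]
      have hpt : ∀ y : ℝ,
          (1 + lam ^ (-(1 : ℝ) / 2)) * (deriv Ai (x + y + σ) * bt Ai lam σ τ z y +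
            Ai (x + y + σ) *
              (gfun' Ai lam τ (-z + Cc lam * y + Real.sqrt lam * (Sig lam σ + τ ^ 2)) *
                (1 + lam ^ (-(1 : ℝ) / 2)) ^ (-(2 : ℝ) / 3))) -
          lam ^ (-(1 : ℝ) / 2) * (deriv Ai (x + y + σ) * bt Ai lam σ τ z y)
          = deriv Ai (x + y + σ) * bt Ai lam σ τ z y +
            Ai (x + y + σ) *
              (gfun' Ai lam τ (-z + Cc lam * y + Real.sqrt lam * (Sig lam σ + τ ^ 2)) *
                Cc lam) := by
        intro y
        linear_combination (Ai (x + y + σ) *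
          gfun' Ai lam τ (-z + Cc lam * y + Real.sqrt lam * (Sig lam σ + τ ^ 2))) * hkey
      rw [integral_congr_ae (Filter.Eventually.of_forall hpt), hFTC]
      simp
    -- derivatives of AA
    have hAAσ : HasDerivAt (fun σ' => AA Ai lam σ' τ z x)
        (ffun' Ai τ (z + Cc lam * x + Sig lam σ + τ ^ 2) *
          (lam ^ (-(1 : ℝ) / 2) * (1 + lam ^ (-(1 : ℝ) / 2)) ^ (-(2 : ℝ) / 3)) -
        lam ^ ((1 : ℝ) / 6) *
          ∫ y in Ioi (0 : ℝ), (deriv Ai (x + y + σ) * bt Ai lam σ τ z y +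
            Ai (x + y + σ) *
              (gfun' Ai lam τ (-z + Cc lam * y + Real.sqrt lam * (Sig lam σ + τ ^ 2)) *
                (1 + lam ^ (-(1 : ℝ) / 2)) ^ (-(2 : ℝ) / 3)))) σ :=
      (hbbσD σ x).sub (hGσ'.const_mul (lam ^ ((1 : ℝ) / 6)))
    have hAAx : HasDerivAt (fun x' => AA Ai lam σ τ z x')
        (ffun' Ai τ (z + Cc lam * x + Sig lam σ + τ ^ 2) * Cc lam -
        lam ^ ((1 : ℝ) / 6) *
          ∫ y in Ioi (0 : ℝ), deriv Ai (x + y + σ) * bt Ai lam σ τ z y) x :=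
      (hbbxD σ x).sub (hGx'.const_mul (lam ^ ((1 : ℝ) / 6)))
    rw [hAAσ.deriv, hAAx.deriv]
    linear_combination (ffun' Ai τ (z + Cc lam * x + Sig lam σ + τ ^ 2) *
      lam ^ (-(1 : ℝ) / 2)) * hkey - lam ^ ((1 : ℝ) / 6) * hcomb

end
end

section
/- With the notations of the context, define 𝒜_z(x) = b_z(x) − D·∫₀^∞ Ai(x+y+σ)·b̃_z(y) dy for z ∈ ℝ and x ≥ 0. Then: (i) ∂𝒜_z(x)/∂z = C^{−1}·(∂𝒜_z(x)/∂x − D·Ai(x+σ)·b̃_z(0)); (ii) r₂^{−2}·∂²𝒜_z(x)/∂z² + 2τ·∂𝒜_z(x)/∂z = (z + C·x + 2s₂/r₂ − r₂²·τ²)·𝒜_z(x) + C·D·(Ai(x+σ)·(∂b̃_z/∂x)(0) − Ai'(x+σ)·b̃_z(0)). -/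
open Real MeasureTheory Set Filter

lemma AFDE_decay_exp_bound (f : ℝ → ℝ) (hcont : Continuous f)
    (hdec : ∀ a > (0:ℝ), ∃ Ca > (0:ℝ), ∀ u ≥ (0:ℝ), |f u| ≤ Ca * Real.exp (-a * u))
    (α β γ m B : ℝ) (hβ : 0 < β) :
    ∃ c > 0, ∀ w ≤ B, |Real.exp (α * w) * f (β * (-w + γ))| ≤ c * Real.exp (m * w) := by
  set a : ℝ := (|α| + |m| + 1) / β with ha_def
  have ha : 0 < a := by positivity
  obtain ⟨Ca, hCa, hbd⟩ := hdec a ha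
  have haβ : a * β = |α| + |m| + 1 := by rw [ha_def, div_mul_cancel₀ _ hβ.ne']
  obtain ⟨c₂, hc₂⟩ := (isCompact_Icc (a := γ) (b := B)).exists_bound_of_continuousOn
    (f := fun w => Real.exp (α * w) * f (β * (-w + γ)) * Real.exp (-(m * w)))
    (by fun_prop)
  set c₁ : ℝ := Ca * Real.exp (-(a*β)*γ) * Real.exp ((α + a*β - m) * B) with hc₁_def
  refine ⟨max c₁ c₂ + 1, by positivity, fun w hw => ?_⟩
  have hepos := Real.exp_pos (m * w)
  rw [← mul_inv_le_iff₀ hepos, ← Real.exp_neg]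
  rcases le_or_gt w γ with hwγ | hwγ
  · have hu : 0 ≤ β * (-w + γ) := by nlinarith
    have h1 : |f (β * (-w + γ))| ≤ Ca * Real.exp (-a * (β * (-w + γ))) := hbd _ hu
    have hrw : Real.exp (α * w) * (Ca * Real.exp (-a * (β * (-w + γ)))) * Real.exp (-(m*w))
        = Ca * Real.exp ((α + a*β - m) * w + -(a*β)*γ) := by
      rw [mul_comm (Real.exp (α*w)), mul_assoc, mul_assoc, ← Real.exp_add, ← Real.exp_add]
      congr 2; ring
    have step1 : |Real.exp (α * w) * f (β * (-w + γ))| * Real.exp (-(m*w))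
        ≤ Ca * Real.exp ((α + a*β - m) * w + -(a*β)*γ) := by
      rw [← hrw, abs_mul, abs_of_nonneg (Real.exp_pos _).le]
      gcongr
    have hpos : (0:ℝ) < α + a*β - m := by
      rw [haβ]
      have h3 := le_abs_self m; have h4 := neg_abs_le α; linarith
    have step2 : Real.exp ((α + a*β - m) * w + -(a*β)*γ)
        ≤ Real.exp ((α + a*β - m) * B + -(a*β)*γ) := by
      apply Real.exp_le_exp.mpr; nlinarith
    have hc₁eq : c₁ = Ca * Real.exp ((α + a*β - m) * B + -(a*β)*γ) := by
      rw [hc₁_def, mul_assoc, ← Real.exp_add]; congr 2; ring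
    have : |Real.exp (α * w) * f (β * (-w + γ))| * Real.exp (-(m*w)) ≤ c₁ := by
      rw [hc₁eq]; exact step1.trans (by gcongr)
    have := le_max_left c₁ c₂; linarith
  · have := hc₂ w ⟨hwγ.le, hw⟩
    rw [Real.norm_eq_abs, abs_mul, abs_of_nonneg (Real.exp_pos (-(m*w))).le] at this
    have h5 := le_max_right c₁ c₂; linarith

/-- If `f` decays superexponentially, so does `u ↦ u * f u`. -/
lemma AFDE_decay_mul (f : ℝ → ℝ)
    (hdec : ∀ a > (0:ℝ), ∃ Ca > (0:ℝ), ∀ u ≥ (0:ℝ), |f u| ≤ Ca * Real.exp (-a * u)) :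
    ∀ a > (0:ℝ), ∃ Ca > (0:ℝ), ∀ u ≥ (0:ℝ), |u * f u| ≤ Ca * Real.exp (-a * u) := by
  intro a ha
  obtain ⟨Ca, hCa, hbd⟩ := hdec (a+1) (by linarith)
  refine ⟨Ca, hCa, fun u hu => ?_⟩
  have h1 : |u * f u| = u * |f u| := by rw [abs_mul, abs_of_nonneg hu]
  have h2 : u * |f u| ≤ u * (Ca * Real.exp (-(a+1) * u)) := by
    apply mul_le_mul_of_nonneg_left (hbd u hu) hu
  have h3 : u * Real.exp (-(a+1)*u) ≤ Real.exp (-a * u) := by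
    have h4 : u ≤ Real.exp u := (Real.add_one_le_exp u).trans' (by linarith)
    calc u * Real.exp (-(a+1)*u) ≤ Real.exp u * Real.exp (-(a+1)*u) := by
          apply mul_le_mul_of_nonneg_right h4 (Real.exp_pos _).le
      _ = Real.exp (-a * u) := by rw [← Real.exp_add]; congr 1; ring
  calc |u * f u| = u * |f u| := h1
    _ ≤ u * (Ca * Real.exp (-(a+1) * u)) := h2
    _ = Ca * (u * Real.exp (-(a+1)*u)) := by ring
    _ ≤ Ca * Real.exp (-a * u) := by apply mul_le_mul_of_nonneg_left h3 hCa.le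

lemma AFDE_integrableOn_of_exp_bound (F : ℝ → ℝ) (hF : Continuous F) {c b : ℝ} (hb : 0 < b)
    (h : ∀ y > (0:ℝ), |F y| ≤ c * Real.exp (-b * y)) :
    IntegrableOn F (Ioi (0:ℝ)) := by
  apply Integrable.mono' ((exp_neg_integrableOn_Ioi 0 hb).const_mul c)
    hF.aestronglyMeasurable
  rw [ae_restrict_iff' measurableSet_Ioi]
  exact ae_of_all _ fun y hy => h y hy

lemma AFDE_tendsto_zero (F : ℝ → ℝ) {c b : ℝ} (hb : 0 < b)
    (h : ∀ y > (0:ℝ), |F y| ≤ c * Real.exp (-b * y)) :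
    Tendsto F atTop (nhds 0) := by
  have hev : ∀ᶠ y in atTop, ‖F y‖ ≤ c * Real.exp (-b * y) := by
    filter_upwards [eventually_gt_atTop 0] with y hy using h y hy
  have hmul : Tendsto (fun y : ℝ => -b * y) atTop atBot := by
    apply Tendsto.const_mul_atTop_of_neg (neg_neg_iff_pos.mpr hb) tendsto_id
  have hlim : Tendsto (fun y : ℝ => c * Real.exp (-b * y)) atTop (nhds 0) := by
    simpa using (Real.tendsto_exp_atBot.comp hmul).const_mul c
  exact squeeze_zero_norm' hev hlim

lemma AFDE_ibp_Ioi (φ ψ φ' ψ' : ℝ → ℝ)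
    (hφ : ∀ t, HasDerivAt φ (φ' t) t) (hψ : ∀ t, HasDerivAt ψ (ψ' t) t)
    (h1 : IntegrableOn (fun y => φ' y * ψ y) (Ioi (0:ℝ)))
    (h2 : IntegrableOn (fun y => φ y * ψ' y) (Ioi (0:ℝ)))
    (hlim : Tendsto (fun y => φ y * ψ y) atTop (nhds 0)) :
    ∫ y in Ioi (0:ℝ), (φ' y * ψ y + φ y * ψ' y) = -(φ 0 * ψ 0) := by
  have := MeasureTheory.integral_Ioi_of_hasDerivAt_of_tendsto
    (f := fun y => φ y * ψ y) (f' := fun y => φ' y * ψ y + φ y * ψ' y) (a := 0) (m := 0)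
    (((hφ 0).continuousAt.mul (hψ 0).continuousAt).continuousWithinAt)
    (fun t _ => by exact ((hφ t).mul (hψ t)).congr_deriv (by ring))
    (h1.add h2) hlim
  rw [this]; ring

lemma AFDE_param_deriv (φ : ℝ → ℝ → ℝ) (φ' : ℝ → ℝ → ℝ) (p₀ : ℝ) (bound : ℝ → ℝ)
    (hmeas : ∀ p, AEStronglyMeasurable (φ p) (volume.restrict (Ioi (0:ℝ))))
    (hint : IntegrableOn (φ p₀) (Ioi (0:ℝ)))
    (h'meas : AEStronglyMeasurable (φ' p₀) (volume.restrict (Ioi (0:ℝ))))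
    (hbound : ∀ y ∈ Ioi (0:ℝ), ∀ p ∈ Metric.ball p₀ 1, |φ' p y| ≤ bound y)
    (hbi : IntegrableOn bound (Ioi (0:ℝ)))
    (hdiff : ∀ y ∈ Ioi (0:ℝ), ∀ p ∈ Metric.ball p₀ 1, HasDerivAt (fun q => φ q y) (φ' p y) p) :
    HasDerivAt (fun p => ∫ y in Ioi (0:ℝ), φ p y) (∫ y in Ioi (0:ℝ), φ' p₀ y) p₀ := by
  exact (hasDerivAt_integral_of_dominated_loc_of_deriv_le (Metric.ball_mem_nhds p₀ one_pos)
    (Eventually.of_forall fun p => hmeas p) hint h'meas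
    ((ae_restrict_iff' measurableSet_Ioi).mpr (ae_of_all _ hbound))
    hbi
    ((ae_restrict_iff' measurableSet_Ioi).mpr (ae_of_all _ hdiff))).2

lemma AFDE_bounded_Ici (f : ℝ → ℝ) (hc : Continuous f)
    (hd : ∀ a > (0:ℝ), ∃ Ca > (0:ℝ), ∀ u ≥ (0:ℝ), |f u| ≤ Ca * Real.exp (-a * u)) (t₀ : ℝ) :
    ∃ M > 0, ∀ t ≥ t₀, |f t| ≤ M := by
  obtain ⟨c, hc0, hb⟩ := AFDE_decay_exp_bound f hc hd 0 1 0 0 (-t₀) one_pos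
  refine ⟨c, hc0, fun t ht => ?_⟩
  have := hb (-t) (by linarith)
  simpa using this

lemma AFDE_decay_comb (f1 f2 : ℝ → ℝ) (c1 c2 c3 : ℝ)
    (h1 : ∀ a > (0:ℝ), ∃ Ca > (0:ℝ), ∀ u ≥ (0:ℝ), |f1 u| ≤ Ca * Real.exp (-a * u))
    (h2 : ∀ a > (0:ℝ), ∃ Ca > (0:ℝ), ∀ u ≥ (0:ℝ), |f2 u| ≤ Ca * Real.exp (-a * u)) :
    ∀ a > (0:ℝ), ∃ Ca > (0:ℝ), ∀ u ≥ (0:ℝ),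
      |c1 * f1 u + c2 * f2 u + c3 * (u * f1 u)| ≤ Ca * Real.exp (-a * u) := by
  intro a ha
  obtain ⟨C1, hC1, hb1⟩ := h1 a ha
  obtain ⟨C2, hC2, hb2⟩ := h2 a ha
  obtain ⟨C3, hC3, hb3⟩ := AFDE_decay_mul f1 h1 a ha
  refine ⟨|c1| *C1 + |c2| *C2 + |c3| *C3 + 1, by positivity, fun u hu => ?_⟩
  have e := Real.exp_pos (-a*u)
  calc |c1 * f1 u + c2 * f2 u + c3 * (u * f1 u)|
      ≤ |c1 * f1 u| + |c2 * f2 u| + |c3 * (u * f1 u)| := abs_add_three _ _ _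
    _ = |c1| *|f1 u| + |c2| *|f2 u| + |c3| *|u * f1 u| := by rw [abs_mul, abs_mul, abs_mul]
    _ ≤ |c1| *(C1 * Real.exp (-a*u)) + |c2| *(C2 * Real.exp (-a*u)) + |c3| *(C3 * Real.exp (-a*u)) := by
        gcongr
        · exact hb1 u hu
        · exact hb2 u hu
        · exact hb3 u hu
    _ ≤ (|c1| *C1 + |c2| *C2 + |c3| *C3 + 1) * Real.exp (-a*u) := by nlinarith

set_option maxHeartbeats 1000000 in
/-- **Differential equations for `𝒜_z(x) = b_z(x) - D ∫₀^∞ Ai(x+y+σ) b̃_z(y) dy`**: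
(i) `∂_z 𝒜 = C⁻¹ (∂_x 𝒜 - D Ai(x+σ) b̃_z(0))`;
(ii) `r₂⁻² ∂²_z 𝒜 + 2τ ∂_z 𝒜 = (z + Cx + 2s₂/r₂ - r₂²τ²) 𝒜
      + C D (Ai(x+σ) (∂_x b̃_z)(0) - Ai'(x+σ) b̃_z(0))`. -/
theorem A_function_differential_equations
    (Ai : ℝ → ℝ) (hAi : ContDiff ℝ 2 Ai)
    (hAieq : ∀ x : ℝ, deriv (deriv Ai) x = x * Ai x)
    (hAidecay : ∀ a > (0 : ℝ), ∃ Ca > (0 : ℝ), ∀ x ≥ (0 : ℝ),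
      |Ai x| + |deriv Ai x| ≤ Ca * Real.exp (-a * x))
    (r₁ r₂ : ℝ) (hr₁ : 0 < r₁) (hr₂ : 0 < r₂) (s₁ s₂ τ : ℝ)
    (C D σ : ℝ)
    (hC : C = ((r₁ ^ 2)⁻¹ + (r₂ ^ 2)⁻¹) ^ ((1 : ℝ) / 3))
    (hD : D = Real.sqrt (r₁ / r₂) *
      Real.exp ((r₁ ^ 4 - r₂ ^ 4) * τ ^ 3 / 3 + 2 * (r₂ * s₂ - r₁ * s₁) * τ))
    (hσ : σ = C⁻¹ * (2 * (s₁ / r₁ + s₂ / r₂) - (r₁ ^ 2 + r₂ ^ 2) * τ ^ 2))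
    (b bt : ℝ → ℝ → ℝ)
    (hb : ∀ z x, b z x = Real.sqrt (2 * π) * r₂ ^ ((1 : ℝ) / 6) *
      Real.exp (-(r₂ ^ 2) * τ * (z + C * x)) *
      Ai (r₂ ^ ((2 : ℝ) / 3) * (z + C * x + 2 * s₂ / r₂)))
    (hbt : ∀ z x, bt z x = Real.sqrt (2 * π) * r₁ ^ ((1 : ℝ) / 6) *
      Real.exp (r₁ ^ 2 * τ * (z - C * x)) *
      Ai (r₁ ^ ((2 : ℝ) / 3) * (-z + C * x + 2 * s₁ / r₁)))
    (A : ℝ → ℝ → ℝ)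
    (hA : ∀ z x, A z x = b z x - D * ∫ y in Ioi (0 : ℝ), Ai (x + y + σ) * bt z y) :
    (∀ z : ℝ, ∀ x ≥ (0 : ℝ),
      deriv (fun z' => A z' x) z
        = C⁻¹ * (deriv (fun x' => A z x') x - D * Ai (x + σ) * bt z 0))
    ∧ (∀ z : ℝ, ∀ x ≥ (0 : ℝ),
      (r₂ ^ 2)⁻¹ * deriv (deriv (fun z' => A z' x)) z + 2 * τ * deriv (fun z' => A z' x) z
        = (z + C * x + 2 * s₂ / r₂ - r₂ ^ 2 * τ ^ 2) * A z x
          + C * D * (Ai (x + σ) * deriv (fun x' => bt z x') 0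
              - deriv Ai (x + σ) * bt z 0)) := by
  -- ### basic facts about Ai
  have hAiD : Differentiable ℝ Ai := hAi.differentiable (by norm_num)
  have hAi'D : Differentiable ℝ (deriv Ai) := by
    have h2 : ContDiff ℝ ((1 : WithTop ℕ∞) + 1) Ai := by norm_num at hAi ⊢; exact hAi
    exact ((contDiff_succ_iff_deriv.mp h2).2.2).differentiable one_ne_zero
  have hAic : Continuous Ai := hAiD.continuous
  have hAi'c : Continuous (deriv Ai) := hAi'D.continuous
  have hAiHD : ∀ t : ℝ, HasDerivAt Ai (deriv Ai t) t := fun t => (hAiD t).hasDerivAt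
  have hAi'HD : ∀ t : ℝ, HasDerivAt (deriv Ai) (t * Ai t) t := fun t => by
    have h := (hAi'D t).hasDerivAt; rwa [hAieq t] at h
  have hdecAi : ∀ a > (0:ℝ), ∃ Ca > (0:ℝ), ∀ u ≥ (0:ℝ), |Ai u| ≤ Ca * Real.exp (-a*u) := by
    intro a ha; obtain ⟨Ca, h1, h2⟩ := hAidecay a ha
    exact ⟨Ca, h1, fun u hu => (le_add_of_nonneg_right (abs_nonneg _)).trans (h2 u hu)⟩
  have hdecAi' : ∀ a > (0:ℝ), ∃ Ca > (0:ℝ), ∀ u ≥ (0:ℝ), |deriv Ai u| ≤ Ca * Real.exp (-a*u) := by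
    intro a ha; obtain ⟨Ca, h1, h2⟩ := hAidecay a ha
    exact ⟨Ca, h1, fun u hu => (le_add_of_nonneg_left (abs_nonneg _)).trans (h2 u hu)⟩
  have hAimc : Continuous (fun u : ℝ => u * Ai u) := continuous_id.mul hAic
  have hAiB := AFDE_bounded_Ici Ai hAic hdecAi
  have hAi'B := AFDE_bounded_Ici (deriv Ai) hAi'c hdecAi'
  have hAimB := AFDE_bounded_Ici (fun u => u * Ai u) hAimc (AFDE_decay_mul Ai hdecAi)
  -- ### facts about C
  have hC0 : 0 < C := by rw [hC]; positivity
  have hXpos : (0:ℝ) < (r₁^2)⁻¹ + (r₂^2)⁻¹ := by positivity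
  have hC3 : C^(3:ℕ) = (r₁^2)⁻¹ + (r₂^2)⁻¹ := by
    rw [hC, ← Real.rpow_natCast (((r₁ ^ 2)⁻¹ + (r₂ ^ 2)⁻¹) ^ ((1:ℝ)/3)) 3,
      ← Real.rpow_mul hXpos.le]; norm_num
  -- ### local functions
  set K1 : ℝ := Real.sqrt (2*π) * r₁ ^ ((1:ℝ)/6) with hK1
  set a1 : ℝ := r₁^2 * τ with ha1
  set b1 : ℝ := r₁ ^ ((2:ℝ)/3) with hb1
  set d1 : ℝ := 2*s₁/r₁ with hd1
  have hb1pos : 0 < b1 := by rw [hb1]; positivity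
  have hb13 : b1^(3:ℕ) = r₁^2 := by
    rw [hb1, ← Real.rpow_natCast (r₁ ^ ((2:ℝ)/3)) 3, ← Real.rpow_mul hr₁.le]; norm_num
  set K2 : ℝ := Real.sqrt (2*π) * r₂ ^ ((1:ℝ)/6) with hK2
  set a2 : ℝ := r₂^2 * τ with ha2
  set b2 : ℝ := r₂ ^ ((2:ℝ)/3) with hb2
  have hb2pos : 0 < b2 := by rw [hb2]; positivity
  have hb23 : b2^(3:ℕ) = r₂^2 := by
    rw [hb2, ← Real.rpow_natCast (r₂ ^ ((2:ℝ)/3)) 3, ← Real.rpow_mul hr₂.le]; norm_num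
  set gg : ℝ → ℝ := fun w => K1 * Real.exp (a1*w) * Ai (b1*(-w+d1)) with hgg_def
  set gg1 : ℝ → ℝ := fun w => K1 * Real.exp (a1*w) *
    (a1 * Ai (b1*(-w+d1)) - b1 * deriv Ai (b1*(-w+d1))) with hgg1_def
  set gg2 : ℝ → ℝ := fun w => K1 * Real.exp (a1*w) *
    (a1^2 * Ai (b1*(-w+d1)) - 2*a1*b1 * deriv Ai (b1*(-w+d1))
      + b1^2 * ((b1*(-w+d1)) * Ai (b1*(-w+d1)))) with hgg2_def
  set hh : ℝ → ℝ := fun v => K2 * Real.exp (-(a2*v)) * Ai (b2*(v+2*s₂/r₂)) with hhh_def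
  set hh1 : ℝ → ℝ := fun v => K2 * Real.exp (-(a2*v)) *
    (-(a2 * Ai (b2*(v+2*s₂/r₂))) + b2 * deriv Ai (b2*(v+2*s₂/r₂))) with hhh1_def
  set hh2 : ℝ → ℝ := fun v => K2 * Real.exp (-(a2*v)) *
    (a2^2 * Ai (b2*(v+2*s₂/r₂)) - 2*a2*b2 * deriv Ai (b2*(v+2*s₂/r₂))
      + b2^2 * ((b2*(v+2*s₂/r₂)) * Ai (b2*(v+2*s₂/r₂)))) with hhh2_def
  have hggc : Continuous gg := by rw [hgg_def]; fun_prop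
  have hgg1c : Continuous gg1 := by rw [hgg1_def]; fun_prop
  have hgg2c : Continuous gg2 := by rw [hgg2_def]; fun_prop
  -- ### correspondences
  have hbt_gg : ∀ z y : ℝ, bt z y = gg (z - C*y) := by
    intro z y
    rw [hbt, hgg_def]
    simp only [hK1, ha1, hb1, hd1]
    have e2 : r₁ ^ ((2:ℝ)/3) * (-(z - C*y) + 2*s₁/r₁)
        = r₁ ^ ((2:ℝ)/3) * (-z + C*y + 2*s₁/r₁) := by ring
    rw [e2]
  have hb_hh : ∀ z x : ℝ, b z x = hh (z + C*x) := by
    intro z x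
    rw [hb, hhh_def]
    simp only [hK2, ha2, hb2]
    have e1 : -(r₂^2) * τ * (z + C*x) = -(r₂^2 * τ * (z + C*x)) := by ring
    rw [e1]
  -- ### derivatives of the local functions
  have hggHD : ∀ w : ℝ, HasDerivAt gg (gg1 w) w := by
    intro w
    have he : HasDerivAt (fun w : ℝ => Real.exp (a1*w)) (Real.exp (a1*w) * (a1*1)) w :=
      ((hasDerivAt_id w).const_mul a1).exp
    have hinner : HasDerivAt (fun w : ℝ => b1*(-w+d1)) (b1 * (-1)) w := by
      exact (((hasDerivAt_id w).neg.add_const d1).const_mul b1)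
    have hAiw : HasDerivAt (fun w : ℝ => Ai (b1*(-w+d1)))
        (deriv Ai (b1*(-w+d1)) * (b1 * (-1))) w := (hAiHD _).comp w hinner
    have h := (he.const_mul K1).mul hAiw
    rw [hgg_def]
    refine h.congr_deriv ?_
    rw [hgg1_def]; ring
  have hgg1HD : ∀ w : ℝ, HasDerivAt gg1 (gg2 w) w := by
    intro w
    have he : HasDerivAt (fun w : ℝ => Real.exp (a1*w)) (Real.exp (a1*w) * (a1*1)) w :=
      ((hasDerivAt_id w).const_mul a1).exp
    have hinner : HasDerivAt (fun w : ℝ => b1*(-w+d1)) (b1 * (-1)) w := by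
      exact (((hasDerivAt_id w).neg.add_const d1).const_mul b1)
    have hAiw : HasDerivAt (fun w : ℝ => Ai (b1*(-w+d1)))
        (deriv Ai (b1*(-w+d1)) * (b1 * (-1))) w := (hAiHD _).comp w hinner
    have hAi'w : HasDerivAt (fun w : ℝ => deriv Ai (b1*(-w+d1)))
        ((b1*(-w+d1)) * Ai (b1*(-w+d1)) * (b1 * (-1))) w := (hAi'HD _).comp w hinner
    have h := (he.const_mul K1).mul ((hAiw.const_mul a1).sub (hAi'w.const_mul b1))
    rw [hgg1_def]
    refine h.congr_deriv ?_
    rw [hgg2_def]; simp only [Pi.sub_apply]; ring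
  have hhhHD : ∀ v : ℝ, HasDerivAt hh (hh1 v) v := by
    intro v
    have he : HasDerivAt (fun v : ℝ => Real.exp (-(a2*v))) (Real.exp (-(a2*v)) * (-(a2*1))) v :=
      ((hasDerivAt_id v).const_mul a2).neg.exp
    have hinner : HasDerivAt (fun v : ℝ => b2*(v+2*s₂/r₂)) (b2 * 1) v :=
      ((hasDerivAt_id v).add_const (2*s₂/r₂)).const_mul b2
    have hAiw : HasDerivAt (fun v : ℝ => Ai (b2*(v+2*s₂/r₂)))
        (deriv Ai (b2*(v+2*s₂/r₂)) * (b2 * 1)) v := (hAiHD _).comp v hinner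
    have h := (he.const_mul K2).mul hAiw
    rw [hhh_def]
    refine h.congr_deriv ?_
    rw [hhh1_def]; ring
  have hhh1HD : ∀ v : ℝ, HasDerivAt hh1 (hh2 v) v := by
    intro v
    have he : HasDerivAt (fun v : ℝ => Real.exp (-(a2*v))) (Real.exp (-(a2*v)) * (-(a2*1))) v :=
      ((hasDerivAt_id v).const_mul a2).neg.exp
    have hinner : HasDerivAt (fun v : ℝ => b2*(v+2*s₂/r₂)) (b2 * 1) v :=
      ((hasDerivAt_id v).add_const (2*s₂/r₂)).const_mul b2
    have hAiw : HasDerivAt (fun v : ℝ => Ai (b2*(v+2*s₂/r₂)))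
        (deriv Ai (b2*(v+2*s₂/r₂)) * (b2 * 1)) v := (hAiHD _).comp v hinner
    have hAi'w : HasDerivAt (fun v : ℝ => deriv Ai (b2*(v+2*s₂/r₂)))
        ((b2*(v+2*s₂/r₂)) * Ai (b2*(v+2*s₂/r₂)) * (b2 * 1)) v := (hAi'HD _).comp v hinner
    have h := (he.const_mul K2).mul (((hAiw.const_mul a2).neg).add (hAi'w.const_mul b2))
    rw [hhh1_def]
    refine h.congr_deriv ?_
    rw [hhh2_def]; simp only [Pi.add_apply, Pi.neg_apply]; ring
  -- ### ODE identities
  have hgg2_ode : ∀ w : ℝ, gg2 w = r₁^2*(-w+d1-r₁^2*τ^2) * gg w + 2*r₁^2*τ * gg1 w := by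
    intro w
    rw [hgg2_def, hgg_def, hgg1_def]
    simp only [ha1]
    linear_combination (K1 * Real.exp (r₁^2*τ*w) * (-w+d1) * Ai (b1*(-w+d1))) * hb13
  have hhh2_ode : ∀ v : ℝ, (r₂^2)⁻¹ * hh2 v + 2*τ*hh1 v = (v + 2*s₂/r₂ - r₂^2*τ^2) * hh v := by
    intro v
    have h' : hh2 v = r₂^2*(v + 2*s₂/r₂ - r₂^2*τ^2) * hh v - 2*r₂^2*τ * hh1 v := by
      rw [hhh2_def, hhh1_def, hhh_def]
      simp only [ha2]
      linear_combination (K2 * Real.exp (-(r₂^2*τ*v)) * (v+2*s₂/r₂) * Ai (b2*(v+2*s₂/r₂))) * hb23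
    have hr₂2 : (r₂:ℝ)^2 ≠ 0 := by positivity
    rw [h']
    field_simp
    ring
  -- ### exponential bound families for gg, gg1, gg2
  have hggB : ∀ B : ℝ, ∃ c > 0, ∀ w ≤ B, |gg w| ≤ c * Real.exp w := by
    intro B
    have hcomb := AFDE_decay_comb Ai (deriv Ai) K1 0 0 hdecAi hdecAi'
    obtain ⟨c, hc, hbnd⟩ := AFDE_decay_exp_bound
      (fun u => K1 * Ai u + 0 * deriv Ai u + 0 * (u * Ai u)) (by fun_prop) hcomb
      a1 b1 d1 1 B hb1pos
    refine ⟨c, hc, fun w hw => ?_⟩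
    have h := hbnd w hw
    simp only [one_mul] at h
    calc |gg w| = |Real.exp (a1*w) * (K1 * Ai (b1*(-w+d1)) + 0 * deriv Ai (b1*(-w+d1))
          + 0 * ((b1*(-w+d1)) * Ai (b1*(-w+d1))))| := by rw [hgg_def]; ring_nf
      _ ≤ c * Real.exp w := h
  have hgg1B : ∀ B : ℝ, ∃ c > 0, ∀ w ≤ B, |gg1 w| ≤ c * Real.exp w := by
    intro B
    have hcomb := AFDE_decay_comb Ai (deriv Ai) (K1*a1) (-(K1*b1)) 0 hdecAi hdecAi'
    obtain ⟨c, hc, hbnd⟩ := AFDE_decay_exp_bound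
      (fun u => K1*a1 * Ai u + (-(K1*b1)) * deriv Ai u + 0 * (u * Ai u)) (by fun_prop) hcomb
      a1 b1 d1 1 B hb1pos
    refine ⟨c, hc, fun w hw => ?_⟩
    have h := hbnd w hw
    simp only [one_mul] at h
    calc |gg1 w| = |Real.exp (a1*w) * (K1*a1 * Ai (b1*(-w+d1))
          + (-(K1*b1)) * deriv Ai (b1*(-w+d1))
          + 0 * ((b1*(-w+d1)) * Ai (b1*(-w+d1))))| := by rw [hgg1_def]; ring_nf
      _ ≤ c * Real.exp w := h
  have hgg2B : ∀ B : ℝ, ∃ c > 0, ∀ w ≤ B, |gg2 w| ≤ c * Real.exp w := by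
    intro B
    have hcomb := AFDE_decay_comb Ai (deriv Ai) (K1*a1^2) (-(2*K1*a1*b1)) (K1*b1^2) hdecAi hdecAi'
    obtain ⟨c, hc, hbnd⟩ := AFDE_decay_exp_bound
      (fun u => K1*a1^2 * Ai u + (-(2*K1*a1*b1)) * deriv Ai u + K1*b1^2 * (u * Ai u))
      (by fun_prop) hcomb a1 b1 d1 1 B hb1pos
    refine ⟨c, hc, fun w hw => ?_⟩
    have h := hbnd w hw
    simp only [one_mul] at h
    calc |gg2 w| = |Real.exp (a1*w) * (K1*a1^2 * Ai (b1*(-w+d1))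
          + (-(2*K1*a1*b1)) * deriv Ai (b1*(-w+d1))
          + K1*b1^2 * ((b1*(-w+d1)) * Ai (b1*(-w+d1))))| := by rw [hgg2_def]; ring_nf
      _ ≤ c * Real.exp w := h
  -- ### uniform bound for products
  have hBnd : ∀ z x : ℝ, ∀ (FA G : ℝ → ℝ),
      (∀ t₀ : ℝ, ∃ M > 0, ∀ t ≥ t₀, |FA t| ≤ M) →
      (∀ B : ℝ, ∃ c > 0, ∀ w ≤ B, |G w| ≤ c * Real.exp w) →
      ∃ K > 0, ∀ y > (0:ℝ), |FA (x+y+σ) * G (z - C*y)| ≤ K * Real.exp (-C*y) := by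
    intro z x FA G hFA hG
    obtain ⟨M, hM, hMb⟩ := hFA (x+σ)
    obtain ⟨c, hc, hcb⟩ := hG z
    refine ⟨M*c*Real.exp z, by positivity, fun y hy => ?_⟩
    have hCy : 0 < C*y := mul_pos hC0 hy
    have h1 : |FA (x+y+σ)| ≤ M := hMb _ (by linarith)
    have h2 : |G (z - C*y)| ≤ c * Real.exp (z - C*y) := hcb _ (by linarith)
    have h3 : Real.exp (z - C*y) ≤ Real.exp z * Real.exp (-C*y) := by
      rw [← Real.exp_add]; exact Real.exp_le_exp.mpr (by linarith)
    calc |FA (x+y+σ) * G (z - C*y)| = |FA (x+y+σ)| * |G (z - C*y)| := abs_mul _ _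
      _ ≤ M * (c * (Real.exp z * Real.exp (-C*y))) :=
          mul_le_mul h1 (h2.trans (mul_le_mul_of_nonneg_left h3 hc.le)) (abs_nonneg _) hM.le
      _ = M*c*Real.exp z * Real.exp (-C*y) := by ring
  -- ### integrability of products
  have hIntG : ∀ z x : ℝ, ∀ (FA G : ℝ → ℝ), Continuous FA → Continuous G →
      (∀ t₀ : ℝ, ∃ M > 0, ∀ t ≥ t₀, |FA t| ≤ M) →
      (∀ B : ℝ, ∃ c > 0, ∀ w ≤ B, |G w| ≤ c * Real.exp w) →
      IntegrableOn (fun y => FA (x+y+σ) * G (z - C*y)) (Ioi (0:ℝ)) := by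
    intro z x FA G hFAc hGc hFA hG
    obtain ⟨K, hK, hKb⟩ := hBnd z x FA G hFA hG
    exact AFDE_integrableOn_of_exp_bound _
      ((hFAc.comp (by fun_prop)).mul (hGc.comp (by fun_prop))) hC0 hKb
  have hTendG : ∀ z x : ℝ, ∀ (FA G : ℝ → ℝ),
      (∀ t₀ : ℝ, ∃ M > 0, ∀ t ≥ t₀, |FA t| ≤ M) →
      (∀ B : ℝ, ∃ c > 0, ∀ w ≤ B, |G w| ≤ c * Real.exp w) →
      Filter.Tendsto (fun y => FA (x+y+σ) * G (z - C*y)) Filter.atTop (nhds 0) := by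
    intro z x FA G hFA hG
    obtain ⟨K, hK, hKb⟩ := hBnd z x FA G hFA hG
    exact AFDE_tendsto_zero _ hC0 hKb
  -- ### integration by parts
  have hIBP : ∀ z x : ℝ, ∀ (FA FA' G G' : ℝ → ℝ),
      Continuous FA → Continuous FA' → Continuous G → Continuous G' →
      (∀ t : ℝ, HasDerivAt FA (FA' t) t) → (∀ w : ℝ, HasDerivAt G (G' w) w) →
      (∀ t₀ : ℝ, ∃ M > 0, ∀ t ≥ t₀, |FA t| ≤ M) →
      (∀ t₀ : ℝ, ∃ M > 0, ∀ t ≥ t₀, |FA' t| ≤ M) →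
      (∀ B : ℝ, ∃ c > 0, ∀ w ≤ B, |G w| ≤ c * Real.exp w) →
      (∀ B : ℝ, ∃ c > 0, ∀ w ≤ B, |G' w| ≤ c * Real.exp w) →
      (∫ y in Ioi (0:ℝ), FA' (x+y+σ) * G (z - C*y))
        - C * ∫ y in Ioi (0:ℝ), FA (x+y+σ) * G' (z - C*y) = -(FA (x+σ) * G z) := by
    intro z x FA FA' G G' hFAc hFA'c hGc hG'c hFAd hGd hFAB hFA'B hGB hG'B
    have hφ : ∀ y : ℝ, HasDerivAt (fun y => FA (x+y+σ)) (FA' (x+y+σ)) y := by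
      intro y
      have hi : HasDerivAt (fun y : ℝ => x+y+σ) 1 y := by
        simpa using ((hasDerivAt_id y).const_add x).add_const σ
      exact ((hFAd (x+y+σ)).comp y hi).congr_deriv (by simp)
    have hψ : ∀ y : ℝ, HasDerivAt (fun y => G (z - C*y)) (-C * G' (z - C*y)) y := by
      intro y
      have hi : HasDerivAt (fun y : ℝ => z - C*y) (-(C*1)) y :=
        ((hasDerivAt_id y).const_mul C).const_sub z
      have h := (hGd (z - C*y)).comp y hi
      refine h.congr_deriv ?_; ring
    have h1 : IntegrableOn (fun y => FA' (x+y+σ) * G (z - C*y)) (Ioi (0:ℝ)) :=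
      hIntG z x FA' G hFA'c hGc hFA'B hGB
    have h2' : IntegrableOn (fun y => FA (x+y+σ) * G' (z - C*y)) (Ioi (0:ℝ)) :=
      hIntG z x FA G' hFAc hG'c hFAB hG'B
    have h2 : IntegrableOn (fun y => FA (x+y+σ) * (-C * G' (z - C*y))) (Ioi (0:ℝ)) := by
      have heq : (fun y => FA (x+y+σ) * (-C * G' (z - C*y)))
          = (fun y => -C * (FA (x+y+σ) * G' (z - C*y))) := by funext y; ring
      rw [heq]; exact h2'.const_mul (-C)
    have hl := hTendG z x FA G hFAB hGB
    have hibp := AFDE_ibp_Ioi (fun y => FA (x+y+σ)) (fun y => G (z - C*y))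
      (fun y => FA' (x+y+σ)) (fun y => -C * G' (z - C*y)) hφ hψ h1 h2 hl
    rw [MeasureTheory.integral_add h1 h2] at hibp
    have e3 : ∫ y in Ioi (0:ℝ), FA (x+y+σ) * (-C * G' (z - C*y))
        = -C * ∫ y in Ioi (0:ℝ), FA (x+y+σ) * G' (z - C*y) := by
      rw [← MeasureTheory.integral_const_mul]
      congr 1; funext y; ring
    rw [e3] at hibp
    norm_num at hibp
    linarith [hibp]
  -- ### differentiation under the integral sign (z-direction)
  have hDerivZ : ∀ z x : ℝ, ∀ (G G' : ℝ → ℝ), Continuous G → Continuous G' →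
      (∀ w : ℝ, HasDerivAt G (G' w) w) →
      (∀ B : ℝ, ∃ c > 0, ∀ w ≤ B, |G w| ≤ c * Real.exp w) →
      (∀ B : ℝ, ∃ c > 0, ∀ w ≤ B, |G' w| ≤ c * Real.exp w) →
      HasDerivAt (fun p => ∫ y in Ioi (0:ℝ), Ai (x+y+σ) * G (p - C*y))
        (∫ y in Ioi (0:ℝ), Ai (x+y+σ) * G' (z - C*y)) z := by
    intro z x G G' hGc hG'c hGd hGB hG'B
    obtain ⟨M, hM, hMb⟩ := hAiB (x+σ)
    obtain ⟨c, hc, hcb⟩ := hG'B (z+1)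
    refine AFDE_param_deriv (fun p y => Ai (x+y+σ) * G (p - C*y))
      (fun p y => Ai (x+y+σ) * G' (p - C*y)) z
      (fun y => M*c*Real.exp (z+1) * Real.exp (-C*y)) ?_ ?_ ?_ ?_ ?_ ?_
    · intro p
      exact ((hAic.comp (by fun_prop)).mul (hGc.comp (by fun_prop))).aestronglyMeasurable
    · exact hIntG z x Ai G hAic hGc hAiB hGB
    · exact ((hAic.comp (by fun_prop)).mul (hG'c.comp (by fun_prop))).aestronglyMeasurable
    · intro y hy p hp
      rw [Metric.mem_ball, Real.dist_eq] at hp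
      rw [mem_Ioi] at hy
      have hple := (abs_lt.mp hp).2
      have hCy : 0 < C*y := mul_pos hC0 hy
      have h1 : |Ai (x+y+σ)| ≤ M := hMb _ (by linarith)
      have h2 : |G' (p - C*y)| ≤ c * Real.exp (p - C*y) := hcb _ (by linarith)
      have h3 : Real.exp (p - C*y) ≤ Real.exp (z+1) * Real.exp (-C*y) := by
        rw [← Real.exp_add]; exact Real.exp_le_exp.mpr (by linarith)
      calc |Ai (x+y+σ) * G' (p - C*y)| = |Ai (x+y+σ)| * |G' (p - C*y)| := abs_mul _ _
        _ ≤ M * (c * (Real.exp (z+1) * Real.exp (-C*y))) :=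
            mul_le_mul h1 (h2.trans (mul_le_mul_of_nonneg_left h3 hc.le)) (abs_nonneg _) hM.le
        _ = M*c*Real.exp (z+1) * Real.exp (-C*y) := by ring
    · exact (exp_neg_integrableOn_Ioi 0 hC0).const_mul _
    · intro y hy p hp
      have hi : HasDerivAt (fun q : ℝ => q - C*y) 1 p := (hasDerivAt_id p).sub_const (C*y)
      have h := ((hGd (p - C*y)).comp p hi).const_mul (Ai (x+y+σ))
      simpa using h
  -- ### differentiation under the integral sign (x-direction)
  have hDerivX : ∀ z x : ℝ,
      HasDerivAt (fun p => ∫ y in Ioi (0:ℝ), Ai (p+y+σ) * gg (z - C*y))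
        (∫ y in Ioi (0:ℝ), deriv Ai (x+y+σ) * gg (z - C*y)) x := by
    intro z x
    obtain ⟨M, hM, hMb⟩ := hAi'B (x+σ-1)
    obtain ⟨c, hc, hcb⟩ := hggB z
    refine AFDE_param_deriv (fun p y => Ai (p+y+σ) * gg (z - C*y))
      (fun p y => deriv Ai (p+y+σ) * gg (z - C*y)) x
      (fun y => M*c*Real.exp z * Real.exp (-C*y)) ?_ ?_ ?_ ?_ ?_ ?_
    · intro p
      exact ((hAic.comp (by fun_prop)).mul (hggc.comp (by fun_prop))).aestronglyMeasurable
    · exact hIntG z x Ai gg hAic hggc hAiB hggB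
    · exact ((hAi'c.comp (by fun_prop)).mul (hggc.comp (by fun_prop))).aestronglyMeasurable
    · intro y hy p hp
      rw [Metric.mem_ball, Real.dist_eq] at hp
      rw [mem_Ioi] at hy
      have hpge := (abs_lt.mp hp).1
      have hCy : 0 < C*y := mul_pos hC0 hy
      have h1 : |deriv Ai (p+y+σ)| ≤ M := hMb _ (by linarith)
      have h2 : |gg (z - C*y)| ≤ c * Real.exp (z - C*y) := hcb _ (by linarith)
      have h3 : Real.exp (z - C*y) ≤ Real.exp z * Real.exp (-C*y) := by
        rw [← Real.exp_add]; exact Real.exp_le_exp.mpr (by linarith)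
      calc |deriv Ai (p+y+σ) * gg (z - C*y)| = |deriv Ai (p+y+σ)| * |gg (z - C*y)| := abs_mul _ _
        _ ≤ M * (c * (Real.exp z * Real.exp (-C*y))) :=
            mul_le_mul h1 (h2.trans (mul_le_mul_of_nonneg_left h3 hc.le)) (abs_nonneg _) hM.le
        _ = M*c*Real.exp z * Real.exp (-C*y) := by ring
    · exact (exp_neg_integrableOn_Ioi 0 hC0).const_mul _
    · intro y hy p hp
      have hi : HasDerivAt (fun q : ℝ => q+y+σ) 1 p := by
        simpa using ((hasDerivAt_id p).add_const y).add_const σ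
      have h := ((hAiHD (p+y+σ)).comp p hi).mul_const (gg (z - C*y))
      simpa using h
  -- ### representation of A
  have hArep : ∀ z x : ℝ,
      A z x = hh (z + C*x) - D * ∫ y in Ioi (0:ℝ), Ai (x+y+σ) * gg (z - C*y) := by
    intro z x
    rw [hA, hb_hh]
    simp_rw [hbt_gg z]
  -- ### derivatives of A
  have hAzHD : ∀ z x : ℝ, HasDerivAt (fun z' => A z' x)
      (hh1 (z + C*x) - D * ∫ y in Ioi (0:ℝ), Ai (x+y+σ) * gg1 (z - C*y)) z := by
    intro z x
    have h1 : HasDerivAt (fun z' => hh (z' + C*x)) (hh1 (z + C*x)) z := by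
      exact ((hhhHD (z + C*x)).comp z ((hasDerivAt_id z).add_const (C*x))).congr_deriv (mul_one _)
    have h2 := hDerivZ z x gg gg1 hggc hgg1c hggHD hggB hgg1B
    have heq : (fun z' => A z' x) = fun z' =>
        hh (z' + C*x) - D * ∫ y in Ioi (0:ℝ), Ai (x+y+σ) * gg (z' - C*y) :=
      funext fun z' => hArep z' x
    rw [heq]
    exact h1.sub (h2.const_mul D)
  have hAxHD : ∀ z x : ℝ, HasDerivAt (fun x' => A z x')
      (C * hh1 (z + C*x) - D * ∫ y in Ioi (0:ℝ), deriv Ai (x+y+σ) * gg (z - C*y)) x := by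
    intro z x
    have h1 : HasDerivAt (fun x' => hh (z + C*x')) (hh1 (z + C*x) * (C*1)) x :=
      by have h := (hhhHD (z + C*x)).comp x (((hasDerivAt_id x).const_mul C).const_add z); exact h
    have h2 := hDerivX z x
    have heq : (fun x' => A z x') = fun x' =>
        hh (z + C*x') - D * ∫ y in Ioi (0:ℝ), Ai (x'+y+σ) * gg (z - C*y) :=
      funext fun x' => hArep z x'
    rw [heq]
    have h := h1.sub (h2.const_mul D)
    refine h.congr_deriv ?_
    ring
  have hA2 : ∀ z x : ℝ, deriv (deriv (fun z' => A z' x)) z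
      = hh2 (z + C*x) - D * ∫ y in Ioi (0:ℝ), Ai (x+y+σ) * gg2 (z - C*y) := by
    intro z x
    have heq : deriv (fun z' => A z' x) = fun z' =>
        hh1 (z' + C*x) - D * ∫ y in Ioi (0:ℝ), Ai (x+y+σ) * gg1 (z' - C*y) :=
      funext fun z' => (hAzHD z' x).deriv
    rw [heq]
    have h1 : HasDerivAt (fun z' => hh1 (z' + C*x)) (hh2 (z + C*x)) z := by
      exact ((hhh1HD (z + C*x)).comp z ((hasDerivAt_id z).add_const (C*x))).congr_deriv (mul_one _)
    have h2 := hDerivZ z x gg1 gg2 hgg1c hgg2c hgg1HD hgg1B hgg2B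
    exact (h1.sub (h2.const_mul D)).deriv
  -- ### boundary values of bt
  have hbt0 : ∀ z : ℝ, bt z 0 = gg z := by
    intro z; rw [hbt_gg]; norm_num
  have hbtD : ∀ z : ℝ, deriv (fun x' => bt z x') 0 = -C * gg1 z := by
    intro z
    have heq : (fun x' => bt z x') = fun x' => gg (z - C*x') := funext fun x' => hbt_gg z x'
    rw [heq]
    have hi : HasDerivAt (fun x' : ℝ => z - C*x') (-(C*1)) 0 :=
      ((hasDerivAt_id (0:ℝ)).const_mul C).const_sub z
    have h := (hggHD (z - C*0)).comp 0 hi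
    have h2 : HasDerivAt (fun x' : ℝ => gg (z - C*x')) (-C * gg1 z) 0 := by
      have e : (z:ℝ) - C*0 = z := by ring
      rw [e] at h
      refine h.congr_deriv ?_
      ring
    exact h2.deriv
  -- ### the integral identities
  have hR1 : ∀ z x : ℝ,
      (∫ y in Ioi (0:ℝ), deriv Ai (x+y+σ) * gg (z - C*y))
        - C * ∫ y in Ioi (0:ℝ), Ai (x+y+σ) * gg1 (z - C*y) = -(Ai (x+σ) * gg z) :=
    fun z x => hIBP z x Ai (deriv Ai) gg gg1 hAic hAi'c hggc hgg1c hAiHD hggHD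
      hAiB hAi'B hggB hgg1B
  have hR2 : ∀ z x : ℝ,
      (∫ y in Ioi (0:ℝ), ((x+y+σ) * Ai (x+y+σ)) * gg (z - C*y))
        - C * ∫ y in Ioi (0:ℝ), deriv Ai (x+y+σ) * gg1 (z - C*y)
        = -(deriv Ai (x+σ) * gg z) := by
    intro z x
    have h := hIBP z x (deriv Ai) (fun t => t * Ai t) gg gg1 hAi'c hAimc hggc hgg1c
      hAi'HD hggHD hAi'B hAimB hggB hgg1B
    exact h
  have hR3 : ∀ z x : ℝ,
      (∫ y in Ioi (0:ℝ), deriv Ai (x+y+σ) * gg1 (z - C*y))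
        - C * ∫ y in Ioi (0:ℝ), Ai (x+y+σ) * gg2 (z - C*y) = -(Ai (x+σ) * gg1 z) :=
    fun z x => hIBP z x Ai (deriv Ai) gg1 gg2 hAic hAi'c hgg1c hgg2c hAiHD hgg1HD
      hAiB hAi'B hgg1B hgg2B
  have hR4 : ∀ z x : ℝ,
      (∫ y in Ioi (0:ℝ), Ai (x+y+σ) * gg2 (z - C*y))
        = r₁^2*C * (∫ y in Ioi (0:ℝ), ((x+y+σ) * Ai (x+y+σ)) * gg (z - C*y))
          - r₁^2*(z + C*x + 2*s₂/r₂ - r₂^2*τ^2) * (∫ y in Ioi (0:ℝ), Ai (x+y+σ) * gg (z - C*y))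
          + 2*r₁^2*τ * ∫ y in Ioi (0:ℝ), Ai (x+y+σ) * gg1 (z - C*y) := by
    intro z x
    have hCσ : C*σ = 2*(s₁/r₁+s₂/r₂) - (r₁^2+r₂^2)*τ^2 := by
      rw [hσ, ← mul_assoc, mul_inv_cancel₀ (ne_of_gt hC0), one_mul]
    have hpt : ∀ y : ℝ, Ai (x+y+σ) * gg2 (z - C*y)
        = r₁^2*C * (((x+y+σ) * Ai (x+y+σ)) * gg (z - C*y))
          + (-(r₁^2*(z + C*x + 2*s₂/r₂ - r₂^2*τ^2))) * (Ai (x+y+σ) * gg (z - C*y))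
          + 2*r₁^2*τ * (Ai (x+y+σ) * gg1 (z - C*y)) := by
      intro y
      have h1 := hgg2_ode (z - C*y)
      have h2 : -(z - C*y) + d1 - r₁^2*τ^2
          = C*(x+y+σ) - (z + C*x + 2*s₂/r₂ - r₂^2*τ^2) := by
        rw [hd1]; linear_combination -hCσ
      rw [h1, h2]; ring
    have hi2 : IntegrableOn (fun y => ((x+y+σ) * Ai (x+y+σ)) * gg (z - C*y)) (Ioi (0:ℝ)) :=
      hIntG z x (fun t => t * Ai t) gg hAimc hggc hAimB hggB
    have hi0 : IntegrableOn (fun y => Ai (x+y+σ) * gg (z - C*y)) (Ioi (0:ℝ)) :=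
      hIntG z x Ai gg hAic hggc hAiB hggB
    have hiJ : IntegrableOn (fun y => Ai (x+y+σ) * gg1 (z - C*y)) (Ioi (0:ℝ)) :=
      hIntG z x Ai gg1 hAic hgg1c hAiB hgg1B
    calc ∫ y in Ioi (0:ℝ), Ai (x+y+σ) * gg2 (z - C*y)
        = ∫ y in Ioi (0:ℝ), (r₁^2*C * (((x+y+σ) * Ai (x+y+σ)) * gg (z - C*y))
            + (-(r₁^2*(z + C*x + 2*s₂/r₂ - r₂^2*τ^2))) * (Ai (x+y+σ) * gg (z - C*y))
            + 2*r₁^2*τ * (Ai (x+y+σ) * gg1 (z - C*y))) :=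
          MeasureTheory.integral_congr_ae (Filter.Eventually.of_forall hpt)
      _ = r₁^2*C * (∫ y in Ioi (0:ℝ), ((x+y+σ) * Ai (x+y+σ)) * gg (z - C*y))
          - r₁^2*(z + C*x + 2*s₂/r₂ - r₂^2*τ^2) * (∫ y in Ioi (0:ℝ), Ai (x+y+σ) * gg (z - C*y))
          + 2*r₁^2*τ * ∫ y in Ioi (0:ℝ), Ai (x+y+σ) * gg1 (z - C*y) := by
          have hA1 : IntegrableOn (fun y => r₁^2*C * (((x+y+σ) * Ai (x+y+σ)) * gg (z - C*y)))
              (Ioi (0:ℝ)) := hi2.const_mul _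
          have hA2' : IntegrableOn (fun y => (-(r₁^2*(z + C*x + 2*s₂/r₂ - r₂^2*τ^2)))
              * (Ai (x+y+σ) * gg (z - C*y))) (Ioi (0:ℝ)) := hi0.const_mul _
          have hA3 : IntegrableOn (fun y => 2*r₁^2*τ * (Ai (x+y+σ) * gg1 (z - C*y)))
              (Ioi (0:ℝ)) := hiJ.const_mul _
          have hA12 : IntegrableOn (fun y => r₁^2*C * (((x+y+σ) * Ai (x+y+σ)) * gg (z - C*y))
              + (-(r₁^2*(z + C*x + 2*s₂/r₂ - r₂^2*τ^2))) * (Ai (x+y+σ) * gg (z - C*y)))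
              (Ioi (0:ℝ)) := hA1.add hA2'
          rw [MeasureTheory.integral_add hA12 hA3,
            MeasureTheory.integral_add hA1 hA2',
            MeasureTheory.integral_const_mul, MeasureTheory.integral_const_mul,
            MeasureTheory.integral_const_mul]
          ring
  -- ### conclusion
  constructor
  · intro z x _
    rw [(hAzHD z x).deriv, (hAxHD z x).deriv, hbt0 z]
    have h1 := hR1 z x
    have hCne : C ≠ 0 := ne_of_gt hC0
    field_simp
    linear_combination D * h1
  · intro z x _
    rw [hA2 z x, (hAzHD z x).deriv, hArep z x, hbtD z, hbt0 z]
    have hOde := hhh2_ode (z + C*x)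
    have h2 := hR2 z x
    have h3 := hR3 z x
    have h4 := hR4 z x
    have hr₁2 : (r₁:ℝ)^2 ≠ 0 := by positivity
    have hr₂2 : (r₂:ℝ)^2 ≠ 0 := by positivity
    have hC3' : r₁^2*r₂^2*C^3 = r₂^2 + r₁^2 := by
      rw [hC3]; field_simp
    have hstar3 : r₁^2 * (∫ y in Ioi (0:ℝ), Ai (x+y+σ) * gg2 (z - C*y))
        + 2*r₁^2*r₂^2*τ * (∫ y in Ioi (0:ℝ), Ai (x+y+σ) * gg1 (z - C*y))
        = r₁^2*r₂^2*(z + C*x + 2*s₂/r₂ - r₂^2*τ^2)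
            * (∫ y in Ioi (0:ℝ), Ai (x+y+σ) * gg (z - C*y))
          + r₁^2*r₂^2*C^2 * (Ai (x+σ) * gg1 z)
          + r₁^2*r₂^2*C * (deriv Ai (x+σ) * gg z) := by
      linear_combination (-(r₂^2)) * h4 + (-(r₁^2*r₂^2*C)) * h2 + (-(r₁^2*r₂^2*C^2)) * h3
        + (-(∫ y in Ioi (0:ℝ), Ai (x+y+σ) * gg2 (z - C*y))) * hC3'
    have hstar2 : r₁^2 * ((∫ y in Ioi (0:ℝ), Ai (x+y+σ) * gg2 (z - C*y))
          + 2*r₂^2*τ * (∫ y in Ioi (0:ℝ), Ai (x+y+σ) * gg1 (z - C*y)))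
        = r₁^2 * (r₂^2*((z + C*x + 2*s₂/r₂ - r₂^2*τ^2)
            * (∫ y in Ioi (0:ℝ), Ai (x+y+σ) * gg (z - C*y)))
          + r₂^2*(C^2 * (Ai (x+σ) * gg1 z))
          + r₂^2*(C * (deriv Ai (x+σ) * gg z))) := by
      linear_combination hstar3
    have hstar' := mul_left_cancel₀ hr₁2 hstar2
    have hstar : (r₂^2)⁻¹ * (∫ y in Ioi (0:ℝ), Ai (x+y+σ) * gg2 (z - C*y))
        + 2*τ * (∫ y in Ioi (0:ℝ), Ai (x+y+σ) * gg1 (z - C*y))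
        = (z + C*x + 2*s₂/r₂ - r₂^2*τ^2) * (∫ y in Ioi (0:ℝ), Ai (x+y+σ) * gg (z - C*y))
          + C^2 * (Ai (x+σ) * gg1 z) + C * (deriv Ai (x+σ) * gg z) := by
      have hinv : (r₂^2)⁻¹ * r₂^2 = (1:ℝ) := inv_mul_cancel₀ hr₂2
      linear_combination (r₂^2)⁻¹ * hstar'
        + ((z + C*x + 2*s₂/r₂ - r₂^2*τ^2) * (∫ y in Ioi (0:ℝ), Ai (x+y+σ) * gg (z - C*y))
          + C^2 * (Ai (x+σ) * gg1 z) + C * (deriv Ai (x+σ) * gg z)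
          - 2*τ * (∫ y in Ioi (0:ℝ), Ai (x+y+σ) * gg1 (z - C*y))) * hinv
    linear_combination hOde - D * hstar
end

section
/- With the notations of the context, the functions d(s,τ) = q(σ(s,τ))/(r₂·C·D(s,τ)) and d̃(s,τ) = D(s,τ)·q(σ(s,τ))/(r₁·C) satisfy, for all (s,τ) ∈ ℝ²: (i) ∂²d/∂s² = 4τ·(r₁σ₁ − r₂σ₂)·∂d/∂s − 4(r₁²+r₂²)(σ₁²+σ₂²)·τ²·d + 8·((r₁σ₂+r₂σ₁)²/(r₁r₂))·d²·d̃ + 8·((r₁σ₂+r₂σ₁)³/(r₁r₂(r₁²+r₂²)))·s·d; (ii) ∂²d̃/∂s² = −4τ·(r₁σ₁ − r₂σ₂)·∂d̃/∂s − 4(r₁²+r₂²)(σ₁²+σ₂²)·τ²·d̃ + 8·((r₁σ₂+r₂σ₁)²/(r₁r₂))·d̃²·d + 8·((r₁σ₂+r₂σ₁)³/(r₁r₂(r₁²+r₂²)))·s·d̃; (iii) ∂d/∂τ = −(r₁r₂(r₁²+r₂²)/(σ₁r₂+σ₂r₁))·τ·∂d/∂s + (r₁²+r₂²)²·((σ₁r₂−σ₂r₁)/(σ₁r₂+σ₂r₁))·τ²·d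 + 2(r₁σ₁ − r₂σ₂)·s·d. -/
open Real

set_option maxHeartbeats 2000000 in

/-- **The coupled second-order differential equations in `s` and the mixed `s`–`τ` equation**
satisfied by the residue-matrix entries `d(s,τ) = q(σ(s,τ))/(r₂ C D(s,τ))` and
`d̃(s,τ) = D(s,τ) q(σ(s,τ))/(r₁ C)` of the tacnode Riemann–Hilbert problem. -/
theorem residue_entries_coupled_differential_equations
    (q qp : ℝ → ℝ)
    (hq : ∀ x, HasDerivAt q (qp x) x)
    (hqp : ∀ x, HasDerivAt qp (x * q x + 2 * q x ^ 3) x)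
    (r₁ r₂ : ℝ) (hr₁ : 0 < r₁) (hr₂ : 0 < r₂) (σ₁ σ₂ : ℝ)
    (hσ12 : σ₁ * r₂ + σ₂ * r₁ ≠ 0)
    (C : ℝ) (hC : C = ((r₁ ^ 2)⁻¹ + (r₂ ^ 2)⁻¹) ^ ((1 : ℝ) / 3))
    (Df σf df dtf : ℝ → ℝ → ℝ)
    (hDf : ∀ s τ, Df s τ = Real.sqrt (r₁ / r₂) *
      Real.exp ((r₁ ^ 4 - r₂ ^ 4) * τ ^ 3 / 3 + 2 * (r₂ * (σ₂ * s) - r₁ * (σ₁ * s)) * τ))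
    (hσf : ∀ s τ, σf s τ =
      C⁻¹ * (2 * (σ₁ * s / r₁ + σ₂ * s / r₂) - (r₁ ^ 2 + r₂ ^ 2) * τ ^ 2))
    (hdf : ∀ s τ, df s τ = q (σf s τ) / (r₂ * C * Df s τ))
    (hdtf : ∀ s τ, dtf s τ = Df s τ * q (σf s τ) / (r₁ * C)) :
    ∀ s τ : ℝ,
      (deriv (fun s' => deriv (fun s'' => df s'' τ) s') s
        = 4 * τ * (r₁ * σ₁ - r₂ * σ₂) * deriv (fun s' => df s' τ) s
          - 4 * (r₁ ^ 2 + r₂ ^ 2) * (σ₁ ^ 2 + σ₂ ^ 2) * τ ^ 2 * df s τ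
          + 8 * ((r₁ * σ₂ + r₂ * σ₁) ^ 2 / (r₁ * r₂)) * df s τ ^ 2 * dtf s τ
          + 8 * ((r₁ * σ₂ + r₂ * σ₁) ^ 3 / (r₁ * r₂ * (r₁ ^ 2 + r₂ ^ 2))) * s * df s τ)
      ∧ (deriv (fun s' => deriv (fun s'' => dtf s'' τ) s') s
        = -(4 * τ * (r₁ * σ₁ - r₂ * σ₂)) * deriv (fun s' => dtf s' τ) s
          - 4 * (r₁ ^ 2 + r₂ ^ 2) * (σ₁ ^ 2 + σ₂ ^ 2) * τ ^ 2 * dtf s τ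
          + 8 * ((r₁ * σ₂ + r₂ * σ₁) ^ 2 / (r₁ * r₂)) * dtf s τ ^ 2 * df s τ
          + 8 * ((r₁ * σ₂ + r₂ * σ₁) ^ 3 / (r₁ * r₂ * (r₁ ^ 2 + r₂ ^ 2))) * s * dtf s τ)
      ∧ (deriv (fun τ' => df s τ') τ
        = -(r₁ * r₂ * (r₁ ^ 2 + r₂ ^ 2) / (σ₁ * r₂ + σ₂ * r₁)) * τ *
            deriv (fun s' => df s' τ) s
          + (r₁ ^ 2 + r₂ ^ 2) ^ 2 * ((σ₁ * r₂ - σ₂ * r₁) / (σ₁ * r₂ + σ₂ * r₁)) * τ ^ 2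
              * df s τ
          + 2 * (r₁ * σ₁ - r₂ * σ₂) * s * df s τ) := by
  intro s τ
  have hr₁0 : r₁ ≠ 0 := ne_of_gt hr₁
  have hr₂0 : r₂ ≠ 0 := ne_of_gt hr₂
  have hCpos : 0 < C := by rw [hC]; positivity
  have hC0 : C ≠ 0 := ne_of_gt hCpos
  have hS0 : r₁ ^ 2 + r₂ ^ 2 ≠ 0 := by positivity
  have hC3 : r₁ ^ 2 * r₂ ^ 2 * C ^ 3 = r₁ ^ 2 + r₂ ^ 2 := by
    have hx : (0:ℝ) < (r₁ ^ 2)⁻¹ + (r₂ ^ 2)⁻¹ := by positivity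
    have h3 : C ^ 3 = (r₁ ^ 2)⁻¹ + (r₂ ^ 2)⁻¹ := by
      rw [hC, ← Real.rpow_natCast (((r₁ ^ 2)⁻¹ + (r₂ ^ 2)⁻¹) ^ ((1:ℝ)/3)) 3,
        ← Real.rpow_mul hx.le]
      norm_num
    rw [h3]; field_simp; ring
  set A := C⁻¹ * (2 * (σ₁ / r₁ + σ₂ / r₂)) with hA
  set bb := -(C⁻¹ * ((r₁ ^ 2 + r₂ ^ 2) * τ ^ 2)) with hbb
  set B := 2 * (r₂ * σ₂ - r₁ * σ₁) * τ with hB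
  set W := Real.sqrt (r₁ / r₂) with hW
  have hWpos : 0 < W := by rw [hW]; exact Real.sqrt_pos.mpr (by positivity)
  have hW0 : W ≠ 0 := ne_of_gt hWpos
  set X := Real.exp ((r₁ ^ 4 - r₂ ^ 4) * τ ^ 3 / 3) with hX
  have hX0 : X ≠ 0 := Real.exp_ne_zero _
  set D0 := W * X with hD0
  have hD00 : D0 ≠ 0 := mul_ne_zero hW0 hX0
  have hσs : ∀ x, σf x τ = A * x + bb := by
    intro x; rw [hσf, hA, hbb]; ring
  have hDs : ∀ x, Df x τ = D0 * Real.exp (B * x) := by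
    intro x
    rw [hDf, hD0, hX, mul_assoc W, ← Real.exp_add]
    congr 2
    rw [hB]; ring
  have hE0 : ∀ x : ℝ, Real.exp (-(B*x)) ≠ 0 := fun x => Real.exp_ne_zero _
  have hdfs : ∀ x, df x τ = q (A * x + bb) * Real.exp (-(B * x)) / (r₂ * C * D0) := by
    intro x
    rw [hdf, hσs, hDs, Real.exp_neg]
    field_simp
  have hdts : ∀ x, dtf x τ = D0 * Real.exp (B * x) * q (A * x + bb) / (r₁ * C) := by
    intro x
    rw [hdtf, hσs, hDs]
  -- basic derivative lemmas
  have hlin : ∀ x : ℝ, HasDerivAt (fun y : ℝ => A * y + bb) A x := by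
    intro x
    simpa using ((hasDerivAt_id x).const_mul A).add_const bb
  have hq' : ∀ x : ℝ, HasDerivAt (fun y => q (A * y + bb)) (qp (A * x + bb) * A) x :=
    fun x => HasDerivAt.comp x (hq (A * x + bb)) (hlin x)
  have hqp' : ∀ x : ℝ, HasDerivAt (fun y => qp (A * y + bb))
      (((A * x + bb) * q (A * x + bb) + 2 * q (A * x + bb) ^ 3) * A) x :=
    fun x => HasDerivAt.comp x (hqp (A * x + bb)) (hlin x)
  have hem : ∀ x : ℝ, HasDerivAt (fun y => Real.exp (-(B * y)))
      (Real.exp (-(B * x)) * -B) x := by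
    intro x
    have h1 : HasDerivAt (fun y : ℝ => -(B * y)) (-B) x := by
      exact (((hasDerivAt_id x).const_mul B).neg).congr_deriv (by ring)
    exact h1.exp
  have hep : ∀ x : ℝ, HasDerivAt (fun y => Real.exp (B * y))
      (Real.exp (B * x) * B) x := by
    intro x
    have h1 : HasDerivAt (fun y : ℝ => B * y) B x := by
      simpa using (hasDerivAt_id x).const_mul B
    exact h1.exp
  -- first s-derivative of df
  have hg : ∀ x : ℝ, HasDerivAt (fun y => df y τ)
      ((qp (A * x + bb) * A * Real.exp (-(B * x))
        + q (A * x + bb) * (Real.exp (-(B * x)) * -B)) / (r₂ * C * D0)) x := by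
    intro x
    have hfd : (fun y => df y τ)
        = fun y => q (A * y + bb) * Real.exp (-(B * y)) / (r₂ * C * D0) := funext hdfs
    rw [hfd]
    exact ((hq' x).mul (hem x)).div_const (r₂ * C * D0)
  -- first s-derivative of dtf
  have hgt : ∀ x : ℝ, HasDerivAt (fun y => dtf y τ)
      ((D0 * (Real.exp (B * x) * B) * q (A * x + bb)
        + D0 * Real.exp (B * x) * (qp (A * x + bb) * A)) / (r₁ * C)) x := by
    intro x
    have hfd : (fun y => dtf y τ)
        = fun y => D0 * Real.exp (B * y) * q (A * y + bb) / (r₁ * C) := funext hdts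
    rw [hfd]
    exact ((((hep x).const_mul D0).mul (hq' x)).div_const (r₁ * C))
  refine ⟨?_, ?_, ?_⟩
  · -- part (i)
    have e1 : (fun s' => deriv (fun s'' => df s'' τ) s')
        = fun x => (qp (A * x + bb) * A * Real.exp (-(B * x))
          + q (A * x + bb) * (Real.exp (-(B * x)) * -B)) / (r₂ * C * D0) :=
      funext fun x => (hg x).deriv
    have hgg : HasDerivAt (fun x => (qp (A * x + bb) * A * Real.exp (-(B * x))
          + q (A * x + bb) * (Real.exp (-(B * x)) * -B)) / (r₂ * C * D0))
        (((((A * s + bb) * q (A * s + bb) + 2 * q (A * s + bb) ^ 3) * A * A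
              * Real.exp (-(B * s))
            + qp (A * s + bb) * A * (Real.exp (-(B * s)) * -B))
          + (qp (A * s + bb) * A * (Real.exp (-(B * s)) * -B)
            + q (A * s + bb) * (Real.exp (-(B * s)) * -B * -B))) / (r₂ * C * D0)) s := by
      exact ((((hqp' s).mul_const A).mul (hem s)).add
        ((hq' s).mul ((hem s).mul_const (-B)))).div_const (r₂ * C * D0)
    rw [e1, hgg.deriv, (hg s).deriv, hdfs s, hdts s]
    rw [show Real.exp (B * s) = (Real.exp (-(B * s)))⁻¹ by
      rw [← Real.exp_neg, neg_neg]]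
    set P2 := qp (A * s + bb) with hP2
    set Q2 := q (A * s + bb) with hQ2
    simp only [hA, hbb]
    linear_combination (norm := (field_simp [hr₁0, hr₂0, hC0, hW0, hX0, hS0]; ring))
      ((Real.exp (-(B*s)) * Q2 / (r₂*C*D0)) *
        (4*(r₁*σ₂+r₂*σ₁)^2*τ^2/(r₁^2*r₂^2*C^3)
          - 8*(r₁*σ₂+r₂*σ₁)^3*s/(r₁^3*r₂^3*C^3*(r₁^2+r₂^2)))) * hC3
  · -- part (ii)
    have e2 : (fun s' => deriv (fun s'' => dtf s'' τ) s')
        = fun x => (D0 * (Real.exp (B * x) * B) * q (A * x + bb)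
          + D0 * Real.exp (B * x) * (qp (A * x + bb) * A)) / (r₁ * C) :=
      funext fun x => (hgt x).deriv
    have hgg2 : HasDerivAt (fun x => (D0 * (Real.exp (B * x) * B) * q (A * x + bb)
          + D0 * Real.exp (B * x) * (qp (A * x + bb) * A)) / (r₁ * C))
        (((D0 * (Real.exp (B * s) * B * B) * q (A * s + bb)
            + D0 * (Real.exp (B * s) * B) * (qp (A * s + bb) * A))
          + (D0 * (Real.exp (B * s) * B) * (qp (A * s + bb) * A)
            + D0 * Real.exp (B * s)
              * (((A * s + bb) * q (A * s + bb) + 2 * q (A * s + bb) ^ 3) * A * A)))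
          / (r₁ * C)) s := by
      have h1 : HasDerivAt (fun y => D0 * (Real.exp (B * y) * B))
          (D0 * (Real.exp (B * s) * B * B)) s := ((hep s).mul_const B).const_mul D0
      have h2 : HasDerivAt (fun y => D0 * Real.exp (B * y))
          (D0 * (Real.exp (B * s) * B)) s := (hep s).const_mul D0
      exact ((h1.mul (hq' s)).add (h2.mul ((hqp' s).mul_const A))).div_const (r₁ * C)
    rw [e2, hgg2.deriv, (hgt s).deriv, hdfs s, hdts s]
    rw [show Real.exp (B * s) = (Real.exp (-(B * s)))⁻¹ by
      rw [← Real.exp_neg, neg_neg]]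
    set P2 := qp (A * s + bb) with hP2
    set Q2 := q (A * s + bb) with hQ2
    simp only [hA, hbb]
    linear_combination (norm := (field_simp [hr₁0, hr₂0, hC0, hW0, hX0, hS0]; ring))
      ((D0 * (Real.exp (-(B*s)))⁻¹ * Q2 / (r₁*C)) *
        (4*(r₁*σ₂+r₂*σ₁)^2*τ^2/(r₁^2*r₂^2*C^3)
          - 8*(r₁*σ₂+r₂*σ₁)^3*s/(r₁^3*r₂^3*C^3*(r₁^2+r₂^2)))) * hC3
  · -- part (iii)
    set a2 := -(C⁻¹ * (r₁ ^ 2 + r₂ ^ 2)) with ha2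
    set a0 := C⁻¹ * (2 * (σ₁ * s / r₁ + σ₂ * s / r₂)) with ha0
    set c3 := (r₁ ^ 4 - r₂ ^ 4) / 3 with hc3
    set c1 := 2 * (r₂ * (σ₂ * s) - r₁ * (σ₁ * s)) with hc1
    have hdfτ : ∀ t, df s t = q (a2 * t ^ 2 + a0)
        * Real.exp (-(c3 * t ^ 3 + c1 * t)) / (r₂ * C * W) := by
      intro t
      rw [hdf, hσf, hDf, Real.exp_neg]
      rw [show C⁻¹ * (2 * (σ₁ * s / r₁ + σ₂ * s / r₂) - (r₁ ^ 2 + r₂ ^ 2) * t ^ 2)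
          = a2 * t ^ 2 + a0 by rw [ha2, ha0]; ring]
      rw [show (r₁ ^ 4 - r₂ ^ 4) * t ^ 3 / 3 + 2 * (r₂ * (σ₂ * s) - r₁ * (σ₁ * s)) * t
          = c3 * t ^ 3 + c1 * t by rw [hc3, hc1]; ring]
      rw [hW]
      field_simp
    have hu : HasDerivAt (fun t : ℝ => a2 * t ^ 2 + a0) (a2 * (2 * τ)) τ := by
      have h := ((hasDerivAt_pow 2 τ).const_mul a2).add_const a0
      refine h.congr_deriv ?_
      push_cast
      ring
    have hw : HasDerivAt (fun t : ℝ => -(c3 * t ^ 3 + c1 * t)) (-(c3 * (3 * τ ^ 2) + c1)) τ := by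
      have h := (((hasDerivAt_pow 3 τ).const_mul c3).add ((hasDerivAt_id τ).const_mul c1)).neg
      refine h.congr_deriv ?_
      push_cast
      ring
    have h3 : HasDerivAt (fun t => df s t)
        ((qp (a2 * τ ^ 2 + a0) * (a2 * (2 * τ)) * Real.exp (-(c3 * τ ^ 3 + c1 * τ))
          + q (a2 * τ ^ 2 + a0)
            * (Real.exp (-(c3 * τ ^ 3 + c1 * τ)) * -(c3 * (3 * τ ^ 2) + c1)))
          / (r₂ * C * W)) τ := by
      have hfd : (fun t => df s t) = fun t => q (a2 * t ^ 2 + a0)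
          * Real.exp (-(c3 * t ^ 3 + c1 * t)) / (r₂ * C * W) := funext hdfτ
      rw [hfd]
      exact (((HasDerivAt.comp τ (hq (a2 * τ ^ 2 + a0)) hu).mul hw.exp)).div_const (r₂ * C * W)
    have huσ : a2 * τ ^ 2 + a0 = A * s + bb := by
      rw [ha2, ha0, hA, hbb]; ring
    have hYe : Real.exp (-(c3 * τ ^ 3 + c1 * τ)) = Real.exp (-(B * s)) * X⁻¹ := by
      rw [hX, ← Real.exp_neg ((r₁ ^ 4 - r₂ ^ 4) * τ ^ 3 / 3), ← Real.exp_add]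
      congr 1
      rw [hc3, hc1, hB]; ring
    rw [h3.deriv, (hg s).deriv, hdfs s, huσ, hYe, hD0]
    set P2 := qp (A * s + bb) with hP2
    set Q2 := q (A * s + bb) with hQ2
    have hσ21 : r₂ * σ₁ + r₁ * σ₂ ≠ 0 := by rw [show r₂ * σ₁ + r₁ * σ₂ = σ₁ * r₂ + σ₂ * r₁ by ring]; exact hσ12
    simp only [hA, hbb, hB, ha2, ha0, hc3, hc1]
    field_simp [hσ21]
    ring
end

section
/- Fix r₁, r₂ > 0 and σ₁, σ₂, τ, h₀ ∈ ℝ. Let g : ℝ → ℝ be twice differentiable, set h(s) = 2(r₁σ₁ − r₂σ₂)·τ·s + h₀, and define d(s) = e^{h(s)}·g(s) and d̃(s) = e^{−h(s)}·g(s). Then: (a) d and d̃ satisfy the coupled equations d'' = 4τ(r₁σ₁ − r₂σ₂)·d' − 4(r₁²+r₂²)(σ₁²+σ₂²)·τ²·d + 8·((r₁σ₂+r₂σ₁)²/(r₁r₂))·d²·d̃ + 8·((r₁σ₂+r₂σ₁)³/(r₁r₂(r₁²+r₂²)))·s·d and d̃'' = −4τ(r₁σ₁ − r₂σ₂)·d̃'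 − 4(r₁²+r₂²)(σ₁²+σ₂²)·τ²·d̃ + 8·((r₁σ₂+r₂σ₁)²/(r₁r₂))·d̃²·d + 8·((r₁σ₂+r₂σ₁)³/(r₁r₂(r₁²+r₂²)))·s·d̃ (for all s ∈ ℝ) if and only if g satisfies g''(s) = −4(r₁σ₂+r₂σ₁)²·τ²·g(s) + 8·((r₁σ₂+r₂σ₁)²/(r₁r₂))·g(s)³ + 8·((r₁σ₂+r₂σ₁)³/(r₁r₂(r₁²+r₂²)))·s·g(s) for all s ∈ ℝ. (b) If q : ℝ → ℝ solves the Painlevé II equation q''(x) = x·q(x) + 2·q(x)³, then g(s) = c₁·q(c₂·s + c₃) with c₁ = (r₁r₂)^{1/6}/(r₁²+r₂²)^{1/3}, c₂ = 2(r₁σ₂+r₂σ₁)/(r₁r₂(r₁²+r₂²))^{1/3}, c₃ = −(r₁r₂(r₁²+r₂²))^{2/3}·τ² satisfies the equation in (a). -/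
open Real

lemma deriv2_exp_mul (a b : ℝ) (g : ℝ → ℝ) (hg : Differentiable ℝ g)
    (hg' : Differentiable ℝ (deriv g)) :
    deriv (fun s => Real.exp (a * s + b) * g s)
      = (fun s => Real.exp (a * s + b) * (a * g s + deriv g s)) ∧
    ∀ s, deriv (deriv (fun s => Real.exp (a * s + b) * g s)) s
      = Real.exp (a * s + b) * (a ^ 2 * g s + 2 * a * deriv g s + deriv (deriv g) s) := by
  have hE : ∀ s : ℝ, HasDerivAt (fun x : ℝ => Real.exp (a * x + b)) (Real.exp (a * s + b) * a) s := by
    intro s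
    have h1 : HasDerivAt (fun x : ℝ => a * x + b) a s := by
      simpa using ((hasDerivAt_id s).const_mul a).add_const b
    simpa using h1.exp
  have h1 : deriv (fun s => Real.exp (a * s + b) * g s)
      = fun s => Real.exp (a * s + b) * (a * g s + deriv g s) := by
    funext s
    rw [((hE s).fun_mul (hg s).hasDerivAt).deriv]; ring
  refine ⟨h1, fun s => ?_⟩
  rw [h1]
  have h2 : HasDerivAt (fun s => a * g s + deriv g s) (a * deriv g s + deriv (deriv g) s) s :=
    ((hg s).hasDerivAt.const_mul a).add (hg' s).hasDerivAt
  rw [((hE s).fun_mul h2).deriv]; ring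

lemma deriv2_comp_affine (c₁ c₂ c₃ : ℝ) (q qp : ℝ → ℝ)
    (hq : ∀ x, HasDerivAt q (qp x) x)
    (hqp : ∀ x, HasDerivAt qp (x * q x + 2 * q x ^ 3) x) (s : ℝ) :
    deriv (deriv (fun s' : ℝ => c₁ * q (c₂ * s' + c₃))) s
      = c₁ * ((c₂ * s + c₃) * q (c₂ * s + c₃) + 2 * q (c₂ * s + c₃) ^ 3) * c₂ ^ 2 := by
  have hlin : ∀ x : ℝ, HasDerivAt (fun s' : ℝ => c₂ * s' + c₃) c₂ x := by
    intro x; simpa using ((hasDerivAt_id x).const_mul c₂).add_const c₃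
  have h1 : deriv (fun s' : ℝ => c₁ * q (c₂ * s' + c₃))
      = fun s' => c₁ * (qp (c₂ * s' + c₃) * c₂) := by
    funext x
    exact (((hq (c₂ * x + c₃)).comp x (hlin x)).const_mul c₁).deriv
  rw [h1]
  have h2 : HasDerivAt (fun s' : ℝ => c₁ * (qp (c₂ * s' + c₃) * c₂))
      (c₁ * (((c₂ * s + c₃) * q (c₂ * s + c₃) + 2 * q (c₂ * s + c₃) ^ 3) * c₂ * c₂)) s := by
    have := (((hqp (c₂ * s + c₃)).comp s (hlin s)).mul_const c₂).const_mul c₁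
    simpa [mul_assoc] using this
  rw [h2.deriv]; ring

/-- **Ansatz reduction of the coupled system for `d`, `d̃` to a single rescaled
Painlevé II equation.** With `h(s) = 2(r₁σ₁ - r₂σ₂)τ s + h₀`, `d = e^h g`, `d̃ = e^{-h} g`:
(a) `d, d̃` satisfy the coupled second-order equations iff `g` satisfies the single equation
`g'' = -4(r₁σ₂+r₂σ₁)²τ² g + 8((r₁σ₂+r₂σ₁)²/(r₁r₂)) g³ + 8((r₁σ₂+r₂σ₁)³/(r₁r₂(r₁²+r₂²))) s g`;
(b) if `q` solves Painlevé II, then `g(s) = c₁ q(c₂ s + c₃)` satisfies that equation. -/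
theorem ansatz_reduction_to_PainleveII
    (r₁ r₂ : ℝ) (hr₁ : 0 < r₁) (hr₂ : 0 < r₂) (σ₁ σ₂ τ h₀ : ℝ)
    (g : ℝ → ℝ) (hg : Differentiable ℝ g) (hg' : Differentiable ℝ (deriv g))
    (h d dt : ℝ → ℝ)
    (hh : ∀ s, h s = 2 * (r₁ * σ₁ - r₂ * σ₂) * τ * s + h₀)
    (hd : ∀ s, d s = Real.exp (h s) * g s)
    (hdt : ∀ s, dt s = Real.exp (-h s) * g s)
    (q qp : ℝ → ℝ)
    (hq : ∀ x, HasDerivAt q (qp x) x)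
    (hqp : ∀ x, HasDerivAt qp (x * q x + 2 * q x ^ 3) x) :
    ((∀ s : ℝ,
        deriv (deriv d) s
          = 4 * τ * (r₁ * σ₁ - r₂ * σ₂) * deriv d s
            - 4 * (r₁ ^ 2 + r₂ ^ 2) * (σ₁ ^ 2 + σ₂ ^ 2) * τ ^ 2 * d s
            + 8 * ((r₁ * σ₂ + r₂ * σ₁) ^ 2 / (r₁ * r₂)) * d s ^ 2 * dt s
            + 8 * ((r₁ * σ₂ + r₂ * σ₁) ^ 3 / (r₁ * r₂ * (r₁ ^ 2 + r₂ ^ 2))) * s * d s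
        ∧ deriv (deriv dt) s
          = -(4 * τ * (r₁ * σ₁ - r₂ * σ₂)) * deriv dt s
            - 4 * (r₁ ^ 2 + r₂ ^ 2) * (σ₁ ^ 2 + σ₂ ^ 2) * τ ^ 2 * dt s
            + 8 * ((r₁ * σ₂ + r₂ * σ₁) ^ 2 / (r₁ * r₂)) * dt s ^ 2 * d s
            + 8 * ((r₁ * σ₂ + r₂ * σ₁) ^ 3 / (r₁ * r₂ * (r₁ ^ 2 + r₂ ^ 2))) * s * dt s)
      ↔ (∀ s : ℝ,
        deriv (deriv g) s
          = -(4 * (r₁ * σ₂ + r₂ * σ₁) ^ 2 * τ ^ 2) * g s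
            + 8 * ((r₁ * σ₂ + r₂ * σ₁) ^ 2 / (r₁ * r₂)) * g s ^ 3
            + 8 * ((r₁ * σ₂ + r₂ * σ₁) ^ 3 / (r₁ * r₂ * (r₁ ^ 2 + r₂ ^ 2))) * s * g s))
    ∧ (∀ s : ℝ,
        deriv (deriv (fun s' : ℝ =>
            (r₁ * r₂) ^ ((1 : ℝ) / 6) / (r₁ ^ 2 + r₂ ^ 2) ^ ((1 : ℝ) / 3) *
              q (2 * (r₁ * σ₂ + r₂ * σ₁) / (r₁ * r₂ * (r₁ ^ 2 + r₂ ^ 2)) ^ ((1 : ℝ) / 3) * s'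
                  + -((r₁ * r₂ * (r₁ ^ 2 + r₂ ^ 2)) ^ ((2 : ℝ) / 3) * τ ^ 2)))) s
          = -(4 * (r₁ * σ₂ + r₂ * σ₁) ^ 2 * τ ^ 2) *
              ((r₁ * r₂) ^ ((1 : ℝ) / 6) / (r₁ ^ 2 + r₂ ^ 2) ^ ((1 : ℝ) / 3) *
                q (2 * (r₁ * σ₂ + r₂ * σ₁) / (r₁ * r₂ * (r₁ ^ 2 + r₂ ^ 2)) ^ ((1 : ℝ) / 3) * s
                    + -((r₁ * r₂ * (r₁ ^ 2 + r₂ ^ 2)) ^ ((2 : ℝ) / 3) * τ ^ 2)))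
            + 8 * ((r₁ * σ₂ + r₂ * σ₁) ^ 2 / (r₁ * r₂)) *
              ((r₁ * r₂) ^ ((1 : ℝ) / 6) / (r₁ ^ 2 + r₂ ^ 2) ^ ((1 : ℝ) / 3) *
                q (2 * (r₁ * σ₂ + r₂ * σ₁) / (r₁ * r₂ * (r₁ ^ 2 + r₂ ^ 2)) ^ ((1 : ℝ) / 3) * s
                    + -((r₁ * r₂ * (r₁ ^ 2 + r₂ ^ 2)) ^ ((2 : ℝ) / 3) * τ ^ 2))) ^ 3
            + 8 * ((r₁ * σ₂ + r₂ * σ₁) ^ 3 / (r₁ * r₂ * (r₁ ^ 2 + r₂ ^ 2))) * s *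
              ((r₁ * r₂) ^ ((1 : ℝ) / 6) / (r₁ ^ 2 + r₂ ^ 2) ^ ((1 : ℝ) / 3) *
                q (2 * (r₁ * σ₂ + r₂ * σ₁) / (r₁ * r₂ * (r₁ ^ 2 + r₂ ^ 2)) ^ ((1 : ℝ) / 3) * s
                    + -((r₁ * r₂ * (r₁ ^ 2 + r₂ ^ 2)) ^ ((2 : ℝ) / 3) * τ ^ 2)))) := by
  have hP : (0:ℝ) < r₁ * r₂ := mul_pos hr₁ hr₂
  have hM : (0:ℝ) < r₁ ^ 2 + r₂ ^ 2 := by positivity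
  have hdfun : d = fun s => Real.exp (2 * (r₁ * σ₁ - r₂ * σ₂) * τ * s + h₀) * g s :=
    funext fun s => by rw [hd, hh]
  have hdtfun : dt = fun s => Real.exp (-(2 * (r₁ * σ₁ - r₂ * σ₂) * τ) * s + -h₀) * g s :=
    funext fun s => by rw [hdt, hh]; congr 1; ring_nf
  obtain ⟨hD1, hD2⟩ := deriv2_exp_mul (2 * (r₁ * σ₁ - r₂ * σ₂) * τ) h₀ g hg hg'
  obtain ⟨hT1, hT2⟩ := deriv2_exp_mul (-(2 * (r₁ * σ₁ - r₂ * σ₂) * τ)) (-h₀) g hg hg'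
  have hprod : ∀ s : ℝ, Real.exp (2 * (r₁ * σ₁ - r₂ * σ₂) * τ * s + h₀)
      * Real.exp (-(2 * (r₁ * σ₁ - r₂ * σ₂) * τ) * s + -h₀) = 1 := by
    intro s
    rw [← Real.exp_add, show 2 * (r₁ * σ₁ - r₂ * σ₂) * τ * s + h₀
      + (-(2 * (r₁ * σ₁ - r₂ * σ₂) * τ) * s + -h₀) = 0 by ring, Real.exp_zero]
  constructor
  · constructor
    · intro H s
      have H1 := (H s).1
      rw [hdfun, hdtfun] at H1
      rw [hD2] at H1
      simp only [hD1] at H1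
      have key : Real.exp (2 * (r₁ * σ₁ - r₂ * σ₂) * τ * s + h₀) * deriv (deriv g) s
          = Real.exp (2 * (r₁ * σ₁ - r₂ * σ₂) * τ * s + h₀) *
            (-(4 * (r₁ * σ₂ + r₂ * σ₁) ^ 2 * τ ^ 2) * g s
              + 8 * ((r₁ * σ₂ + r₂ * σ₁) ^ 2 / (r₁ * r₂)) * g s ^ 3
              + 8 * ((r₁ * σ₂ + r₂ * σ₁) ^ 3 / (r₁ * r₂ * (r₁ ^ 2 + r₂ ^ 2))) * s * g s) := by
        linear_combination H1 + 8 * ((r₁ * σ₂ + r₂ * σ₁) ^ 2 / (r₁ * r₂)) * g s ^ 3 *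
          Real.exp (2 * (r₁ * σ₁ - r₂ * σ₂) * τ * s + h₀) * hprod s
      exact mul_left_cancel₀ (Real.exp_ne_zero _) key
    · intro H s
      rw [hdfun, hdtfun]
      refine ⟨?_, ?_⟩
      · rw [hD2]
        simp only [hD1]
        linear_combination Real.exp (2 * (r₁ * σ₁ - r₂ * σ₂) * τ * s + h₀) * H s
          - 8 * ((r₁ * σ₂ + r₂ * σ₁) ^ 2 / (r₁ * r₂)) * g s ^ 3 *
            Real.exp (2 * (r₁ * σ₁ - r₂ * σ₂) * τ * s + h₀) * hprod s
      · rw [hT2]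
        simp only [hT1]
        linear_combination Real.exp (-(2 * (r₁ * σ₁ - r₂ * σ₂) * τ) * s + -h₀) * H s
          - 8 * ((r₁ * σ₂ + r₂ * σ₁) ^ 2 / (r₁ * r₂)) * g s ^ 3 *
            Real.exp (-(2 * (r₁ * σ₁ - r₂ * σ₂) * τ) * s + -h₀) * hprod s
  · intro s
    rw [deriv2_comp_affine _ _ _ q qp hq hqp s]
    have hu6 : ((r₁ * r₂) ^ ((1:ℝ)/6)) ^ 6 = r₁ * r₂ := by
      rw [← Real.rpow_natCast ((r₁ * r₂) ^ ((1:ℝ)/6)) 6, ← Real.rpow_mul hP.le]; norm_num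
    have hv3 : ((r₁ ^ 2 + r₂ ^ 2) ^ ((1:ℝ)/3)) ^ 3 = r₁ ^ 2 + r₂ ^ 2 := by
      rw [← Real.rpow_natCast ((r₁ ^ 2 + r₂ ^ 2) ^ ((1:ℝ)/3)) 3, ← Real.rpow_mul hM.le]; norm_num
    have hw : (r₁ * r₂ * (r₁ ^ 2 + r₂ ^ 2)) ^ ((1:ℝ)/3)
        = ((r₁ * r₂) ^ ((1:ℝ)/6)) ^ 2 * (r₁ ^ 2 + r₂ ^ 2) ^ ((1:ℝ)/3) := by
      rw [Real.mul_rpow hP.le hM.le, ← Real.rpow_natCast ((r₁ * r₂) ^ ((1:ℝ)/6)) 2,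
        ← Real.rpow_mul hP.le]; norm_num
    have hw2 : (r₁ * r₂ * (r₁ ^ 2 + r₂ ^ 2)) ^ ((2:ℝ)/3)
        = ((r₁ * r₂) ^ ((1:ℝ)/6)) ^ 4 * ((r₁ ^ 2 + r₂ ^ 2) ^ ((1:ℝ)/3)) ^ 2 := by
      have h' : (r₁ * r₂ * (r₁ ^ 2 + r₂ ^ 2)) ^ ((2:ℝ)/3)
          = ((r₁ * r₂ * (r₁ ^ 2 + r₂ ^ 2)) ^ ((1:ℝ)/3)) ^ 2 := by
        rw [← Real.rpow_natCast ((r₁ * r₂ * (r₁ ^ 2 + r₂ ^ 2)) ^ ((1:ℝ)/3)) 2,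
          ← Real.rpow_mul (by positivity)]; norm_num
      rw [h', hw]; ring
    have hu0 : (r₁ * r₂) ^ ((1:ℝ)/6) ≠ 0 := by positivity
    have hv0 : (r₁ ^ 2 + r₂ ^ 2) ^ ((1:ℝ)/3) ≠ 0 := by positivity
    set u := (r₁ * r₂) ^ ((1:ℝ)/6) with hu_def
    set v := (r₁ ^ 2 + r₂ ^ 2) ^ ((1:ℝ)/3) with hv_def
    rw [hw, hw2, ← hu6, ← hv3]
    field_simp
    ring_nf
end
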